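/- arXiv:1401.7337 — 4 statements merged into one kernel-verified Lean document; each statement's English description precedes it below -/
import Mathlib

section
/- For every n ≥ 1, every function f : {−1,1}^n → ℝ with ‖f‖_{L²(ν)} ≤ 1, and every η ∈ (0,1), VAR(f,η) ≤ 7 · (Σ_{i=1}^n I_i(f)²)^{η/4} · ‖f‖_{L²(ν)}^{3η/2}. -/
open Finset

/-- Expectation with respect to the uniform measure `ν` on the discrete cube `{-1,1}ⁿ`,
coordinates encoded by `Bool` (`true ↔ 1`, `false ↔ -1`). -/
noncomputable def cubeE (n : ℕ) (f : (Fin n → Bool) → ℝ) : ℝ :=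
  (∑ x : Fin n → Bool, f x) / 2 ^ n

/-- Variance with respect to the uniform measure on the discrete cube. -/
noncomputable def cubeVar (n : ℕ) (f : (Fin n → Bool) → ℝ) : ℝ :=
  cubeE n (fun x => f x ^ 2) - (cubeE n f) ^ 2

/-- `τ_i x` : flip the `i`-th coordinate. -/
def cubeFlip (n : ℕ) (i : Fin n) (x : Fin n → Bool) : Fin n → Bool :=
  Function.update x i (!(x i))

/-- Discrete derivative `D_i f (x) = f (τ_i x) - f x`. -/
noncomputable def Dop (n : ℕ) (i : Fin n) (f : (Fin n → Bool) → ℝ) (x : Fin n → Bool) : ℝ :=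
  f (cubeFlip n i x) - f x

/-- Joint probability weight for one coordinate of the pair `(X, X^η)`, where `X` is uniform
on `{-1,1}` and `X^η` equals `X` with probability `1-η` and is an independent uniform sign
with probability `η` : `P(X = a, X^η = b)` equals `(2-η)/4` if `a = b` and `η/4` otherwise. -/
noncomputable def nsW (η : ℝ) (a b : Bool) : ℝ := if a = b then (2 - η) / 4 else η / 4

/-- Noise stability `VAR(f,η) = E[f(X) f(X^η)] - (E f)²`, where `(X, X^η)` is the pair of
`(1-η)`-correlated uniform random points of the cube, with explicit joint distribution
`P(X = x, X^η = y) = ∏ᵢ nsW η xᵢ yᵢ`. -/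
noncomputable def cubeNS (n : ℕ) (f : (Fin n → Bool) → ℝ) (η : ℝ) : ℝ :=
  (∑ x : Fin n → Bool, ∑ y : Fin n → Bool, f x * f y * ∏ i, nsW η (x i) (y i)) -
    (cubeE n f) ^ 2

namespace KK

def eps (b : Bool) : ℝ := if b then 1 else -1

lemma eps_mul_self (b : Bool) : eps b * eps b = 1 := by cases b <;> simp [eps]

lemma eps_not (b : Bool) : eps (!b) = - eps b := by cases b <;> simp [eps]

lemma abs_eps (b : Bool) : |eps b| = 1 := by cases b <;> simp [eps]

variable {n : ℕ}

def chi (s x : Fin n → Bool) : ℝ := ∏ i, if s i then eps (x i) else 1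

def uprod (u : ℝ) (s : Fin n → Bool) : ℝ := ∏ i, if s i then u else 1

noncomputable def hatc (n : ℕ) (f : (Fin n → Bool) → ℝ) (s : Fin n → Bool) : ℝ :=
  cubeE n (fun x => f x * chi s x)

lemma sum_cube_prod (F : Fin n → Bool → ℝ) :
    ∑ x : Fin n → Bool, ∏ i, F i (x i) = ∏ i, (F i false + F i true) := by
  have h1 : ∑ x ∈ Fintype.piFinset (fun _ : Fin n => (univ : Finset Bool)), ∏ i, F i (x i)
      = ∏ i, ∑ b : Bool, F i b := (Finset.prod_univ_sum _ _).symm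
  rw [Fintype.piFinset_univ] at h1
  rw [h1]
  exact Finset.prod_congr rfl fun i _ => by rw [Fintype.sum_bool]; ring

lemma chi_mul (s t x : Fin n → Bool) :
    chi s x * chi t x = chi (fun i => xor (s i) (t i)) x := by
  unfold chi
  rw [← Finset.prod_mul_distrib]
  refine Finset.prod_congr rfl fun i _ => ?_
  cases hs : s i <;> cases ht : t i <;> simp [eps_mul_self, hs, ht]

lemma uprod_mul (u v : ℝ) (s : Fin n → Bool) :
    uprod u s * uprod v s = uprod (u * v) s := by
  unfold uprod
  rw [← Finset.prod_mul_distrib]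
  refine Finset.prod_congr rfl fun i _ => ?_
  cases hs : s i <;> simp

lemma uprod_nonneg {u : ℝ} (hu : 0 ≤ u) (s : Fin n → Bool) : 0 ≤ uprod u s :=
  Finset.prod_nonneg fun i _ => by cases s i <;> simp [hu]

lemma uprod_one (s : Fin n → Bool) : uprod 1 s = 1 :=
  Finset.prod_eq_one fun i _ => by cases s i <;> simp

lemma uprod_zero_arg (u : ℝ) : uprod u (fun _ : Fin n => false) = 1 :=
  Finset.prod_eq_one fun i _ => by simp

lemma chi_zero_arg (x : Fin n → Bool) : chi (fun _ => false) x = 1 :=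
  Finset.prod_eq_one fun i _ => by simp

lemma sum_chi (s : Fin n → Bool) :
    ∑ x : Fin n → Bool, chi s x = if s = (fun _ => false) then (2:ℝ)^n else 0 := by
  unfold chi
  rw [sum_cube_prod (F := fun i b => if s i then eps b else 1)]
  by_cases h : s = fun _ => false
  · subst h
    simp only [if_pos rfl]
    rw [Finset.prod_congr rfl (fun i _ => by norm_num : ∀ i ∈ univ,
      ((if (fun _ : Fin n => false) i then eps false else 1) +
        (if (fun _ : Fin n => false) i then eps true else 1)) = (2:ℝ))]
    simp
  · rw [if_neg h]
    obtain ⟨i, hi⟩ := Function.ne_iff.mp h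
    have hsi : s i = true := by simpa using hi
    refine Finset.prod_eq_zero (Finset.mem_univ i) ?_
    rw [hsi]
    simp [eps]

lemma orth (s t : Fin n → Bool) :
    cubeE n (fun x => chi s x * chi t x) = if s = t then 1 else 0 := by
  unfold cubeE
  simp only [chi_mul]
  rw [sum_chi]
  have hiff : ((fun i => xor (s i) (t i)) = (fun _ => false)) ↔ s = t := by
    constructor
    · intro h; funext i
      have := congrFun h i
      cases hs : s i <;> cases ht : t i <;> simp [hs, ht] at this ⊢
    · intro h; subst h; funext i; simp
  by_cases h : s = t
  · rw [if_pos (hiff.mpr h), if_pos h]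
    field_simp
  · rw [if_neg (fun hc => h (hiff.mp hc)), if_neg h]
    simp

lemma cubeE_nonneg {g : (Fin n → Bool) → ℝ} (h : ∀ x, 0 ≤ g x) : 0 ≤ cubeE n g :=
  div_nonneg (Finset.sum_nonneg fun x _ => h x) (by positivity)

lemma cubeE_mono {g g' : (Fin n → Bool) → ℝ} (h : ∀ x, g x ≤ g' x) :
    cubeE n g ≤ cubeE n g' :=
  div_le_div_of_nonneg_right (Finset.sum_le_sum fun x _ => h x) (by positivity) |>.trans_eq rfl

lemma cubeE_add (g g' : (Fin n → Bool) → ℝ) :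
    cubeE n (fun x => g x + g' x) = cubeE n g + cubeE n g' := by
  unfold cubeE; rw [Finset.sum_add_distrib, add_div]

lemma cubeE_const_mul (c : ℝ) (g : (Fin n → Bool) → ℝ) :
    cubeE n (fun x => c * g x) = c * cubeE n g := by
  unfold cubeE; rw [← Finset.mul_sum, mul_div_assoc]

lemma cubeE_mul_synth (g : (Fin n → Bool) → ℝ) (c : (Fin n → Bool) → ℝ) :
    cubeE n (fun x => g x * ∑ s, c s * chi s x) = ∑ s, c s * hatc n g s := by
  unfold cubeE hatc
  have h1 : ∀ x : Fin n → Bool, g x * ∑ s, c s * chi s x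
      = ∑ s, c s * (g x * chi s x) := by
    intro x; rw [Finset.mul_sum]; exact Finset.sum_congr rfl fun s _ => by ring
  simp only [h1]
  rw [Finset.sum_comm, Finset.sum_div]
  refine Finset.sum_congr rfl fun s _ => ?_
  rw [← Finset.mul_sum, mul_div_assoc]
  rfl

lemma prod_one_add (u : ℝ) (x y : Fin n → Bool) :
    ∏ i, (1 + u * (eps (x i) * eps (y i))) = ∑ s, uprod u s * (chi s x * chi s y) := by
  have h1 : ∀ s : Fin n → Bool, uprod u s * (chi s x * chi s y)
      = ∏ i, (if s i then u * (eps (x i) * eps (y i)) else 1) := by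
    intro s
    unfold uprod chi
    rw [← Finset.prod_mul_distrib, ← Finset.prod_mul_distrib]
    refine Finset.prod_congr rfl fun i _ => ?_
    cases hs : s i <;> simp [mul_assoc]
  simp only [h1]
  rw [sum_cube_prod (F := fun i b => if b then u * (eps (x i) * eps (y i)) else 1)]
  exact Finset.prod_congr rfl fun i _ => by simp [add_comm]

lemma prod_delta (x y : Fin n → Bool) :
    ∏ i, (1 + eps (x i) * eps (y i)) = if x = y then (2:ℝ)^n else 0 := by
  by_cases h : x = y
  · subst h
    rw [if_pos rfl]
    rw [Finset.prod_congr rfl (fun i _ => by rw [eps_mul_self] ; norm_num : ∀ i ∈ univ,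
      (1 + eps (x i) * eps (x i)) = (2:ℝ))]
    simp
  · rw [if_neg h]
    obtain ⟨i, hi⟩ := Function.ne_iff.mp h
    refine Finset.prod_eq_zero (Finset.mem_univ i) ?_
    have : eps (x i) * eps (y i) = -1 := by
      cases hx : x i <;> cases hy : y i <;> simp [hx, hy, eps] at hi ⊢
    rw [this]; ring

lemma inversion (f : (Fin n → Bool) → ℝ) (x : Fin n → Bool) :
    f x = ∑ s, hatc n f s * chi s x := by
  unfold hatc cubeE
  have h1 : ∀ s : Fin n → Bool, (∑ y : Fin n → Bool, f y * chi s y) / 2^n * chi s x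
      = ∑ y : Fin n → Bool, f y * (chi s x * chi s y) / 2^n := by
    intro s
    rw [div_mul_eq_mul_div, Finset.sum_mul, Finset.sum_div]
    exact Finset.sum_congr rfl fun y _ => by ring
  simp only [h1]
  rw [Finset.sum_comm]
  have h2 : ∀ y : Fin n → Bool, (∑ s : Fin n → Bool, f y * (chi s x * chi s y) / 2^n)
      = f y * (if x = y then (2:ℝ)^n else 0) / 2^n := by
    intro y
    rw [← prod_delta, ← Finset.sum_div, ← Finset.mul_sum]
    congr 2
    have := prod_one_add (n := n) 1 x y
    simp only [one_mul] at this
    rw [this]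
    exact Finset.sum_congr rfl fun s _ => by rw [uprod_one, one_mul]
  simp only [h2]
  rw [Finset.sum_eq_single x]
  · simp
  · intro y _ hy
    rw [if_neg (fun hc => hy hc.symm)]
    simp
  · intro hx; exact absurd (Finset.mem_univ x) hx

lemma hatc_synth (c : (Fin n → Bool) → ℝ) (t : Fin n → Bool) :
    hatc n (fun x => ∑ s, c s * chi s x) t = c t := by
  unfold hatc
  have h1 : (fun x => (∑ s, c s * chi s x) * chi t x)
      = fun x => chi t x * ∑ s, c s * chi s x := by funext x; ring
  rw [h1, cubeE_mul_synth]
  have h2 : ∀ s : Fin n → Bool, c s * hatc n (chi t) s = if s = t then c s else 0 := by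
    intro s
    unfold hatc
    have : (fun x => chi t x * chi s x) = fun x => chi s x * chi t x := by funext x; ring
    rw [this, orth]
    by_cases h : s = t
    · subst h; simp
    · rw [if_neg h, if_neg h, mul_zero]
  simp only [h2]
  rw [Finset.sum_ite_eq' univ t c]
  simp

lemma parseval (g : (Fin n → Bool) → ℝ) :
    cubeE n (fun x => g x ^ 2) = ∑ s, (hatc n g s)^2 := by
  have h1 : (fun x => g x ^ 2) = fun x => g x * ∑ s, hatc n g s * chi s x := by
    funext x; rw [← inversion]; ring
  rw [h1, cubeE_mul_synth]
  exact Finset.sum_congr rfl fun s _ => by ring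

noncomputable def Tnoise (n : ℕ) (σ : ℝ) (h : (Fin n → Bool) → ℝ) (x : Fin n → Bool) : ℝ :=
  cubeE n (fun y => h y * ∏ i, (1 + σ * (eps (x i) * eps (y i))))

lemma Tnoise_eq_synth (σ : ℝ) (h : (Fin n → Bool) → ℝ) (x : Fin n → Bool) :
    Tnoise n σ h x = ∑ s, (uprod σ s * hatc n h s) * chi s x := by
  unfold Tnoise
  have h1 : (fun y => h y * ∏ i, (1 + σ * (eps (x i) * eps (y i))))
      = fun y => h y * ∑ s, (uprod σ s * chi s x) * chi s y := by
    funext y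
    rw [prod_one_add]
    congr 1
    exact Finset.sum_congr rfl fun s _ => by ring
  rw [h1, cubeE_mul_synth]
  exact Finset.sum_congr rfl fun s _ => by ring

lemma Tnoise_l1 {σ : ℝ} (hσ0 : 0 ≤ σ) (hσ1 : σ ≤ 1) (h : (Fin n → Bool) → ℝ) :
    cubeE n (fun x => |Tnoise n σ h x|) ≤ cubeE n (fun y => |h y|) := by
  have hker : ∀ a b : Bool, 0 ≤ 1 + σ * (eps a * eps b) := by
    intro a b; cases a <;> cases b <;> simp [eps] <;> linarith
  have habs : ∀ x, |Tnoise n σ h x|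
      ≤ cubeE n (fun y => |h y| * ∏ i, (1 + σ * (eps (x i) * eps (y i)))) := by
    intro x
    unfold Tnoise cubeE
    rw [abs_div, abs_of_nonneg (by positivity : (0:ℝ) ≤ 2^n)]
    apply div_le_div_of_nonneg_right ?_ (by positivity)
    calc |∑ y : Fin n → Bool, h y * ∏ i, (1 + σ * (eps (x i) * eps (y i)))|
        ≤ ∑ y : Fin n → Bool, |h y * ∏ i, (1 + σ * (eps (x i) * eps (y i)))| :=
          Finset.abs_sum_le_sum_abs _ _
      _ ≤ ∑ y : Fin n → Bool, |h y| * ∏ i, (1 + σ * (eps (x i) * eps (y i))) := by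
          refine Finset.sum_le_sum fun y _ => ?_
          rw [abs_mul, abs_of_nonneg (Finset.prod_nonneg fun i _ => hker _ _)]
  refine le_trans (cubeE_mono habs) (le_of_eq ?_)
  unfold cubeE
  rw [← Finset.sum_div, Finset.sum_comm]
  have hrow : ∀ y : Fin n → Bool,
      (∑ x : Fin n → Bool, |h y| * ∏ i, (1 + σ * (eps (x i) * eps (y i)))) = |h y| * 2^n := by
    intro y
    rw [← Finset.mul_sum]
    congr 1
    rw [sum_cube_prod (F := fun i b => 1 + σ * (eps b * eps (y i)))]
    rw [Finset.prod_congr rfl (fun i _ => by cases hyi : y i <;> simp [eps, hyi] <;> ring : ∀ i ∈ univ,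
      ((1 + σ * (eps false * eps (y i))) + (1 + σ * (eps true * eps (y i)))) = (2:ℝ))]
    simp
  rw [Finset.sum_congr rfl fun y _ => hrow y, ← Finset.sum_mul]
  field_simp

lemma flip_flip (i : Fin n) (x : Fin n → Bool) : cubeFlip n i (cubeFlip n i x) = x := by
  funext j
  by_cases h : j = i
  · subst h; simp [cubeFlip]
  · simp [cubeFlip, Function.update_of_ne h]

lemma flip_bij (i : Fin n) : Function.Bijective (cubeFlip n i) :=
  Function.Involutive.bijective (flip_flip i)

lemma chi_flip (s : Fin n → Bool) (i : Fin n) (x : Fin n → Bool) :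
    chi s (cubeFlip n i x) = (if s i then (-1:ℝ) else 1) * chi s x := by
  unfold chi
  rw [← Finset.mul_prod_erase univ (fun j => if s j then eps (cubeFlip n i x j) else 1)
    (Finset.mem_univ i),
    ← Finset.mul_prod_erase univ (fun j => if s j then eps (x j) else 1) (Finset.mem_univ i),
    ← mul_assoc]
  congr 1
  · have hxi : cubeFlip n i x i = !(x i) := by simp [cubeFlip]
    rw [hxi]
    cases hs : s i <;> simp [eps_not]
  · refine Finset.prod_congr rfl fun j hj => ?_
    have hne : j ≠ i := Finset.ne_of_mem_erase hj
    rw [show cubeFlip n i x j = x j from by simp [cubeFlip, Function.update_of_ne hne]]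

lemma hatc_Dop (f : (Fin n → Bool) → ℝ) (i : Fin n) (s : Fin n → Bool) :
    hatc n (Dop n i f) s = if s i then -2 * hatc n f s else 0 := by
  unfold hatc Dop cubeE
  have h1 : ∑ x : Fin n → Bool, (f (cubeFlip n i x) - f x) * chi s x
      = (∑ x : Fin n → Bool, f (cubeFlip n i x) * chi s x) - ∑ x : Fin n → Bool, f x * chi s x := by
    rw [← Finset.sum_sub_distrib]
    exact Finset.sum_congr rfl fun x _ => by ring
  have h2 : ∑ x : Fin n → Bool, f (cubeFlip n i x) * chi s x
      = (if s i then (-1:ℝ) else 1) * ∑ x : Fin n → Bool, f x * chi s x := by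
    rw [Finset.mul_sum]
    apply Fintype.sum_bijective (cubeFlip n i) (flip_bij i)
    intro x
    rw [chi_flip s i x]
    split_ifs <;> ring
  rw [h1, h2]
  by_cases hs : s i
  · rw [if_pos hs, if_pos hs]
    field_simp
    ring
  · rw [if_neg hs, if_neg hs]
    simp

lemma cubeE_CS (u v : (Fin n → Bool) → ℝ) :
    cubeE n (fun x => u x * v x)
      ≤ Real.sqrt (cubeE n (fun x => u x ^ 2)) * Real.sqrt (cubeE n (fun x => v x ^ 2)) := by
  have h2 : (cubeE n (fun x => u x * v x))^2
      ≤ cubeE n (fun x => u x ^ 2) * cubeE n (fun x => v x ^ 2) := by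
    unfold cubeE
    rw [div_pow, div_mul_div_comm, show (((2:ℝ)^n)^2) = 2^n * 2^n from by ring]
    exact div_le_div_of_nonneg_right (Finset.sum_mul_sq_le_sq_mul_sq univ u v) (by positivity)
  calc cubeE n (fun x => u x * v x) ≤ |cubeE n (fun x => u x * v x)| := le_abs_self _
    _ = Real.sqrt ((cubeE n (fun x => u x * v x))^2) := (Real.sqrt_sq_eq_abs _).symm
    _ ≤ Real.sqrt (cubeE n (fun x => u x ^ 2) * cubeE n (fun x => v x ^ 2)) :=
        Real.sqrt_le_sqrt h2
    _ = _ := Real.sqrt_mul (cubeE_nonneg fun x => sq_nonneg _) _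

lemma sum_cube_succ (g : (Fin (n+1) → Bool) → ℝ) :
    ∑ x : Fin (n+1) → Bool, g x = ∑ b : Bool, ∑ y : Fin n → Bool, g (Fin.cons b y) := by
  calc ∑ x : Fin (n+1) → Bool, g x
      = ∑ p : Bool × (Fin n → Bool), g ((Fin.consEquiv fun _ => Bool) p) :=
        (Equiv.sum_comp _ g).symm
    _ = ∑ b : Bool, ∑ y : Fin n → Bool, g (Fin.cons b y) := by
        rw [Fintype.sum_prod_type]; rfl

lemma chi_cons (sb xb : Bool) (s x : Fin n → Bool) :
    chi (Fin.cons sb s) (Fin.cons xb x) = (if sb then eps xb else 1) * chi s x := by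
  unfold chi
  rw [Fin.prod_univ_succ]
  simp

lemma uprod_cons (u : ℝ) (sb : Bool) (s : Fin n → Bool) :
    uprod u (Fin.cons sb s) = (if sb then u else 1) * uprod u s := by
  unfold uprod
  rw [Fin.prod_univ_succ]
  simp

lemma bonami (ρ : ℝ) (hρ : ρ^2 ≤ 1/3) :
    ∀ (n : ℕ) (a : (Fin n → Bool) → ℝ),
    cubeE n (fun x => (∑ s, uprod ρ s * a s * chi s x)^4) ≤ (∑ s, (a s)^2)^2 := by
  intro n
  induction n with
  | zero =>
    intro a
    have h1 : ∀ (z : Fin 0 → Bool) (w : Fin 0 → Bool), uprod ρ z * a z * chi z w = a z := by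
      intro z w; unfold uprod chi; simp
    simp only [cubeE]
    rw [Fintype.sum_unique, Fintype.sum_unique, Fintype.sum_unique, h1]
    rw [pow_zero]
    exact le_of_eq (by ring)
  | succ n ih =>
    intro a
    set a0 : (Fin n → Bool) → ℝ := fun s => a (Fin.cons false s) with ha0
    set a1 : (Fin n → Bool) → ℝ := fun s => a (Fin.cons true s) with ha1
    set P : (Fin n → Bool) → ℝ := fun y => ∑ s, uprod ρ s * a0 s * chi s y with hP
    set Q : (Fin n → Bool) → ℝ := fun y => ∑ s, uprod ρ s * a1 s * chi s y with hQ
    have hW : ∀ (b : Bool) (y : Fin n → Bool),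
        (∑ s : Fin (n+1) → Bool, uprod ρ s * a s * chi s (Fin.cons b y))
          = P y + eps b * (ρ * Q y) := by
      intro b y
      rw [sum_cube_succ (g := fun s => uprod ρ s * a s * chi s (Fin.cons b y))]
      rw [Fintype.sum_bool]
      have ht : (∑ s : Fin n → Bool,
          uprod ρ (Fin.cons true s) * a (Fin.cons true s) * chi (Fin.cons true s) (Fin.cons b y))
          = eps b * (ρ * Q y) := by
        rw [hQ, Finset.mul_sum, Finset.mul_sum]
        refine Finset.sum_congr rfl fun s _ => ?_
        rw [uprod_cons, chi_cons, show a (Fin.cons true s) = a1 s from rfl,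
          if_pos rfl, if_pos rfl]
        ring
      have hf : (∑ s : Fin n → Bool,
          uprod ρ (Fin.cons false s) * a (Fin.cons false s) * chi (Fin.cons false s) (Fin.cons b y))
          = P y := by
        rw [hP]
        refine Finset.sum_congr rfl fun s _ => ?_
        rw [uprod_cons, chi_cons, show a (Fin.cons false s) = a0 s from rfl,
          if_neg Bool.false_ne_true, if_neg Bool.false_ne_true]
        ring
      rw [ht, hf]
      ring
    have key : cubeE (n+1) (fun x => (∑ s, uprod ρ s * a s * chi s x)^4)
        = cubeE n (fun y => ((P y + ρ * Q y)^4 + (P y - ρ * Q y)^4) / 2) := by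
      unfold cubeE
      rw [sum_cube_succ (g := fun x => (∑ s, uprod ρ s * a s * chi s x)^4)]
      rw [Fintype.sum_bool]
      simp only [hW, show eps true = 1 from rfl, show eps false = -1 from rfl, one_mul,
        neg_one_mul, ← sub_eq_add_neg]
      rw [← Finset.sum_div, Finset.sum_add_distrib, pow_succ]
      ring
    rw [key]
    have pointwise : ∀ y : Fin n → Bool, ((P y + ρ*Q y)^4 + (P y - ρ*Q y)^4)/2
        = P y^4 + (6*ρ^2*(P y^2 * Q y^2) + ρ^4 * Q y^4) := fun y => by ring
    have hρ4 : ρ^4 ≤ 1 := by nlinarith [sq_nonneg ρ, sq_nonneg (ρ^2)]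
    have bound1 : cubeE n (fun y => ((P y + ρ*Q y)^4 + (P y - ρ*Q y)^4)/2)
        ≤ cubeE n (fun y => P y^4 + (2*(P y^2 * Q y^2) + Q y^4)) := by
      apply cubeE_mono
      intro y
      rw [pointwise y]
      have hpq : (0:ℝ) ≤ P y^2 * Q y^2 := by positivity
      have hq4 : (0:ℝ) ≤ Q y^4 := by positivity
      have h6 : 6*ρ^2*(P y^2*Q y^2) ≤ 2*(P y^2*Q y^2) := by nlinarith
      have h9 : ρ^4 * Q y^4 ≤ Q y^4 := by nlinarith
      linarith
    have split : cubeE n (fun y => P y^4 + (2*(P y^2 * Q y^2) + Q y^4))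
        = cubeE n (fun y => P y^4) + (2 * cubeE n (fun y => P y^2 * Q y^2)
            + cubeE n (fun y => Q y^4)) := by
      rw [cubeE_add, cubeE_add (fun y => 2*(P y^2*Q y^2)), cubeE_const_mul]
    have EP4 : cubeE n (fun y => P y^4) ≤ (∑ s, (a0 s)^2)^2 := ih a0
    have EQ4 : cubeE n (fun y => Q y^4) ≤ (∑ s, (a1 s)^2)^2 := ih a1
    have hX : (0:ℝ) ≤ ∑ s, (a0 s)^2 := Finset.sum_nonneg fun s _ => sq_nonneg _
    have hY : (0:ℝ) ≤ ∑ s, (a1 s)^2 := Finset.sum_nonneg fun s _ => sq_nonneg _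
    have EPQ : cubeE n (fun y => P y^2 * Q y^2) ≤ (∑ s, (a0 s)^2) * (∑ s, (a1 s)^2) := by
      refine le_trans (cubeE_CS (fun y => P y^2) (fun y => Q y^2)) ?_
      have e1 : cubeE n (fun y => (P y^2)^2) = cubeE n (fun y => P y^4) := by
        congr 1; funext y; ring
      have e2 : cubeE n (fun y => (Q y^2)^2) = cubeE n (fun y => Q y^4) := by
        congr 1; funext y; ring
      rw [e1, e2]
      calc Real.sqrt (cubeE n (fun y => P y^4)) * Real.sqrt (cubeE n (fun y => Q y^4))
          ≤ Real.sqrt ((∑ s, (a0 s)^2)^2) * Real.sqrt ((∑ s, (a1 s)^2)^2) := by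
            apply mul_le_mul (Real.sqrt_le_sqrt EP4) (Real.sqrt_le_sqrt EQ4)
              (Real.sqrt_nonneg _) (Real.sqrt_nonneg _)
        _ = (∑ s, (a0 s)^2) * (∑ s, (a1 s)^2) := by
            rw [Real.sqrt_sq hX, Real.sqrt_sq hY]
    have hsum : (∑ s : Fin (n+1) → Bool, (a s)^2) = (∑ s, (a1 s)^2) + (∑ s, (a0 s)^2) := by
      rw [sum_cube_succ (g := fun s => (a s)^2), Fintype.sum_bool, ha0, ha1]
    calc cubeE n (fun y => ((P y + ρ*Q y)^4 + (P y - ρ*Q y)^4)/2)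
        ≤ cubeE n (fun y => P y^4 + (2*(P y^2 * Q y^2) + Q y^4)) := bound1
      _ = cubeE n (fun y => P y^4) + (2 * cubeE n (fun y => P y^2 * Q y^2)
            + cubeE n (fun y => Q y^4)) := split
      _ ≤ (∑ s, (a0 s)^2)^2 + (2 * ((∑ s, (a0 s)^2) * (∑ s, (a1 s)^2)) + (∑ s, (a1 s)^2)^2) := by
          have := EPQ
          gcongr
      _ = ((∑ s, (a1 s)^2) + (∑ s, (a0 s)^2))^2 := by ring
      _ = (∑ s : Fin (n+1) → Bool, (a s)^2)^2 := by rw [hsum]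

lemma hyper (g : (Fin n → Bool) → ℝ) :
    ∑ s, uprod (1/3 : ℝ) s * (hatc n g s)^2
      ≤ cubeE n (fun x => |g x|) * Real.sqrt (cubeE n (fun x => (g x)^2)) := by
  set Y := ∑ s, uprod (1/3 : ℝ) s * (hatc n g s)^2 with hYdef
  set Pg : (Fin n → Bool) → ℝ := fun x => ∑ s, (uprod (1/3 : ℝ) s * hatc n g s) * chi s x
    with hPgdef
  have hY0 : 0 ≤ Y := Finset.sum_nonneg fun s _ =>
    mul_nonneg (uprod_nonneg (by norm_num) s) (sq_nonneg _)
  have hEg : 0 ≤ cubeE n (fun x => |g x|) := cubeE_nonneg fun x => abs_nonneg _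
  have hEg2 : 0 ≤ cubeE n (fun x => (g x)^2) := cubeE_nonneg fun x => sq_nonneg _
  have hEPg4 : 0 ≤ cubeE n (fun x => Pg x^4) := cubeE_nonneg fun x => by positivity
  -- Step 1 : E[g Pg] = Y
  have step1 : cubeE n (fun x => g x * Pg x) = Y := by
    rw [hPgdef, cubeE_mul_synth, hYdef]
    exact Finset.sum_congr rfl fun s _ => by ring
  -- Step 4 : Bonami
  have step4 : cubeE n (fun x => Pg x^4) ≤ Y^2 := by
    set ρ0 : ℝ := Real.sqrt (1/3) with hρ0def
    have hρ0sq : ρ0 * ρ0 = 1/3 := Real.mul_self_sqrt (by norm_num)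
    have hb := bonami ρ0 (by rw [sq, hρ0sq]) n (fun s => uprod ρ0 s * hatc n g s)
    have e1 : (fun x => Pg x^4)
        = fun x => (∑ s, uprod ρ0 s * (uprod ρ0 s * hatc n g s) * chi s x)^4 := by
      funext x
      rw [hPgdef]
      congr 2
      refine Finset.sum_congr rfl fun s _ => ?_
      rw [show uprod ρ0 s * (uprod ρ0 s * hatc n g s) = (uprod ρ0 s * uprod ρ0 s) * hatc n g s
        from by ring, uprod_mul, hρ0sq]
    have e2 : (∑ s, (uprod ρ0 s * hatc n g s)^2) = Y := by
      rw [hYdef]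
      refine Finset.sum_congr rfl fun s _ => ?_
      rw [show (uprod ρ0 s * hatc n g s)^2 = (uprod ρ0 s * uprod ρ0 s) * (hatc n g s)^2
        from by ring, uprod_mul, hρ0sq]
    rw [e1]
    rw [e2] at hb
    exact hb
  -- Step 2 : Y ≤ √(E|g|) √(E |g| Pg²)
  have step2 : Y ≤ Real.sqrt (cubeE n (fun x => |g x|))
      * Real.sqrt (cubeE n (fun x => |g x| * Pg x^2)) := by
    rw [← step1]
    have h1 : cubeE n (fun x => g x * Pg x)
        ≤ cubeE n (fun x => Real.sqrt |g x| * (Real.sqrt |g x| * |Pg x|)) := by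
      apply cubeE_mono
      intro x
      have : Real.sqrt |g x| * (Real.sqrt |g x| * |Pg x|) = |g x| * |Pg x| := by
        rw [← mul_assoc, Real.mul_self_sqrt (abs_nonneg _)]
      rw [this, ← abs_mul]
      exact le_abs_self _
    refine h1.trans ?_
    refine (cubeE_CS _ _).trans (le_of_eq ?_)
    congr 2
    · congr 1; funext x; rw [Real.sq_sqrt (abs_nonneg _)]
    · congr 1; funext x; rw [mul_pow, Real.sq_sqrt (abs_nonneg _), sq_abs]
  -- Step 3
  have step3 : cubeE n (fun x => |g x| * Pg x^2)
      ≤ Real.sqrt (cubeE n (fun x => (g x)^2)) * Real.sqrt (cubeE n (fun x => Pg x^4)) := by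
    refine (cubeE_CS _ _).trans (le_of_eq ?_)
    congr 2
    · congr 1; funext x; rw [sq_abs]
    · congr 1; funext x; ring
  -- combine
  have step5 : cubeE n (fun x => |g x| * Pg x^2)
      ≤ Real.sqrt (cubeE n (fun x => (g x)^2)) * Y := by
    refine step3.trans ?_
    apply mul_le_mul_of_nonneg_left _ (Real.sqrt_nonneg _)
    calc Real.sqrt (cubeE n (fun x => Pg x^4)) ≤ Real.sqrt (Y^2) := Real.sqrt_le_sqrt step4
      _ = Y := by rw [Real.sqrt_sq hY0]
  have key : Y ≤ Real.sqrt (cubeE n (fun x => |g x|))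
      * Real.sqrt (Real.sqrt (cubeE n (fun x => (g x)^2)) * Y) := by
    refine step2.trans ?_
    exact mul_le_mul_of_nonneg_left (Real.sqrt_le_sqrt step5) (Real.sqrt_nonneg _)
  set R := cubeE n (fun x => |g x|) * Real.sqrt (cubeE n (fun x => (g x)^2)) with hRdef
  have hR0 : 0 ≤ R := mul_nonneg hEg (Real.sqrt_nonneg _)
  have hsq : Y * Y ≤ R * Y := by
    calc Y * Y ≤ (Real.sqrt (cubeE n (fun x => |g x|))
          * Real.sqrt (Real.sqrt (cubeE n (fun x => (g x)^2)) * Y))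
        * (Real.sqrt (cubeE n (fun x => |g x|))
          * Real.sqrt (Real.sqrt (cubeE n (fun x => (g x)^2)) * Y)) :=
        mul_le_mul key key hY0 (mul_nonneg (Real.sqrt_nonneg _) (Real.sqrt_nonneg _))
      _ = (Real.sqrt (cubeE n (fun x => |g x|)) * Real.sqrt (cubeE n (fun x => |g x|)))
          * (Real.sqrt (Real.sqrt (cubeE n (fun x => (g x)^2)) * Y)
            * Real.sqrt (Real.sqrt (cubeE n (fun x => (g x)^2)) * Y)) := by ring
      _ = cubeE n (fun x => |g x|) * (Real.sqrt (cubeE n (fun x => (g x)^2)) * Y) := by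
          rw [Real.mul_self_sqrt hEg,
            Real.mul_self_sqrt (mul_nonneg (Real.sqrt_nonneg _) hY0)]
      _ = R * Y := by rw [hRdef]; ring
  rcases eq_or_lt_of_le hY0 with hy | hy
  · rw [← hy]; exact hR0
  · exact le_of_mul_le_mul_right hsq hy

noncomputable def AA (n : ℕ) (f : (Fin n → Bool) → ℝ) (i : Fin n) (u : ℝ) : ℝ :=
  ∑ s, if s i then uprod u s * (hatc n f s)^2 else 0

lemma AA_nonneg (f : (Fin n → Bool) → ℝ) (i : Fin n) {u : ℝ} (hu : 0 ≤ u) :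
    0 ≤ AA n f i u :=
  Finset.sum_nonneg fun s _ => by
    by_cases h : s i
    · rw [if_pos h]; exact mul_nonneg (uprod_nonneg hu s) (sq_nonneg _)
    · rw [if_neg h]

lemma step_i (f : (Fin n → Bool) → ℝ) (i : Fin n) {σ : ℝ} (hσ0 : 0 ≤ σ) (hσ1 : σ ≤ 1) :
    4 * AA n f i (σ^2/3)
      ≤ 2 * cubeE n (fun x => |Dop n i f x|) * Real.sqrt (AA n f i (σ^2)) := by
  set g := Tnoise n σ (Dop n i f) with hgdef
  have hatg : ∀ s, hatc n g s = uprod σ s * hatc n (Dop n i f) s := by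
    intro s
    rw [hgdef, show Tnoise n σ (Dop n i f)
      = fun x => ∑ s, (uprod σ s * hatc n (Dop n i f) s) * chi s x
      from funext (Tnoise_eq_synth σ _), hatc_synth]
  have hatg2 : ∀ s, (hatc n g s)^2
      = if s i then uprod (σ^2) s * (4 * (hatc n f s)^2) else 0 := by
    intro s
    rw [hatg, hatc_Dop]
    by_cases h : s i
    · rw [if_pos h, if_pos h, show (uprod σ s * (-2 * hatc n f s))^2
        = (uprod σ s * uprod σ s) * (4 * (hatc n f s)^2) from by ring, uprod_mul, ← sq]
    · rw [if_neg h, if_neg h]; ring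
  have hLHS : ∑ s, uprod (1/3 : ℝ) s * (hatc n g s)^2 = 4 * AA n f i (σ^2/3) := by
    unfold AA
    rw [Finset.mul_sum]
    refine Finset.sum_congr rfl fun s _ => ?_
    rw [hatg2 s]
    by_cases h : s i
    · rw [if_pos h, if_pos h, show uprod (1/3:ℝ) s * (uprod (σ^2) s * (4 * (hatc n f s)^2))
        = (uprod (1/3:ℝ) s * uprod (σ^2) s) * (4 * (hatc n f s)^2) from by ring, uprod_mul]
      rw [show (1/3:ℝ) * σ^2 = σ^2/3 from by ring]
      ring
    · rw [if_neg h, if_neg h]; ring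
  have hEg2 : cubeE n (fun x => (g x)^2) = 4 * AA n f i (σ^2) := by
    rw [parseval]
    unfold AA
    rw [Finset.mul_sum]
    refine Finset.sum_congr rfl fun s _ => ?_
    rw [hatg2 s]
    by_cases h : s i
    · rw [if_pos h, if_pos h]; ring
    · rw [if_neg h, if_neg h]; ring
  have h1 := hyper (n := n) g
  rw [hLHS, hEg2] at h1
  have h2 : Real.sqrt (4 * AA n f i (σ^2)) = 2 * Real.sqrt (AA n f i (σ^2)) := by
    rw [Real.sqrt_mul (by norm_num : (0:ℝ) ≤ 4), show (4:ℝ) = 2^2 from by norm_num,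
      Real.sqrt_sq (by norm_num : (0:ℝ) ≤ 2)]
  rw [h2] at h1
  have h3 : cubeE n (fun x => |g x|) ≤ cubeE n (fun x => |Dop n i f x|) :=
    Tnoise_l1 hσ0 hσ1 _
  calc 4 * AA n f i (σ^2/3)
      ≤ cubeE n (fun x => |g x|) * (2 * Real.sqrt (AA n f i (σ^2))) := h1
    _ ≤ cubeE n (fun x => |Dop n i f x|) * (2 * Real.sqrt (AA n f i (σ^2))) := by
        apply mul_le_mul_of_nonneg_right h3
        positivity
    _ = 2 * cubeE n (fun x => |Dop n i f x|) * Real.sqrt (AA n f i (σ^2)) := by ring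

lemma sum_step (f : (Fin n → Bool) → ℝ) {σ : ℝ} (hσ0 : 0 ≤ σ) (hσ1 : σ ≤ 1) :
    ∑ i, AA n f i (σ^2/3)
      ≤ (1/2) * Real.sqrt (∑ i, (cubeE n fun x => |Dop n i f x|)^2)
          * Real.sqrt (∑ i, AA n f i (σ^2)) := by
  have hI0 : ∀ i : Fin n, 0 ≤ cubeE n fun x => |Dop n i f x| :=
    fun i => cubeE_nonneg fun x => abs_nonneg _
  have h1 : ∑ i, AA n f i (σ^2/3)
      ≤ ∑ i, (1/2) * ((cubeE n fun x => |Dop n i f x|) * Real.sqrt (AA n f i (σ^2))) := by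
    refine Finset.sum_le_sum fun i _ => ?_
    have := step_i f i hσ0 hσ1
    linarith
  rw [← Finset.mul_sum] at h1
  refine h1.trans ?_
  rw [mul_assoc]
  apply mul_le_mul_of_nonneg_left _ (by norm_num : (0:ℝ) ≤ 1/2)
  have hA0 : ∀ i : Fin n, 0 ≤ AA n f i (σ^2) := fun i => AA_nonneg f i (sq_nonneg σ)
  have hcs := Finset.sum_mul_sq_le_sq_mul_sq univ (fun i => cubeE n fun x => |Dop n i f x|)
    (fun i => Real.sqrt (AA n f i (σ^2)))
  have hsq : ∀ i : Fin n, Real.sqrt (AA n f i (σ^2)) ^ 2 = AA n f i (σ^2) :=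
    fun i => Real.sq_sqrt (hA0 i)
  simp only [hsq] at hcs
  have hnn : 0 ≤ ∑ i, (cubeE n fun x => |Dop n i f x|) * Real.sqrt (AA n f i (σ^2)) :=
    Finset.sum_nonneg fun i _ => mul_nonneg (hI0 i) (Real.sqrt_nonneg _)
  calc ∑ i, (cubeE n fun x => |Dop n i f x|) * Real.sqrt (AA n f i (σ^2))
      = Real.sqrt ((∑ i, (cubeE n fun x => |Dop n i f x|) * Real.sqrt (AA n f i (σ^2)))^2) :=
        (Real.sqrt_sq hnn).symm
    _ ≤ Real.sqrt ((∑ i, (cubeE n fun x => |Dop n i f x|)^2) * ∑ i, AA n f i (σ^2)) :=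
        Real.sqrt_le_sqrt hcs
    _ = Real.sqrt (∑ i, (cubeE n fun x => |Dop n i f x|)^2) * Real.sqrt (∑ i, AA n f i (σ^2)) :=
        Real.sqrt_mul (Finset.sum_nonneg fun i _ => sq_nonneg _) _

def wtN (s : Fin n → Bool) : ℕ := ∑ i, (if s i then 1 else 0)

lemma uprod_eq_pow (u : ℝ) (s : Fin n → Bool) : uprod u s = u ^ (wtN s) := by
  unfold uprod wtN
  rw [← Finset.prod_pow_eq_pow_sum]
  refine Finset.prod_congr rfl fun i _ => ?_
  by_cases h : s i <;> simp [h]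

lemma psi_swap (f : (Fin n → Bool) → ℝ) (u : ℝ) :
    ∑ i, AA n f i u = ∑ s, (wtN s : ℝ) * (uprod u s * (hatc n f s)^2) := by
  unfold AA
  rw [Finset.sum_comm]
  refine Finset.sum_congr rfl fun s _ => ?_
  calc ∑ i, (if s i then uprod u s * (hatc n f s)^2 else 0)
      = ∑ i, (if s i then (1:ℝ) else 0) * (uprod u s * (hatc n f s)^2) :=
        Finset.sum_congr rfl fun i _ => by by_cases h : s i <;> simp [h]
    _ = (∑ i, if s i then (1:ℝ) else 0) * (uprod u s * (hatc n f s)^2) := by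
        rw [← Finset.sum_mul]
    _ = (wtN s : ℝ) * (uprod u s * (hatc n f s)^2) := by
        congr 1
        unfold wtN
        push_cast
        exact Finset.sum_congr rfl fun i _ => by by_cases h : s i <;> simp [h]

lemma kpow_le {v : ℝ} (hv0 : 0 < v) (hv1 : v < 1) (k : ℕ) :
    (k:ℝ) * v^k ≤ 1/(Real.exp 1 * Real.log v⁻¹) := by
  set L := Real.log v⁻¹ with hLdef
  have hL : 0 < L := by
    rw [hLdef, Real.log_inv]
    linarith [Real.log_neg hv0 hv1]
  have hvk : v ^ k = Real.exp (-((k:ℝ) * L)) := by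
    have hlogv : Real.log v = -L := by rw [hLdef, Real.log_inv]; ring
    rw [← Real.exp_log hv0, ← Real.exp_nat_mul, hlogv]
    ring_nf
  have hxe : ∀ x : ℝ, 0 ≤ x → x * Real.exp (-x) ≤ Real.exp (-1 : ℝ) := by
    intro x _
    have h1 : x ≤ Real.exp (x - 1) := by
      have := Real.add_one_le_exp (x - 1)
      linarith
    calc x * Real.exp (-x) ≤ Real.exp (x-1) * Real.exp (-x) :=
          mul_le_mul_of_nonneg_right h1 (Real.exp_nonneg _)
      _ = Real.exp (-1 : ℝ) := by rw [← Real.exp_add]; ring_nf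
  have hk : ((k:ℝ) * L) * Real.exp (-((k:ℝ)*L)) ≤ Real.exp (-1:ℝ) :=
    hxe _ (mul_nonneg (Nat.cast_nonneg k) hL.le)
  have h2 : (k:ℝ) * Real.exp (-((k:ℝ)*L)) ≤ Real.exp (-1:ℝ) / L := by
    rw [le_div_iff₀ hL]
    calc (k:ℝ) * Real.exp (-((k:ℝ)*L)) * L = ((k:ℝ)*L) * Real.exp (-((k:ℝ)*L)) := by ring
      _ ≤ Real.exp (-1:ℝ) := hk
  rw [hvk]
  refine h2.trans (le_of_eq ?_)
  rw [Real.exp_neg]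
  have he : Real.exp 1 ≠ 0 := (Real.exp_pos 1).ne'
  field_simp

lemma psi_le (f : (Fin n → Bool) → ℝ) {v : ℝ} (hv0 : 0 < v) (hv1 : v < 1) :
    ∑ i, AA n f i v
      ≤ 1/(Real.exp 1 * Real.log v⁻¹) * cubeE n (fun x => f x ^ 2) := by
  rw [psi_swap, parseval, Finset.mul_sum]
  refine Finset.sum_le_sum fun s _ => ?_
  rw [uprod_eq_pow]
  have h1 : (wtN s : ℝ) * (v ^ wtN s * (hatc n f s)^2)
      = ((wtN s : ℝ) * v ^ wtN s) * (hatc n f s)^2 := by ring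
  rw [h1]
  exact mul_le_mul_of_nonneg_right (kpow_le hv0 hv1 _) (sq_nonneg _)

lemma G_le_psi (f : (Fin n → Bool) → ℝ) {u : ℝ} (hu : 0 ≤ u) :
    ∑ s ∈ univ.erase (fun _ => false), uprod u s * (hatc n f s)^2 ≤ ∑ i, AA n f i u := by
  rw [psi_swap]
  have h1 : ∑ s ∈ univ.erase (fun _ => false), uprod u s * (hatc n f s)^2
      ≤ ∑ s ∈ univ.erase (fun _ => false), (wtN s : ℝ) * (uprod u s * (hatc n f s)^2) := by
    refine Finset.sum_le_sum fun s hs => ?_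
    have hs0 : s ≠ (fun _ => false) := Finset.ne_of_mem_erase hs
    obtain ⟨i, hi⟩ := Function.ne_iff.mp hs0
    have hsi : s i = true := by simpa using hi
    have hwt : (1:ℝ) ≤ (wtN s : ℝ) := by
      have : 1 ≤ wtN s := by
        calc 1 = if s i then 1 else 0 := by rw [if_pos hsi]
          _ ≤ ∑ j, (if s j then 1 else 0) :=
            Finset.single_le_sum (f := fun j => if s j then 1 else 0)
              (fun j _ => by positivity) (Finset.mem_univ i)
      exact_mod_cast this
    nlinarith [mul_nonneg (uprod_nonneg hu s) (sq_nonneg (hatc n f s))]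
  refine h1.trans ?_
  refine Finset.sum_le_sum_of_subset_of_nonneg (Finset.erase_subset _ _) fun s _ _ => ?_
  have := uprod_nonneg hu s
  positivity

lemma G_le_V (f : (Fin n → Bool) → ℝ) {u : ℝ} (hu0 : 0 ≤ u) (hu1 : u ≤ 1) :
    ∑ s ∈ univ.erase (fun _ => false), uprod u s * (hatc n f s)^2
      ≤ cubeE n (fun x => f x ^ 2) := by
  rw [parseval]
  have h1 : ∑ s ∈ univ.erase (fun _ => false), uprod u s * (hatc n f s)^2
      ≤ ∑ s ∈ univ.erase (fun _ => false), (hatc n f s)^2 := by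
    refine Finset.sum_le_sum fun s _ => ?_
    have h2 : uprod u s ≤ 1 := by
      rw [uprod_eq_pow]
      exact pow_le_one₀ hu0 hu1
    nlinarith [sq_nonneg (hatc n f s), uprod_nonneg hu0 s]
  refine h1.trans ?_
  exact Finset.sum_le_sum_of_subset_of_nonneg (Finset.erase_subset _ _)
    fun s _ _ => sq_nonneg _

lemma cubeNS_eq (f : (Fin n → Bool) → ℝ) (η : ℝ) :
    cubeNS n f η = ∑ s ∈ univ.erase (fun _ => false), uprod (1-η) s * (hatc n f s)^2 := by
  unfold cubeNS
  have hfour : (4:ℝ)^n = 2^n * 2^n := by rw [← mul_pow]; norm_num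
  have hprod : ∀ x y : Fin n → Bool, (∏ i, nsW η (x i) (y i))
      = (∑ s, uprod (1-η) s * (chi s x * chi s y)) / 4^n := by
    intro x y
    have hstep : (∏ i, nsW η (x i) (y i))
        = ∏ i, ((1 + (1-η) * (eps (x i) * eps (y i))) / 4) :=
      Finset.prod_congr rfl fun i _ => by
        unfold nsW
        cases hx : x i <;> cases hy : y i <;> simp [eps] <;> ring
    rw [hstep, Finset.prod_div_distrib, Finset.prod_const, Finset.card_univ, Fintype.card_fin,
      prod_one_add]
  have hhat : ∀ s : Fin n → Bool, (∑ x, f x * chi s x) = hatc n f s * 2^n := by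
    intro s
    unfold hatc cubeE
    field_simp
  have h1 : ∀ x y : Fin n → Bool, f x * f y * ∏ i, nsW η (x i) (y i)
      = ∑ s, (uprod (1-η) s * ((f x * chi s x) * (f y * chi s y))) / 4^n := by
    intro x y
    rw [hprod x y, ← mul_div_assoc, Finset.mul_sum, Finset.sum_div]
    exact Finset.sum_congr rfl fun s _ => by ring
  have hmain : (∑ x : Fin n → Bool, ∑ y : Fin n → Bool, f x * f y * ∏ i, nsW η (x i) (y i))
      = ∑ s, uprod (1-η) s * (hatc n f s)^2 := by
    simp only [h1]
    have h2 : ∀ x : Fin n → Bool,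
        (∑ y : Fin n → Bool, ∑ s : Fin n → Bool,
          (uprod (1-η) s * ((f x * chi s x) * (f y * chi s y))) / 4^n)
        = ∑ s : Fin n → Bool,
            (uprod (1-η) s * ((f x * chi s x) * (hatc n f s * 2^n))) / 4^n := by
      intro x
      rw [Finset.sum_comm]
      refine Finset.sum_congr rfl fun s _ => ?_
      rw [← Finset.sum_div, ← Finset.mul_sum, ← Finset.mul_sum, hhat s]
    simp only [h2]
    rw [Finset.sum_comm]
    refine Finset.sum_congr rfl fun s _ => ?_
    rw [← Finset.sum_div,
      Finset.sum_congr rfl (fun x _ => by ring :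
        ∀ x ∈ univ, uprod (1-η) s * ((f x * chi s x) * (hatc n f s * 2^n))
          = (uprod (1-η) s * (hatc n f s * 2^n)) * (f x * chi s x)),
      ← Finset.mul_sum, hhat s, hfour]
    have h2n : (2:ℝ)^n ≠ 0 := by positivity
    field_simp
  have hE : cubeE n f = hatc n f (fun _ => false) := by
    unfold hatc
    congr 1
    funext x
    rw [chi_zero_arg, mul_one]
  rw [hmain, hE]
  have hsplit := Finset.sum_erase_add univ (fun s => uprod (1-η) s * (hatc n f s)^2)
    (Finset.mem_univ (fun _ : Fin n => false))
  rw [uprod_zero_arg, one_mul] at hsplit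
  linarith [hsplit]

lemma holder_sum {α : Type*} (s : Finset α) (x y : α → ℝ) (hx : ∀ a ∈ s, 0 ≤ x a)
    (hy : ∀ a ∈ s, 0 ≤ y a) {t : ℝ} (ht0 : 0 < t) (ht1 : t < 1) :
    ∑ a ∈ s, (x a)^t * (y a)^(1-t) ≤ (∑ a ∈ s, x a)^t * (∑ a ∈ s, y a)^(1-t) := by
  have hX0 : 0 ≤ ∑ a ∈ s, x a := Finset.sum_nonneg hx
  have hY0 : 0 ≤ ∑ a ∈ s, y a := Finset.sum_nonneg hy
  rcases eq_or_lt_of_le hX0 with hX | hX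
  · have hall : ∀ a ∈ s, x a = 0 := by
      intro a ha
      exact (Finset.sum_eq_zero_iff_of_nonneg hx).mp hX.symm a ha
    have : ∑ a ∈ s, (x a)^t * (y a)^(1-t) = 0 := Finset.sum_eq_zero fun a ha => by
      rw [hall a ha, Real.zero_rpow ht0.ne', zero_mul]
    rw [this]
    positivity
  rcases eq_or_lt_of_le hY0 with hY | hY
  · have hall : ∀ a ∈ s, y a = 0 := by
      intro a ha
      exact (Finset.sum_eq_zero_iff_of_nonneg hy).mp hY.symm a ha
    have : ∑ a ∈ s, (x a)^t * (y a)^(1-t) = 0 := Finset.sum_eq_zero fun a ha => by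
      rw [hall a ha, Real.zero_rpow (by linarith : 1 - t ≠ 0), mul_zero]
    rw [this]
    positivity
  set X := ∑ a ∈ s, x a
  set Yv := ∑ a ∈ s, y a
  have hXt : (0:ℝ) < X ^ t := Real.rpow_pos_of_pos hX t
  have hYt : (0:ℝ) < Yv ^ (1-t) := Real.rpow_pos_of_pos hY (1-t)
  have hmain : ∀ a ∈ s, (x a)^t * (y a)^(1-t)
      ≤ X^t * Yv^(1-t) * (t*(x a/X) + (1-t)*(y a/Yv)) := by
    intro a ha
    have hg := Real.geom_mean_le_arith_mean2_weighted (w₁ := t) (w₂ := 1 - t)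
      (p₁ := x a / X) (p₂ := y a / Yv) (le_of_lt ht0) (by linarith)
      (div_nonneg (hx a ha) hX0) (div_nonneg (hy a ha) hY0) (by ring)
    have heq : (x a / X)^t * (y a / Yv)^(1-t)
        = (x a)^t * (y a)^(1-t) / (X^t * Yv^(1-t)) := by
      rw [Real.div_rpow (hx a ha) hX0, Real.div_rpow (hy a ha) hY0]
      field_simp
    rw [heq] at hg
    calc (x a)^t * (y a)^(1-t)
        = ((x a)^t * (y a)^(1-t) / (X^t * Yv^(1-t))) * (X^t * Yv^(1-t)) := by
          field_simp
      _ ≤ (t*(x a/X) + (1-t)*(y a/Yv)) * (X^t * Yv^(1-t)) :=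
          mul_le_mul_of_nonneg_right hg (by positivity)
      _ = X^t * Yv^(1-t) * (t*(x a/X) + (1-t)*(y a/Yv)) := by ring
  calc ∑ a ∈ s, (x a)^t * (y a)^(1-t)
      ≤ ∑ a ∈ s, X^t * Yv^(1-t) * (t*(x a/X) + (1-t)*(y a/Yv)) :=
        Finset.sum_le_sum hmain
    _ = X^t * Yv^(1-t) * (t * (X/X) + (1-t) * (Yv/Yv)) := by
        rw [← Finset.mul_sum]
        congr 1
        rw [Finset.sum_add_distrib]
        congr 1
        · rw [← Finset.mul_sum, ← Finset.sum_div]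
        · rw [← Finset.mul_sum, ← Finset.sum_div]
    _ = X^t * Yv^(1-t) := by
        rw [div_self hX.ne', div_self hY.ne']
        ring

lemma G_interp (f : (Fin n → Bool) → ℝ) {u0 t : ℝ} (hu0 : 0 ≤ u0) (ht0 : 0 < t)
    (ht1 : t < 1) :
    ∑ s ∈ univ.erase (fun _ => false), uprod (u0 ^ t) s * (hatc n f s)^2
      ≤ (∑ s ∈ univ.erase (fun _ => false), uprod u0 s * (hatc n f s)^2)^t
        * (∑ s ∈ univ.erase (fun _ => false), (hatc n f s)^2)^(1-t) := by
  have hterm : ∀ s : Fin n → Bool, uprod (u0 ^ t) s * (hatc n f s)^2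
      = (uprod u0 s * (hatc n f s)^2)^t * ((hatc n f s)^2)^(1-t) := by
    intro s
    rw [Real.mul_rpow (uprod_nonneg hu0 s) (sq_nonneg _)]
    rw [uprod_eq_pow, uprod_eq_pow]
    have h1 : ((u0:ℝ) ^ wtN s) ^ t = (u0 ^ t) ^ wtN s := by
      rw [← Real.rpow_natCast u0 (wtN s), ← Real.rpow_natCast (u0^t) (wtN s),
        ← Real.rpow_mul hu0, ← Real.rpow_mul hu0, mul_comm]
    rw [h1]
    have h2 : ((hatc n f s)^2)^t * ((hatc n f s)^2)^(1-t) = (hatc n f s)^2 := by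
      rw [← Real.rpow_add' (sq_nonneg _) (by norm_num : t + (1-t) ≠ 0)]
      norm_num
    rw [mul_assoc, h2]
  rw [Finset.sum_congr rfl fun s _ => hterm s]
  exact holder_sum _ _ _ (fun s _ => mul_nonneg (uprod_nonneg hu0 s) (sq_nonneg _))
    (fun s _ => sq_nonneg _) ht0 ht1

end KK

open KK

set_option maxHeartbeats 2000000

/-- for every `n ≥ 1`, every `f` with `‖f‖₂ ≤ 1` and every `η ∈ (0,1)`,
`VAR(f,η) ≤ 7 (∑ Iᵢ(f)²)^{η/4} ‖f‖₂^{3η/2}`, where `Iᵢ(f) = ‖f - f ∘ τᵢ‖₁`. -/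
theorem stmt1 (n : ℕ) (hn : 1 ≤ n) (f : (Fin n → Bool) → ℝ)
    (hf : (cubeE n fun x => f x ^ 2) ^ ((1 : ℝ) / 2) ≤ 1)
    (η : ℝ) (hη : η ∈ Set.Ioo (0 : ℝ) 1) :
    cubeNS n f η ≤
      7 * (∑ i : Fin n, (cubeE n fun x => |Dop n i f x|) ^ 2) ^ (η / 4) *
        ((cubeE n fun x => f x ^ 2) ^ ((1 : ℝ) / 2)) ^ (3 * η / 2) := by
  obtain ⟨hη0, hη1⟩ := hη
  set V : ℝ := cubeE n fun x => f x ^ 2 with hVdef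
  set M : ℝ := ∑ i : Fin n, (cubeE n fun x => |Dop n i f x|) ^ 2 with hMdef
  have hV0 : 0 ≤ V := cubeE_nonneg fun x => sq_nonneg _
  have hM0 : 0 ≤ M := Finset.sum_nonneg fun i _ => sq_nonneg _
  have hV1 : V ≤ 1 := by
    have h2 : (V ^ ((1:ℝ)/2))^(2:ℕ) = V := by
      rw [← Real.rpow_natCast (V ^ ((1:ℝ)/2)) 2, ← Real.rpow_mul hV0]
      norm_num
    calc V = (V ^ ((1:ℝ)/2))^(2:ℕ) := h2.symm
      _ ≤ 1^(2:ℕ) := pow_le_pow_left₀ (Real.rpow_nonneg hV0 _) hf 2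
      _ = 1 := one_pow 2
  have hRW : (V ^ ((1:ℝ)/2)) ^ (3*η/2) = V ^ (3*η/4) := by
    rw [← Real.rpow_mul hV0]
    norm_num
    ring_nf
  have h1η0 : (0:ℝ) < 1 - η := by linarith
  have hVexp : V ^ ((1:ℝ) - η/4) ≤ V ^ (3*η/4) := by
    rcases eq_or_lt_of_le hV0 with hV | hV
    · rw [← hV, Real.zero_rpow (by linarith : (1:ℝ) - η/4 ≠ 0),
        Real.zero_rpow (by positivity : 3*η/4 ≠ 0)]
    · exact Real.rpow_le_rpow_of_exponent_ge hV hV1 (by linarith)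
  have hMexp0 : (0:ℝ) ≤ M ^ (η/4) := Real.rpow_nonneg hM0 _
  have hVexp0 : (0:ℝ) ≤ V ^ (3*η/4) := Real.rpow_nonneg hV0 _
  rw [cubeNS_eq, hRW]
  by_cases hM1 : 1 ≤ M
  · -- trivial case
    have hG : ∑ s ∈ univ.erase (fun _ => false), uprod (1-η) s * (hatc n f s)^2 ≤ V :=
      G_le_V f h1η0.le (by linarith)
    have hM4 : (1:ℝ) ≤ M ^ (η/4) := by
      calc (1:ℝ) = 1 ^ (η/4) := (Real.one_rpow _).symm
        _ ≤ M ^ (η/4) := Real.rpow_le_rpow (by norm_num) hM1 (by positivity)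
    have hVV : V ≤ V ^ (3*η/4) := by
      rcases eq_or_lt_of_le hV0 with hV | hV
      · rw [← hV]
        positivity
      · calc V = V ^ (1:ℝ) := (Real.rpow_one V).symm
          _ ≤ V ^ (3*η/4) := Real.rpow_le_rpow_of_exponent_ge hV hV1 (by linarith)
    nlinarith
  · -- main case : M < 1
    push_neg at hM1
    set L : ℝ := -Real.log (1-η) with hLdef
    have hLη : η ≤ L := by
      have := Real.log_le_sub_one_of_pos h1η0
      rw [hLdef]
      linarith
    have hLpos : 0 < L := lt_of_lt_of_le hη0 hLη
    set u0 : ℝ := (1-η) ^ ((2:ℝ)/η) with hu0def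
    have hu0pos : 0 < u0 := Real.rpow_pos_of_pos h1η0 _
    set v : ℝ := 3 * u0 with hvdef
    have hv0 : 0 < v := by positivity
    set s' : ℝ := Real.log v⁻¹ with hs'def
    have hlog3 : Real.log 3 ≤ 1.48 := by
      have h174 : Real.sqrt 3 ≤ 1.74 := by
        rw [show (1.74:ℝ) = Real.sqrt (1.74^2) from (Real.sqrt_sq (by norm_num)).symm]
        exact Real.sqrt_le_sqrt (by norm_num)
      have hls : Real.log (Real.sqrt 3) ≤ Real.sqrt 3 - 1 :=
        Real.log_le_sub_one_of_pos (Real.sqrt_pos.mpr (by norm_num))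
      have heq : Real.log (Real.sqrt 3) = Real.log 3 / 2 := Real.log_sqrt (by norm_num)
      linarith
    have hs'eq : s' = (2/η) * L - Real.log 3 := by
      rw [hs'def, Real.log_inv, hvdef, Real.log_mul (by norm_num) hu0pos.ne',
        hu0def, Real.log_rpow h1η0, hLdef]
      ring
    have h2L : 2 ≤ (2/η) * L := by
      have : (2/η) * η ≤ (2/η) * L := by
        apply mul_le_mul_of_nonneg_left hLη (by positivity)
      rw [div_mul_cancel₀] at this
      · linarith
      · exact hη0.ne'
    have hs'lb : 0.52 ≤ s' := by rw [hs'eq]; linarith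
    have hs'pos : 0 < s' := by linarith
    have hv1 : v < 1 := by
      have hlogv : Real.log v < 0 := by
        have : Real.log v = -s' := by rw [hs'def, Real.log_inv]; ring
        rw [this]; linarith
      by_contra hc
      push_neg at hc
      have := Real.log_nonneg hc
      linarith
    set σ : ℝ := Real.sqrt v with hσdef
    have hσ0 : 0 ≤ σ := Real.sqrt_nonneg v
    have hσ1 : σ ≤ 1 := by
      rw [hσdef, show (1:ℝ) = Real.sqrt 1 from Real.sqrt_one.symm]
      exact Real.sqrt_le_sqrt hv1.le
    have hσsq : σ^2 = v := Real.sq_sqrt hv0.le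
    have hσsq3 : σ^2/3 = u0 := by rw [hσsq, hvdef]; ring
    set t : ℝ := η/2 with htdef
    have ht0 : 0 < t := by positivity
    have ht1 : t < 1 := by rw [htdef]; linarith
    have hu0t : u0 ^ t = 1 - η := by
      rw [hu0def, ← Real.rpow_mul h1η0.le]
      rw [show (2:ℝ)/η * t = 1 from by rw [htdef]; field_simp]
      exact Real.rpow_one _
    -- the chain
    have hGnn : ∀ u : ℝ, 0 ≤ u →
        0 ≤ ∑ s ∈ univ.erase (fun _ => false), uprod u s * (hatc n f s)^2 :=
      fun u hu => Finset.sum_nonneg fun s _ => mul_nonneg (uprod_nonneg hu s) (sq_nonneg _)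
    have hstep : ∑ i, AA n f i u0 ≤ (1/2) * Real.sqrt M * Real.sqrt (∑ i, AA n f i v) := by
      have := sum_step f hσ0 hσ1
      rw [hσsq3, hσsq] at this
      exact this
    have hpsi : ∑ i, AA n f i v ≤ 1/(Real.exp 1 * s') * V := by
      have := psi_le f hv0 hv1
      rw [← hs'def] at this
      exact this
    have hGu0 : ∑ s ∈ univ.erase (fun _ => false), uprod u0 s * (hatc n f s)^2
        ≤ Real.sqrt M * Real.sqrt V := by
      refine (G_le_psi f hu0pos.le).trans (hstep.trans ?_)
      have h1 : Real.sqrt (∑ i, AA n f i v) ≤ Real.sqrt (1/(Real.exp 1 * s') * V) :=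
        Real.sqrt_le_sqrt hpsi
      have hes : (1:ℝ)/4 ≤ Real.exp 1 * s' := by
        have he2 : (2:ℝ) ≤ Real.exp 1 := by
          have := Real.add_one_le_exp 1
          linarith
        nlinarith
      have h2 : Real.sqrt (1/(Real.exp 1 * s') * V) ≤ 2 * Real.sqrt V := by
        have hle : 1/(Real.exp 1 * s') * V ≤ 4 * V := by
          apply mul_le_mul_of_nonneg_right _ hV0
          rw [div_le_iff₀ (by positivity)]
          linarith
        calc Real.sqrt (1/(Real.exp 1 * s') * V) ≤ Real.sqrt (4 * V) := Real.sqrt_le_sqrt hle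
          _ = Real.sqrt 4 * Real.sqrt V := Real.sqrt_mul (by norm_num) V
          _ = 2 * Real.sqrt V := by
              rw [show (4:ℝ) = 2^2 from by norm_num, Real.sqrt_sq (by norm_num)]
      have h3 : Real.sqrt (∑ i : Fin n, AA n f i v) ≤ 2 * Real.sqrt V := h1.trans h2
      have h4 : (0:ℝ) ≤ Real.sqrt M := Real.sqrt_nonneg M
      nlinarith [mul_le_mul_of_nonneg_left h3 h4]
    have hinterp := G_interp f hu0pos.le ht0 ht1
    rw [hu0t] at hinterp
    have hfac1 : (∑ s ∈ univ.erase (fun _ => false), uprod u0 s * (hatc n f s)^2) ^ t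
        ≤ M ^ (η/4) * V ^ (η/4) := by
      calc (∑ s ∈ univ.erase (fun _ => false), uprod u0 s * (hatc n f s)^2) ^ t
          ≤ (Real.sqrt M * Real.sqrt V) ^ t :=
            Real.rpow_le_rpow (hGnn u0 hu0pos.le) hGu0 ht0.le
        _ = (Real.sqrt M) ^ t * (Real.sqrt V) ^ t :=
            Real.mul_rpow (Real.sqrt_nonneg M) (Real.sqrt_nonneg V)
        _ = M ^ (η/4) * V ^ (η/4) := by
            rw [Real.sqrt_eq_rpow, Real.sqrt_eq_rpow, ← Real.rpow_mul hM0, ← Real.rpow_mul hV0]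
            rw [show 1/2 * t = η/4 from by rw [htdef]; ring]
    have hfac2 : (∑ s ∈ univ.erase (fun _ => false), (hatc n f s)^2) ^ (1-t)
        ≤ V ^ (1-t) := by
      apply Real.rpow_le_rpow (Finset.sum_nonneg fun s _ => sq_nonneg _) _ (by linarith)
      rw [hVdef, parseval]
      exact Finset.sum_le_sum_of_subset_of_nonneg (Finset.erase_subset _ _)
        fun s _ _ => sq_nonneg _
    have hchain : ∑ s ∈ univ.erase (fun _ => false), uprod (1-η) s * (hatc n f s)^2
        ≤ M ^ (η/4) * V ^ ((1:ℝ) - η/4) := by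
      refine hinterp.trans ?_
      calc (∑ s ∈ univ.erase (fun _ => false), uprod u0 s * (hatc n f s)^2) ^ t
            * (∑ s ∈ univ.erase (fun _ => false), (hatc n f s)^2) ^ (1-t)
          ≤ (M ^ (η/4) * V ^ (η/4)) * V ^ (1-t) := by
            apply mul_le_mul hfac1 hfac2 (Real.rpow_nonneg
              (Finset.sum_nonneg fun s _ => sq_nonneg _) _) (by positivity)
        _ = M ^ (η/4) * (V ^ (η/4) * V ^ (1-t)) := by ring
        _ = M ^ (η/4) * V ^ ((1:ℝ) - η/4) := by
            rw [← Real.rpow_add' hV0 (by rw [htdef]; intro hc; nlinarith)]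
            rw [show η/4 + (1-t) = 1 - η/4 from by rw [htdef]; ring]
    refine hchain.trans ?_
    calc M ^ (η/4) * V ^ ((1:ℝ) - η/4) ≤ M ^ (η/4) * V ^ (3*η/4) :=
        mul_le_mul_of_nonneg_left hVexp hMexp0
      _ ≤ 7 * M ^ (η/4) * V ^ (3*η/4) := by nlinarith
end

section
/- For every n ≥ 1, every f : {−1,1}^n → ℝ with ‖f‖_{L²(ν)} = 1, and every ε ∈ (0,1), VAR(f,ε) ≤ 7 · W(f)^{ε/4}, where W(f) = (1/4) Σ_{i=1}^n ‖D_i f‖_{L¹(ν)}². -/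
open Finset

/-!
In the Walsh basis, `VAR(f, ε) = ∑_{s ≠ ∅} (1 - ε)^|s| f̂(s)²`. Hölder's inequality with exponent
`2/ε` bounds this by `(∑_{s ≠ ∅} τ^|s| f̂(s)²)^(ε/2)` with `τ = (1 - ε)^(2/ε) ≤ e⁻² < 1/6`, so it
suffices that this tail is at most `√W(f)`. As `|s| ≥ 1`, the tail is at most
`∑ᵢ ∑_{s ∋ i} τ^|s| f̂(s)²`, and the `i`-th inner sum is `¼ ‖T_δ T_u Dᵢ f‖₂²` for `δ² = 1/3`,
`u² = 3τ`. Bonami's `(2,4)`-hypercontractivity of `T_δ` gives, by duality,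
`‖T_δ g‖₂² ≤ ‖g‖₁ ‖g‖₂`, while `T_u` is an `L¹`-contraction, so the `i`-th sum is at most
`½ ‖Dᵢ f‖₁ (∑_{s ∋ i} (3τ)^|s| f̂(s)²)^(1/2)`. Cauchy–Schwarz over `i` yields `√W(f)`, because
`∑_s |s| (3τ)^|s| f̂(s)² ≤ ∑_s f̂(s)² = 1` when `3τ ≤ 1/2`.
-/

namespace BooleanCube

variable {n : ℕ}

section Expectation

lemma cubeE_add (f g : (Fin n → Bool) → ℝ) :
    cubeE n (fun x => f x + g x) = cubeE n f + cubeE n g := by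
  simp only [cubeE, Finset.sum_add_distrib, add_div]

lemma cubeE_sub (f g : (Fin n → Bool) → ℝ) :
    cubeE n (fun x => f x - g x) = cubeE n f - cubeE n g := by
  simp only [cubeE, Finset.sum_sub_distrib, sub_div]

lemma cubeE_const_mul (c : ℝ) (f : (Fin n → Bool) → ℝ) :
    cubeE n (fun x => c * f x) = c * cubeE n f := by
  simp only [cubeE, ← Finset.mul_sum, mul_div_assoc]

lemma cubeE_sum {ι : Type*} (s : Finset ι) (f : ι → (Fin n → Bool) → ℝ) :
    cubeE n (fun x => ∑ i ∈ s, f i x) = ∑ i ∈ s, cubeE n (f i) := by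
  simp only [cubeE, Finset.sum_comm (s := s), Finset.sum_div]

lemma cubeE_mono {f g : (Fin n → Bool) → ℝ} (h : ∀ x, f x ≤ g x) : cubeE n f ≤ cubeE n g :=
  div_le_div_of_nonneg_right (Finset.sum_le_sum fun x _ => h x) (by positivity)

lemma cubeE_nonneg {f : (Fin n → Bool) → ℝ} (h : ∀ x, 0 ≤ f x) : 0 ≤ cubeE n f :=
  div_nonneg (Finset.sum_nonneg fun x _ => h x) (by positivity)

lemma abs_cubeE_le (f : (Fin n → Bool) → ℝ) : |cubeE n f| ≤ cubeE n (fun x => |f x|) := by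
  rw [cubeE, abs_div, abs_of_pos (by positivity : (0 : ℝ) < 2 ^ n)]
  exact div_le_div_of_nonneg_right (Finset.abs_sum_le_sum_abs _ _) (by positivity)

lemma cubeE_comm (F : (Fin n → Bool) → (Fin n → Bool) → ℝ) :
    cubeE n (fun x => cubeE n (F x)) = cubeE n (fun y => cubeE n (fun x => F x y)) := by
  simp only [cubeE, ← Finset.sum_div]
  rw [Finset.sum_comm]

lemma cubeFlip_involutive (i : Fin n) : Function.Involutive (cubeFlip n i) := fun x => by
  simp [cubeFlip, Function.update_idem, Function.update_eq_self]

lemma cubeE_comp_cubeFlip (i : Fin n) (f : (Fin n → Bool) → ℝ) :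
    cubeE n (fun x => f (cubeFlip n i x)) = cubeE n f := by
  rw [cubeE, cubeE, (cubeFlip_involutive i).bijective.sum_comp f]

lemma cubeE_mul_sq_le (f g : (Fin n → Bool) → ℝ) :
    cubeE n (fun x => f x * g x) ^ 2 ≤ cubeE n (fun x => f x ^ 2) * cubeE n (fun x => g x ^ 2) := by
  simp only [cubeE, div_pow, div_mul_div_comm, ← sq]
  exact div_le_div_of_nonneg_right (Finset.sum_mul_sq_le_sq_mul_sq _ _ _) (by positivity)

lemma cubeE_mul_sq_le_of_nonneg {w : (Fin n → Bool) → ℝ} (hw : ∀ x, 0 ≤ w x)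
    (f : (Fin n → Bool) → ℝ) :
    cubeE n (fun x => w x * f x) ^ 2 ≤ cubeE n w * cubeE n (fun x => w x * f x ^ 2) := by
  simp only [cubeE, div_pow, div_mul_div_comm, ← sq]
  refine div_le_div_of_nonneg_right ?_ (by positivity)
  exact Finset.sum_sq_le_sum_mul_sum_of_sq_le_mul _ (fun x _ => hw x)
    (fun x _ => mul_nonneg (hw x) (sq_nonneg _)) (fun _ _ => le_of_eq (by ring))

end Expectation

section Fourier

def sgn (b : Bool) : ℝ := if b then 1 else -1

lemma sgn_mul_sgn (a b : Bool) : sgn a * sgn b = if a = b then 1 else -1 := by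
  cases a <;> cases b <;> norm_num [sgn]

def walsh (s : Finset (Fin n)) (x : Fin n → Bool) : ℝ := ∏ i ∈ s, sgn (x i)

noncomputable def fourierCoeff (f : (Fin n → Bool) → ℝ) (s : Finset (Fin n)) : ℝ :=
  cubeE n (fun x => f x * walsh s x)

/-- `2⁻ⁿ noiseKernel σ x ·` is the law of `X^(1-σ)` given `X = x`, so `noiseOp σ` is the
Bonami–Beckner operator `T_σ`. -/
def noiseKernel (σ : ℝ) (x y : Fin n → Bool) : ℝ := ∏ i, (1 + σ * (sgn (x i) * sgn (y i)))

noncomputable def noiseOp (σ : ℝ) (f : (Fin n → Bool) → ℝ) (x : Fin n → Bool) : ℝ :=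
  cubeE n (fun y => noiseKernel σ x y * f y)

lemma sum_pow_card_mul_walsh_mul_walsh (σ : ℝ) (x y : Fin n → Bool) :
    ∑ s, σ ^ s.card * (walsh s x * walsh s y) = noiseKernel σ x y := by
  rw [noiseKernel, Finset.prod_one_add, Finset.powerset_univ]
  refine Finset.sum_congr rfl fun s _ => ?_
  rw [Finset.prod_mul_distrib, Finset.prod_const, walsh, walsh, Finset.prod_mul_distrib]

lemma walsh_eq_prod_ite (s : Finset (Fin n)) (x : Fin n → Bool) :
    walsh s x = ∏ i, if i ∈ s then sgn (x i) else 1 := by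
  rw [Finset.prod_ite_mem, Finset.univ_inter, walsh]

lemma cubeE_prod (g : Fin n → Bool → ℝ) :
    cubeE n (fun x => ∏ i, g i (x i)) = ∏ i, (g i true + g i false) / 2 := by
  rw [cubeE, ← Fintype.prod_sum g, Finset.prod_div_distrib]
  simp

lemma fourierCoeff_walsh (s t : Finset (Fin n)) :
    fourierCoeff (walsh s) t = if s = t then 1 else 0 := by
  have hcoord (i : Fin n) : ((if i ∈ s then sgn true else 1) * (if i ∈ t then sgn true else 1)
      + (if i ∈ s then sgn false else 1) * (if i ∈ t then sgn false else 1)) / 2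
      = if (i ∈ s ↔ i ∈ t) then 1 else 0 := by
    by_cases hs : i ∈ s <;> by_cases ht : i ∈ t <;> norm_num [hs, ht, sgn]
  simp only [fourierCoeff, walsh_eq_prod_ite, ← Finset.prod_mul_distrib]
  rw [cubeE_prod (fun i b => (if i ∈ s then sgn b else 1) * (if i ∈ t then sgn b else 1))]
  simp only [hcoord, Finset.prod_boole, Finset.mem_univ, true_implies, ← Finset.ext_iff]

lemma noiseKernel_one (x y : Fin n → Bool) : noiseKernel 1 x y = if x = y then 2 ^ n else 0 := by
  have hcoord (a b : Bool) : 1 + 1 * (sgn a * sgn b) = if a = b then 2 else 0 := by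
    cases a <;> cases b <;> norm_num [sgn]
  simp only [noiseKernel, hcoord, Finset.prod_ite_zero, Finset.mem_univ, forall_const,
    Finset.prod_const, Finset.card_univ, Fintype.card_fin]
  exact if_congr funext_iff.symm rfl rfl

lemma noiseKernel_comm (σ : ℝ) (x y : Fin n → Bool) : noiseKernel σ x y = noiseKernel σ y x := by
  simp only [noiseKernel, mul_comm (sgn (x _))]

lemma noiseKernel_nonneg {σ : ℝ} (hσ : |σ| ≤ 1) (x y : Fin n → Bool) : 0 ≤ noiseKernel σ x y := by
  refine Finset.prod_nonneg fun i _ => ?_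
  rw [sgn_mul_sgn]
  have := abs_le.mp hσ
  split_ifs <;> linarith

lemma cubeE_noiseKernel (σ : ℝ) (x : Fin n → Bool) : cubeE n (fun y => noiseKernel σ x y) = 1 := by
  have hcoord (a : Bool) :
      (1 + σ * (sgn a * sgn true) + (1 + σ * (sgn a * sgn false))) / 2 = 1 := by
    simp only [sgn, if_true, Bool.false_eq_true, if_false]; ring
  simp only [noiseKernel]
  rw [cubeE_prod (fun i b => 1 + σ * (sgn (x i) * sgn b))]
  simp only [hcoord, Finset.prod_const_one]

lemma noiseOp_one (f : (Fin n → Bool) → ℝ) : noiseOp 1 f = f := by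
  ext x
  simp [noiseOp, cubeE, noiseKernel_one]

lemma cubeE_noiseOp_mul (σ : ℝ) (f g : (Fin n → Bool) → ℝ) :
    cubeE n (fun x => noiseOp σ f x * g x)
      = ∑ s, σ ^ s.card * (fourierCoeff f s * fourierCoeff g s) := by
  have hinner (x : Fin n → Bool) (s : Finset (Fin n)) :
      cubeE n (fun y => σ ^ s.card * (walsh s x * walsh s y) * f y) * g x
        = σ ^ s.card * fourierCoeff f s * (g x * walsh s x) := by
    have hy : (fun y => σ ^ s.card * (walsh s x * walsh s y) * f y)
        = fun y => σ ^ s.card * walsh s x * (f y * walsh s y) := by ext; ring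
    rw [hy, cubeE_const_mul, fourierCoeff]
    ring
  simp only [noiseOp, ← sum_pow_card_mul_walsh_mul_walsh, Finset.sum_mul, cubeE_sum, hinner]
  simp only [cubeE_const_mul, fourierCoeff, mul_assoc]

lemma cubeE_mul_eq_sum_fourierCoeff (f g : (Fin n → Bool) → ℝ) :
    cubeE n (fun x => f x * g x) = ∑ s, fourierCoeff f s * fourierCoeff g s := by
  simpa [noiseOp_one] using cubeE_noiseOp_mul 1 f g

lemma fourierCoeff_noiseOp (σ : ℝ) (f : (Fin n → Bool) → ℝ) (t : Finset (Fin n)) :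
    fourierCoeff (noiseOp σ f) t = σ ^ t.card * fourierCoeff f t := by
  rw [fourierCoeff, cubeE_noiseOp_mul]
  simp [fourierCoeff_walsh]

lemma cubeE_eq_fourierCoeff_empty (f : (Fin n → Bool) → ℝ) : cubeE n f = fourierCoeff f ∅ := by
  simp [fourierCoeff, walsh]

lemma walsh_cubeFlip (s : Finset (Fin n)) (i : Fin n) (x : Fin n → Bool) :
    walsh s (cubeFlip n i x) = (if i ∈ s then -1 else 1) * walsh s x := by
  have hcoord (j : Fin n) : sgn (cubeFlip n i x j) = (if i = j then -1 else 1) * sgn (x j) := by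
    by_cases h : i = j
    · subst h
      simp only [cubeFlip, Function.update_self, if_true]
      cases x i <;> norm_num [sgn]
    · simp [cubeFlip, Function.update_of_ne (Ne.symm h), h]
  simp only [walsh, hcoord, Finset.prod_mul_distrib, Finset.prod_ite_eq]

lemma fourierCoeff_Dop (i : Fin n) (f : (Fin n → Bool) → ℝ) (s : Finset (Fin n)) :
    fourierCoeff (Dop n i f) s = if i ∈ s then -2 * fourierCoeff f s else 0 := by
  have hflip : cubeE n (fun x => f (cubeFlip n i x) * walsh s x)
      = (if i ∈ s then -1 else 1) * fourierCoeff f s := by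
    rw [← cubeE_comp_cubeFlip i, fourierCoeff, ← cubeE_const_mul]
    simp only [cubeFlip_involutive i _, walsh_cubeFlip]
    congr 1; ext x; ring
  simp only [fourierCoeff, Dop, sub_mul, cubeE_sub] at hflip ⊢
  rw [hflip]
  split_ifs <;> ring

end Fourier

section NoiseStability

lemma nsW_eq (η : ℝ) (a b : Bool) : nsW η a b = (1 + (1 - η) * (sgn a * sgn b)) / 4 := by
  cases a <;> cases b <;> norm_num [nsW, sgn] <;> ring

lemma cubeNS_eq_sum (f : (Fin n → Bool) → ℝ) (η : ℝ) :
    cubeNS n f η = ∑ s ∈ Finset.univ.erase ∅, (1 - η) ^ s.card * fourierCoeff f s ^ 2 := by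
  have hjoint : ∑ x, ∑ y, f x * f y * ∏ i, nsW η (x i) (y i)
      = cubeE n (fun x => noiseOp (1 - η) f x * f x) := by
    have h4 : (4 : ℝ) ^ n = 2 ^ n * 2 ^ n := by rw [← mul_pow]; norm_num
    simp only [nsW_eq, Finset.prod_div_distrib, Finset.prod_const, Finset.card_univ,
      Fintype.card_fin, cubeE, noiseOp, noiseKernel, Finset.sum_div, Finset.sum_mul, h4]
    refine Finset.sum_congr rfl fun x _ => Finset.sum_congr rfl fun y _ => ?_
    field_simp
  rw [cubeNS, hjoint, cubeE_noiseOp_mul, cubeE_eq_fourierCoeff_empty,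
    ← Finset.add_sum_erase _ _ (Finset.mem_univ ∅)]
  simp [sq]

end NoiseStability

section Hypercontractivity

lemma cubeE_abs_noiseOp_le {σ : ℝ} (hσ : |σ| ≤ 1) (f : (Fin n → Bool) → ℝ) :
    cubeE n (fun x => |noiseOp σ f x|) ≤ cubeE n (fun x => |f x|) := by
  calc cubeE n (fun x => |noiseOp σ f x|)
      ≤ cubeE n (fun x => cubeE n (fun y => noiseKernel σ x y * |f y|)) := by
        refine cubeE_mono fun x => (abs_cubeE_le _).trans_eq ?_
        simp only [abs_mul, abs_of_nonneg (noiseKernel_nonneg hσ x _)]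
    _ = cubeE n (fun y => |f y|) := by
        rw [cubeE_comm]
        simp only [← mul_comm |f _|, cubeE_const_mul, noiseKernel_comm σ _ (_ : Fin n → Bool),
          cubeE_noiseKernel, mul_one]

/-- `F (Fin.cons b y) = evenPart F y + sgn b * oddPart F y`. -/
noncomputable def evenPart (F : (Fin (n + 1) → Bool) → ℝ) (y : Fin n → Bool) : ℝ :=
  (F (Fin.cons true y) + F (Fin.cons false y)) / 2

noncomputable def oddPart (F : (Fin (n + 1) → Bool) → ℝ) (y : Fin n → Bool) : ℝ :=
  (F (Fin.cons true y) - F (Fin.cons false y)) / 2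

lemma cubeE_cons (F : (Fin (n + 1) → Bool) → ℝ) : cubeE (n + 1) F = cubeE n (evenPart F) := by
  rw [cubeE, cubeE, ← (Fin.consEquiv fun _ => Bool).sum_comp, Fintype.sum_prod_type,
    Fintype.sum_bool, ← Finset.sum_add_distrib]
  simp only [evenPart, ← Finset.sum_div, div_div, pow_succ']
  rfl

lemma cubeE_sq_cons (F : (Fin (n + 1) → Bool) → ℝ) :
    cubeE (n + 1) (fun x => F x ^ 2)
      = cubeE n (fun y => evenPart F y ^ 2) + cubeE n (fun y => oddPart F y ^ 2) := by
  rw [cubeE_cons, ← cubeE_add]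
  congr 1; ext y
  simp only [evenPart, oddPart]
  ring

lemma noiseKernel_cons (σ : ℝ) (a b : Bool) (x y : Fin n → Bool) :
    noiseKernel σ (Fin.cons a x : Fin (n + 1) → Bool) (Fin.cons b y)
      = (1 + σ * (sgn a * sgn b)) * noiseKernel σ x y := by
  simp only [noiseKernel, Fin.prod_univ_succ, Fin.cons_zero, Fin.cons_succ]

lemma noiseOp_cons (σ : ℝ) (F : (Fin (n + 1) → Bool) → ℝ) (b : Bool) (x : Fin n → Bool) :
    noiseOp σ F (Fin.cons b x)
      = noiseOp σ (evenPart F) x + σ * sgn b * noiseOp σ (oddPart F) x := by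
  simp only [noiseOp, cubeE_cons, ← cubeE_const_mul, ← cubeE_add]
  congr 1; ext y
  simp only [evenPart, oddPart, noiseKernel_cons, sgn, if_true, Bool.false_eq_true, if_false]
  ring

lemma cubeE_noiseOp_pow_four_cons (σ : ℝ) (F : (Fin (n + 1) → Bool) → ℝ) :
    cubeE (n + 1) (fun x => noiseOp σ F x ^ 4)
      = cubeE n (fun y => noiseOp σ (evenPart F) y ^ 4)
        + 6 * σ ^ 2 * cubeE n (fun y => noiseOp σ (evenPart F) y ^ 2 * noiseOp σ (oddPart F) y ^ 2)
        + σ ^ 4 * cubeE n (fun y => noiseOp σ (oddPart F) y ^ 4) := by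
  rw [cubeE_cons]
  simp only [← cubeE_const_mul, ← cubeE_add]
  congr 1; ext y
  simp only [evenPart, noiseOp_cons, sgn, if_true, Bool.false_eq_true, if_false]
  ring

lemma bonami_step {a b m X Y σ : ℝ} (ha : a ≤ X ^ 2) (hb : b ≤ Y ^ 2) (hm : m ^ 2 ≤ a * b)
    (hb0 : 0 ≤ b) (hm0 : 0 ≤ m) (hX : 0 ≤ X) (hY : 0 ≤ Y) (hσ : σ ^ 2 ≤ 1 / 3) :
    a + 6 * σ ^ 2 * m + σ ^ 4 * b ≤ (X + Y) ^ 2 := by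
  have hmXY : m ≤ X * Y := by
    refine (pow_le_pow_iff_left₀ hm0 (mul_nonneg hX hY) two_ne_zero).mp (hm.trans ?_)
    rw [mul_pow]
    exact mul_le_mul ha hb hb0 (sq_nonneg X)
  have h6 : 6 * σ ^ 2 * m ≤ 2 * (X * Y) :=
    mul_le_mul (by linarith) hmXY hm0 zero_le_two
  have h4 : σ ^ 4 * b ≤ Y ^ 2 :=
    (mul_le_of_le_one_left hb0 (by nlinarith [sq_nonneg σ])).trans hb
  nlinarith

theorem cubeE_noiseOp_pow_four_le {σ : ℝ} (hσ : σ ^ 2 ≤ 1 / 3) :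
    ∀ {n : ℕ} (f : (Fin n → Bool) → ℝ),
      cubeE n (fun x => noiseOp σ f x ^ 4) ≤ cubeE n (fun x => f x ^ 2) ^ 2
  | 0, f => by
    simp [cubeE, noiseOp, noiseKernel, ← pow_mul]
  | n + 1, F => by
    have hcs := cubeE_mul_sq_le (fun y => noiseOp σ (evenPart F) y ^ 2)
      (fun y => noiseOp σ (oddPart F) y ^ 2)
    simp only [← pow_mul, Nat.reduceMul] at hcs
    rw [cubeE_noiseOp_pow_four_cons, cubeE_sq_cons]
    exact bonami_step (cubeE_noiseOp_pow_four_le hσ _) (cubeE_noiseOp_pow_four_le hσ _) hcs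
      (cubeE_nonneg fun y => by positivity) (cubeE_nonneg fun y => by positivity)
      (cubeE_nonneg fun y => sq_nonneg _) (cubeE_nonneg fun y => sq_nonneg _) hσ

lemma cubeE_sq_noiseOp_sq_le {δ : ℝ} (hδ : δ ^ 2 ≤ 1 / 3) (g : (Fin n → Bool) → ℝ) :
    cubeE n (fun x => noiseOp δ g x ^ 2) ^ 2
      ≤ cubeE n (fun x => |g x|) ^ 2 * cubeE n (fun x => g x ^ 2) := by
  -- `X = E[g · G]`; Cauchy–Schwarz twice and Bonami for `G` give `X⁴ ≤ ‖g‖₁² ‖g‖₂² X²`.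
  set X := cubeE n (fun x => noiseOp δ g x ^ 2)
  set G := noiseOp δ (noiseOp δ g)
  have hX_eq : X = cubeE n (fun x => G x * g x) := by
    simp only [X, G, sq]
    rw [cubeE_mul_eq_sum_fourierCoeff, cubeE_noiseOp_mul]
    simp only [fourierCoeff_noiseOp]
    exact Finset.sum_congr rfl fun s _ => by ring
  have hX_le : X ≤ cubeE n (fun x => |g x| * |G x|) := by
    rw [hX_eq]
    exact cubeE_mono fun x => by rw [← abs_mul, mul_comm]; exact le_abs_self _
  have hX_nonneg : 0 ≤ X := cubeE_nonneg fun x => sq_nonneg _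
  have hcs1 := cubeE_mul_sq_le_of_nonneg (fun x => abs_nonneg (g x)) (fun x => |G x|)
  have hcs2 := cubeE_mul_sq_le (fun x => |g x|) (fun x => |G x| ^ 2)
  have hbonami : cubeE n (fun x => G x ^ 4) ≤ X ^ 2 := cubeE_noiseOp_pow_four_le hδ _
  simp only [sq_abs, ← pow_mul, Nat.reduceMul] at hcs1 hcs2
  set A := cubeE n (fun x => |g x|)
  set B := cubeE n (fun x => g x ^ 2)
  set Q := cubeE n (fun x => |g x| * G x ^ 2)
  have hA : 0 ≤ A := cubeE_nonneg fun x => abs_nonneg _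
  have hQ : 0 ≤ Q := cubeE_nonneg fun x => by positivity
  have hX4 : X ^ 2 * X ^ 2 ≤ A ^ 2 * B * X ^ 2 := calc
    X ^ 2 * X ^ 2 = (X ^ 2) ^ 2 := by ring
    _ ≤ (A * Q) ^ 2 := pow_le_pow_left₀ (sq_nonneg X)
        ((pow_le_pow_left₀ hX_nonneg hX_le 2).trans hcs1) 2
    _ = A ^ 2 * Q ^ 2 := by ring
    _ ≤ A ^ 2 * (B * X ^ 2) :=
        mul_le_mul_of_nonneg_left (hcs2.trans (mul_le_mul_of_nonneg_left hbonami
          (cubeE_nonneg fun x => sq_nonneg _))) (sq_nonneg A)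
    _ = A ^ 2 * B * X ^ 2 := by ring
  rcases (sq_nonneg X).eq_or_lt with hX0 | hX0
  · rw [← hX0]
    exact mul_nonneg (sq_nonneg A) (cubeE_nonneg fun x => sq_nonneg _)
  · exact le_of_mul_le_mul_right hX4 hX0

end Hypercontractivity

section Influences

lemma cubeE_sq_eq_sum_fourierCoeff_sq (f : (Fin n → Bool) → ℝ) :
    cubeE n (fun x => f x ^ 2) = ∑ s, fourierCoeff f s ^ 2 := by
  simpa [sq] using cubeE_mul_eq_sum_fourierCoeff f f

lemma sum_sum_ite_mem (c : Finset (Fin n) → ℝ) :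
    ∑ i, ∑ s, (if i ∈ s then c s else 0) = ∑ s, (s.card : ℝ) * c s := by
  rw [Finset.sum_comm]
  simp [Finset.sum_ite_mem, Finset.univ_inter]

lemma sum_erase_empty_le_sum_card_mul {c : Finset (Fin n) → ℝ} (hc : ∀ s, 0 ≤ c s) :
    ∑ s ∈ Finset.univ.erase ∅, c s ≤ ∑ s, (s.card : ℝ) * c s := by
  refine (Finset.sum_le_sum fun s hs => ?_).trans
    (Finset.sum_le_sum_of_subset_of_nonneg (Finset.erase_subset _ _) fun s _ _ =>
      mul_nonneg s.card.cast_nonneg (hc s))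
  have hcard : (1 : ℝ) ≤ s.card := by
    exact_mod_cast Finset.card_pos.mpr
      (Finset.nonempty_iff_ne_empty.mpr (Finset.ne_of_mem_erase hs))
  exact le_mul_of_one_le_left (hc s) hcard

lemma sq_sum_mem_pow_card_mul_sq_fourierCoeff_le {τ : ℝ} (h0 : 0 ≤ τ) (h3 : τ ≤ 1 / 3)
    (i : Fin n) (f : (Fin n → Bool) → ℝ) :
    4 * (∑ s, if i ∈ s then τ ^ s.card * fourierCoeff f s ^ 2 else 0) ^ 2
      ≤ cubeE n (fun x => |Dop n i f x|) ^ 2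
        * ∑ s, if i ∈ s then (3 * τ) ^ s.card * fourierCoeff f s ^ 2 else 0 := by
  set δ := √(1 / 3)
  set u := √(3 * τ)
  have hδ : δ ^ 2 = 1 / 3 := Real.sq_sqrt (by norm_num)
  have hu : u ^ 2 = 3 * τ := Real.sq_sqrt (by linarith)
  set g := noiseOp u (Dop n i f)
  have hX : cubeE n (fun x => noiseOp δ g x ^ 2)
      = 4 * ∑ s, if i ∈ s then τ ^ s.card * fourierCoeff f s ^ 2 else 0 := by
    simp only [cubeE_sq_eq_sum_fourierCoeff_sq, g, fourierCoeff_noiseOp, fourierCoeff_Dop,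
      Finset.mul_sum]
    refine Finset.sum_congr rfl fun s _ => ?_
    split_ifs
    · calc (δ ^ s.card * (u ^ s.card * (-2 * fourierCoeff f s))) ^ 2
          = 4 * ((δ ^ 2 * u ^ 2) ^ s.card * fourierCoeff f s ^ 2) := by ring
        _ = 4 * (τ ^ s.card * fourierCoeff f s ^ 2) := by rw [hδ, hu]; ring_nf
    · simp
  have hB : cubeE n (fun x => g x ^ 2)
      = 4 * ∑ s, if i ∈ s then (3 * τ) ^ s.card * fourierCoeff f s ^ 2 else 0 := by
    simp only [cubeE_sq_eq_sum_fourierCoeff_sq, g, fourierCoeff_noiseOp, fourierCoeff_Dop,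
      Finset.mul_sum]
    refine Finset.sum_congr rfl fun s _ => ?_
    split_ifs
    · rw [← hu]; ring
    · simp
  have hu_le : |u| ≤ 1 := by
    rw [abs_of_nonneg (Real.sqrt_nonneg _)]
    exact Real.sqrt_le_one.mpr (by linarith)
  have hA : cubeE n (fun x => |g x|) ≤ cubeE n (fun x => |Dop n i f x|) :=
    cubeE_abs_noiseOp_le hu_le _
  have hlevel := cubeE_sq_noiseOp_sq_le hδ.le g
  rw [hX, hB] at hlevel
  have hA2 := pow_le_pow_left₀ (cubeE_nonneg fun x => abs_nonneg (g x)) hA 2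
  have hQ : 0 ≤ ∑ s, if i ∈ s then (3 * τ) ^ s.card * fourierCoeff f s ^ 2 else 0 :=
    Finset.sum_nonneg fun s _ => by split_ifs <;> positivity
  nlinarith

end Influences

lemma natCast_mul_pow_le_one {x : ℝ} (h0 : 0 ≤ x) (h2 : x ≤ 1 / 2) (k : ℕ) :
    (k : ℝ) * x ^ k ≤ 1 := by
  calc (k : ℝ) * x ^ k ≤ 2 ^ k * (1 / 2) ^ k :=
        mul_le_mul (by exact_mod_cast k.lt_two_pow_self.le) (pow_le_pow_left₀ h0 h2 k)
          (by positivity) (by positivity)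
    _ = 1 := by rw [← mul_pow]; norm_num

lemma sq_sum_pow_card_mul_sq_fourierCoeff_le {τ : ℝ} (h0 : 0 ≤ τ) (h6 : τ ≤ 1 / 6)
    (f : (Fin n → Bool) → ℝ) (hf : ∑ s, fourierCoeff f s ^ 2 ≤ 1) :
    (∑ s ∈ Finset.univ.erase ∅, τ ^ s.card * fourierCoeff f s ^ 2) ^ 2
      ≤ 1 / 4 * ∑ i, cubeE n (fun x => |Dop n i f x|) ^ 2 := by
  set P : Fin n → ℝ := fun i => ∑ s, if i ∈ s then τ ^ s.card * fourierCoeff f s ^ 2 else 0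
  set Q : Fin n → ℝ := fun i => ∑ s, if i ∈ s then (3 * τ) ^ s.card * fourierCoeff f s ^ 2 else 0
  have hP_nonneg : 0 ≤ ∑ s ∈ Finset.univ.erase ∅, τ ^ s.card * fourierCoeff f s ^ 2 :=
    Finset.sum_nonneg fun s _ => by positivity
  have hP : ∑ s ∈ Finset.univ.erase ∅, τ ^ s.card * fourierCoeff f s ^ 2 ≤ ∑ i, P i := by
    rw [sum_sum_ite_mem]
    exact sum_erase_empty_le_sum_card_mul fun s => by positivity
  have hQ : ∑ i, Q i ≤ 1 := by
    rw [sum_sum_ite_mem]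
    refine (Finset.sum_le_sum fun s _ => ?_).trans (by simpa using hf)
    rw [← mul_assoc]
    exact mul_le_of_le_one_left (sq_nonneg _)
      (natCast_mul_pow_le_one (by positivity) (by linarith) _)
  have hPQ : (∑ i, P i) ^ 2 ≤ (∑ i, cubeE n (fun x => |Dop n i f x|) ^ 2 / 4) * ∑ i, Q i :=
    Finset.sum_sq_le_sum_mul_sum_of_sq_le_mul _ (fun i _ => by positivity)
      (fun i _ => Finset.sum_nonneg fun s _ => by split_ifs <;> positivity)
      (fun i _ => by
        have := sq_sum_mem_pow_card_mul_sq_fourierCoeff_le h0 (by linarith) i f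
        simp only [P, Q]
        linarith)
  calc (∑ s ∈ Finset.univ.erase ∅, τ ^ s.card * fourierCoeff f s ^ 2) ^ 2
      ≤ (∑ i, P i) ^ 2 := pow_le_pow_left₀ hP_nonneg hP 2
    _ ≤ (∑ i, cubeE n (fun x => |Dop n i f x|) ^ 2 / 4) * 1 :=
        hPQ.trans (mul_le_mul_of_nonneg_left hQ (Finset.sum_nonneg fun i _ => by positivity))
    _ = 1 / 4 * ∑ i, cubeE n (fun x => |Dop n i f x|) ^ 2 := by
        rw [mul_one, Finset.mul_sum]
        exact Finset.sum_congr rfl fun i _ => by ring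

lemma sum_pow_mul_le_rpow {ι : Type*} (s : Finset ι) {a : ι → ℝ} (ha : ∀ i, 0 ≤ a i)
    (hsum : ∑ i ∈ s, a i ≤ 1) (k : ι → ℕ) {ρ p : ℝ} (hρ : 0 ≤ ρ) (hp : 1 ≤ p) :
    ∑ i ∈ s, ρ ^ k i * a i ≤ (∑ i ∈ s, (ρ ^ p) ^ k i * a i) ^ p⁻¹ := by
  have hholder := Real.inner_le_weight_mul_Lp_of_nonneg s hp a (fun i => ρ ^ k i) ha
    fun i => by positivity
  have hweight : (∑ i ∈ s, a i) ^ (1 - p⁻¹) ≤ 1 :=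
    Real.rpow_le_one (Finset.sum_nonneg fun i _ => ha i) hsum
      (sub_nonneg.mpr (inv_le_one_of_one_le₀ hp))
  simp only [Real.rpow_pow_comm hρ, mul_comm (a _)] at hholder ⊢
  exact hholder.trans (mul_le_of_le_one_left
    (Real.rpow_nonneg (Finset.sum_nonneg fun i _ => mul_nonneg (by positivity) (ha i)) _) hweight)

lemma one_sub_rpow_two_div_le {ε : ℝ} (h0 : 0 < ε) (h1 : ε ≤ 1) : (1 - ε) ^ (2 / ε) ≤ 1 / 6 := by
  have hexp : 6 ≤ Real.exp 2 := by
    have := Real.exp_one_gt_d9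
    rw [show (2 : ℝ) = 1 + 1 by norm_num, Real.exp_add]
    nlinarith
  calc (1 - ε) ^ (2 / ε) ≤ Real.exp (-ε) ^ (2 / ε) :=
        Real.rpow_le_rpow (by linarith) (Real.one_sub_le_exp_neg ε) (by positivity)
    _ = (Real.exp 2)⁻¹ := by rw [← Real.exp_mul, ← Real.exp_neg]; field_simp
    _ ≤ 1 / 6 := by rw [one_div]; exact inv_anti₀ (by norm_num) hexp

end BooleanCube

open BooleanCube

theorem stmt6_general (n : ℕ) (f : (Fin n → Bool) → ℝ)
    (hf : (cubeE n fun x => f x ^ 2) ^ ((1 : ℝ) / 2) = 1)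
    (ε : ℝ) (hε : ε ∈ Set.Ioo (0 : ℝ) 1) :
    cubeNS n f ε ≤
      7 * ((1 / 4) * ∑ i : Fin n, (cubeE n fun x => |Dop n i f x|) ^ 2) ^ (ε / 4) := by
  obtain ⟨hε0, hε1⟩ := hε
  set τ := (1 - ε) ^ (2 / ε)
  have hτ : 0 ≤ τ := Real.rpow_nonneg (by linarith) _
  have hparseval : ∑ s, fourierCoeff f s ^ 2 = 1 := by
    rw [← cubeE_sq_eq_sum_fourierCoeff_sq, ← Real.sqrt_eq_one, Real.sqrt_eq_rpow, hf]
  have hweights : ∑ s ∈ Finset.univ.erase ∅, fourierCoeff f s ^ 2 ≤ 1 :=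
    (Finset.sum_le_sum_of_subset_of_nonneg (Finset.erase_subset _ _) fun s _ _ =>
      sq_nonneg _).trans hparseval.le
  have htail_nonneg : 0 ≤ ∑ s ∈ Finset.univ.erase ∅, τ ^ s.card * fourierCoeff f s ^ 2 :=
    Finset.sum_nonneg fun s _ => by positivity
  rw [cubeNS_eq_sum]
  calc ∑ s ∈ Finset.univ.erase ∅, (1 - ε) ^ s.card * fourierCoeff f s ^ 2
      ≤ (∑ s ∈ Finset.univ.erase ∅, τ ^ s.card * fourierCoeff f s ^ 2) ^ (2 / ε)⁻¹ :=
        sum_pow_mul_le_rpow _ (fun s => sq_nonneg _) hweights _ (by linarith)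
          (by rw [le_div_iff₀ hε0]; linarith)
    _ = ((∑ s ∈ Finset.univ.erase ∅, τ ^ s.card * fourierCoeff f s ^ 2) ^ 2) ^ (ε / 4) := by
        rw [← Real.rpow_natCast, ← Real.rpow_mul htail_nonneg]
        congr 1; field_simp; norm_num
    _ ≤ ((1 / 4) * ∑ i : Fin n, (cubeE n fun x => |Dop n i f x|) ^ 2) ^ (ε / 4) :=
        Real.rpow_le_rpow (by positivity)
          (sq_sum_pow_card_mul_sq_fourierCoeff_le hτ
            (one_sub_rpow_two_div_le hε0 hε1.le) f hparseval.le) (by positivity)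
    _ ≤ 7 * ((1 / 4) * ∑ i : Fin n, (cubeE n fun x => |Dop n i f x|) ^ 2) ^ (ε / 4) :=
        le_mul_of_one_le_left (by positivity) (by norm_num)

/-- for every `n ≥ 1`, every `f` with `‖f‖₂ = 1` and every `ε ∈ (0,1)`,
`VAR(f,ε) ≤ 7 · W(f)^{ε/4}` where `W(f) = (1/4) ∑ᵢ ‖Dᵢ f‖₁²`. -/
theorem stmt6 (n : ℕ) (hn : 1 ≤ n) (f : (Fin n → Bool) → ℝ)
    (hf : (cubeE n fun x => f x ^ 2) ^ ((1 : ℝ) / 2) = 1)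
    (ε : ℝ) (hε : ε ∈ Set.Ioo (0 : ℝ) 1) :
    cubeNS n f ε ≤
      7 * ((1 / 4) * ∑ i : Fin n, (cubeE n fun x => |Dop n i f x|) ^ 2) ^ (ε / 4) :=
  stmt6_general n f hf ε hε
end

section
/- There exists a universal constant C > 0 with the following property. Let G be a finite group and S ⊆ G a symmetric generating set closed under conjugation, with kernel K(g,h) = |S|^{−1}·1_S(g h^{−1}), L = K − Id, P_t = exp(tL), Dirichlet form E(f,f) = ∫_G f(−Lf) dμ, where μ is the uniform probability measure on G. Suppose λ > 0 satisfies λ Var_μ(g) ≤ E(g,g) for all g, and ρ > 0 satisfies ρ Ent_μ(g²) ≤ 2E(g,g) for all g. Then for every f : G → ℝ and every t ≥ 0, Var_μ(P_t f) ≤ (C/λ) · (Σ_{s ∈ S} ‖D_s f‖_{L¹(μ)}²)^{(1−e^{−ρt})/2} · (Σ_{s ∈ S} ‖D_s f‖_{L²(μ)}²)^{(1+e^{−ρt})/2}. -/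
open Finset

/-- Expectation with respect to the uniform probability measure on a finite group. -/
noncomputable def uE (G : Type) [Fintype G] (f : G → ℝ) : ℝ :=
  (∑ g : G, f g) / Fintype.card G

/-- Variance with respect to the uniform probability measure. -/
noncomputable def uVar (G : Type) [Fintype G] (f : G → ℝ) : ℝ :=
  uE G (fun g => f g ^ 2) - (uE G f) ^ 2

/-- Entropy with respect to the uniform probability measure. -/
noncomputable def uEnt (G : Type) [Fintype G] (h : G → ℝ) : ℝ :=
  uE G (fun g => h g * Real.log (h g)) - uE G h * Real.log (uE G h)

/-- The Markov averaging operator `K f (g) = |S|⁻¹ ∑_{s ∈ S} f (s⁻¹ g)` associated to the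
kernel `K(g,h) = |S|⁻¹ 1_S(g h⁻¹)` of the Cayley graph of `(G, S)`. -/
noncomputable def Kop (G : Type) [Group G] [Fintype G] (S : Finset G)
    (f : G → ℝ) (g : G) : ℝ :=
  (S.card : ℝ)⁻¹ * ∑ s ∈ S, f (s⁻¹ * g)

/-- The generator `L = K - Id` as a linear operator on functions on `G`. -/
noncomputable def Lcay (G : Type) [Group G] [Fintype G] (S : Finset G) :
    (G → ℝ) →ₗ[ℝ] (G → ℝ) where
  toFun f := fun g => Kop G S f g - f g
  map_add' f g := by
    funext x
    simp only [Pi.add_apply, Kop]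
    rw [Finset.sum_add_distrib]
    ring
  map_smul' c f := by
    funext x
    simp only [Pi.smul_apply, smul_eq_mul, RingHom.id_apply, Kop, Finset.mul_sum]
    ring_nf
    rw [Finset.mul_sum]
    exact congrArg _ (Finset.sum_congr rfl fun s _ => by ring)

/-- The semigroup `P_t = exp(tL)`. -/
noncomputable def Pcay (G : Type) [Group G] [Fintype G] (S : Finset G) (t : ℝ)
    (f : G → ℝ) : G → ℝ :=
  NormedSpace.exp (t • (Lcay G S).toContinuousLinearMap) f

/-- The Dirichlet form `E(f,f) = ∫_G f (-L f) dμ`. -/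
noncomputable def Ecay (G : Type) [Group G] [Fintype G] (S : Finset G) (f : G → ℝ) : ℝ :=
  uE G (fun g => f g * (f g - Kop G S f g))

/-!
By the spectral gap, `λ Var(P_t f) ≤ E(P_t f)`. Since `S` is invariant under conjugation by the
whole group, `E(h) = (2|S|)⁻¹ ∑_{s ∈ S} ‖D_s h‖₂²`; and `D_s` commutes with `P_t`, because `P_t` is
built from left translations while `D_s` uses a right translation. So it suffices to bound
`‖P_t g‖₂²` for `g = D_s f`.

Along the semigroup, `N(t) = ‖P_t g‖₂²` satisfies `N' = -2 E(P_t g)`. The log-Sobolev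
inequality, the entropy bound `Ent(h²) ≥ ‖h‖₂² log (‖h‖₂² / ‖h‖₁²)` and the `L¹`-contractivity
of the positive, mean-preserving operator `P_t` give `N' ≤ -ρ N log (N / ‖g‖₁²)`, and integrating
this yields `‖P_t g‖₂² ≤ (‖g‖₁²)^(1 - e^{-ρt}) (‖g‖₂²)^(e^{-ρt})`. As `‖g‖₁ ≤ ‖g‖₂`, this is at
most `(‖g‖₁²)^((1 - e^{-ρt})/2) (‖g‖₂²)^((1 + e^{-ρt})/2)`, and Hölder's inequality over
`s ∈ S` gives the theorem with `C = 1`.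
-/

open Real

namespace Real

lemma sum_rpow_mul_rpow_le {ι : Type*} (s : Finset ι) {a b : ι → ℝ}
    (ha : ∀ i ∈ s, 0 ≤ a i) (hb : ∀ i ∈ s, 0 ≤ b i) {α β : ℝ} (hα : 0 ≤ α) (hβ : 0 ≤ β)
    (hαβ : α + β = 1) :
    ∑ i ∈ s, a i ^ α * b i ^ β ≤ (∑ i ∈ s, a i) ^ α * (∑ i ∈ s, b i) ^ β := by
  rcases hα.eq_or_lt with rfl | hα
  · simp [show β = 1 by linarith]
  rcases hβ.eq_or_lt with rfl | hβ
  · simp [show α = 1 by linarith]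
  have hconj : α⁻¹.HolderConjugate β⁻¹ :=
    holderConjugate_iff.2 ⟨(one_lt_inv₀ hα).2 (by linarith), by simpa using hαβ⟩
  have key := inner_le_Lp_mul_Lq_of_nonneg s hconj
    (fun i hi => rpow_nonneg (ha i hi) α) (fun i hi => rpow_nonneg (hb i hi) β)
  simp only [one_div, inv_inv] at key
  convert key using 3 <;> refine Finset.sum_congr rfl fun i hi => ?_
  · rw [← rpow_mul (ha i hi), mul_inv_cancel₀ hα.ne', rpow_one]
  · rw [← rpow_mul (hb i hi), mul_inv_cancel₀ hβ.ne', rpow_one]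

lemma rpow_mul_rpow_le_rpow_mul_rpow {a b η : ℝ} (ha : 0 ≤ a) (hab : a ≤ b) (hη₀ : 0 ≤ η)
    (hη₁ : η ≤ 1) :
    a ^ (1 - η) * b ^ η ≤ a ^ ((1 - η) / 2) * b ^ ((1 + η) / 2) := by
  have hb : 0 ≤ b := ha.trans hab
  have hθ : 0 ≤ (1 - η) / 2 := by linarith
  calc a ^ (1 - η) * b ^ η = a ^ ((1 - η) / 2) * (a ^ ((1 - η) / 2) * b ^ η) := by
        rw [← mul_assoc, ← rpow_add_of_nonneg ha hθ hθ]; ring_nf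
    _ ≤ a ^ ((1 - η) / 2) * (b ^ ((1 - η) / 2) * b ^ η) := by gcongr
    _ = a ^ ((1 - η) / 2) * b ^ ((1 + η) / 2) := by
        rw [← rpow_add_of_nonneg hb hθ hη₀]; ring_nf

lemma sq_mul_log_sub_log_le {a k : ℝ} (ha : 0 ≤ a) (hk : 0 < k) :
    a ^ 2 * (log k - log a) ≤ k * a - a ^ 2 := by
  rcases ha.eq_or_lt with rfl | ha
  · simp
  calc a ^ 2 * (log k - log a) = a ^ 2 * log (k / a) := by rw [log_div hk.ne' ha.ne']
    _ ≤ a ^ 2 * (k / a - 1) :=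
        mul_le_mul_of_nonneg_left (log_le_sub_one_of_pos (by positivity)) (by positivity)
    _ = k * a - a ^ 2 := by field_simp

end Real

lemma le_rpow_mul_rpow_of_hasDerivAt_le {N N' : ℝ → ℝ} {ρ a t : ℝ} (ha : 0 < a)
    (hN : ∀ v, 0 < N v) (hN' : ∀ v, HasDerivAt N (N' v) v)
    (hle : ∀ v, 0 ≤ v → N' v ≤ -ρ * N v * (log (N v) - log a)) (ht : 0 ≤ t) :
    N t ≤ a ^ (1 - exp (-ρ * t)) * N 0 ^ exp (-ρ * t) := by
  -- The differential inequality says exactly that `w` is nonincreasing on `[0, ∞)`.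
  set w : ℝ → ℝ := fun v => exp (ρ * v) * (log (N v) - log a)
  have hexp : ∀ v, HasDerivAt (fun v => exp (ρ * v)) (exp (ρ * v) * ρ) v := fun v => by
    simpa using ((hasDerivAt_id v).const_mul ρ).exp
  have hw : ∀ v, HasDerivAt w
      (exp (ρ * v) * ρ * (log (N v) - log a) + exp (ρ * v) * (N' v / N v)) v := fun v =>
    (hexp v).mul (((hN' v).log (hN v).ne').sub_const _)
  have hanti : AntitoneOn w (Set.Ici 0) := by
    refine antitoneOn_of_hasDerivWithinAt_nonpos (convex_Ici 0)
      (fun v _ => (hw v).continuousAt.continuousWithinAt) (fun v _ => (hw v).hasDerivWithinAt)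
      fun v hv => ?_
    rw [interior_Ici] at hv
    have h : N' v / N v ≤ -ρ * (log (N v) - log a) :=
      (div_le_iff₀ (hN v)).2 (by nlinarith [hle v hv.le])
    calc _ = exp (ρ * v) * (N' v / N v + ρ * (log (N v) - log a)) := by ring
      _ ≤ 0 := mul_nonpos_of_nonneg_of_nonpos (exp_pos _).le (by linarith)
  have hwt : exp (ρ * t) * (log (N t) - log a) ≤ log (N 0) - log a := by
    simpa [w] using hanti Set.self_mem_Ici ht ht
  have hlog : log (N t) ≤ log a * (1 - exp (-ρ * t)) + log (N 0) * exp (-ρ * t) := by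
    have := mul_le_mul_of_nonneg_left hwt (exp_pos (-ρ * t)).le
    rw [← mul_assoc, ← exp_add, show -ρ * t + ρ * t = 0 by ring, exp_zero, one_mul] at this
    linarith
  calc N t = exp (log (N t)) := (exp_log (hN t)).symm
    _ ≤ exp (log a * (1 - exp (-ρ * t)) + log (N 0) * exp (-ρ * t)) := exp_le_exp.2 hlog
    _ = _ := by rw [exp_add, ← rpow_def_of_pos ha, ← rpow_def_of_pos (hN 0)]

lemma ContinuousLinearMap.injective_exp {E : Type*} [NormedAddCommGroup E] [NormedSpace ℝ E]
    [CompleteSpace E] (T : E →L[ℝ] E) : Function.Injective ⇑(NormedSpace.exp T) := by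
  -- `exp_add_of_commute` is stated for `ℚ`-algebras.
  let : NormedAlgebra ℚ (E →L[ℝ] E) := .restrictScalars ℚ ℝ _
  have h : NormedSpace.exp (-T) * NormedSpace.exp T = 1 := by
    rw [← NormedSpace.exp_add_of_commute (Commute.refl T).neg_left, neg_add_cancel,
      NormedSpace.exp_zero]
  exact Function.LeftInverse.injective (g := ⇑(NormedSpace.exp (-T))) fun f => congr($h f)

lemma ContinuousLinearMap.hasDerivAt_exp_smul_apply {E : Type*} [NormedAddCommGroup E]
    [NormedSpace ℝ E] [CompleteSpace E] (T : E →L[ℝ] E) (f : E) (t : ℝ) :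
    HasDerivAt (fun u : ℝ => NormedSpace.exp (u • T) f) (T (NormedSpace.exp (t • T) f)) t := by
  simpa using (hasDerivAt_exp_smul_const' T t).clm_apply (hasDerivAt_const t f)

lemma ContinuousLinearMap.exp_smul_apply_nonneg {ι : Type*} [Fintype ι]
    (K : (ι → ℝ) →L[ℝ] (ι → ℝ)) (hK : ∀ f, 0 ≤ f → 0 ≤ K f) {t : ℝ} (ht : 0 ≤ t)
    {f : ι → ℝ} (hf : 0 ≤ f) : 0 ≤ NormedSpace.exp (t • K) f := by
  have hpow : ∀ n : ℕ, 0 ≤ ((t • K) ^ n) f := fun n => by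
    induction n with
    | zero => simpa using hf
    | succ n ih =>
      rw [pow_succ']
      exact smul_nonneg ht (hK _ ih)
  have hsum : HasSum (fun n : ℕ => ((n.factorial : ℝ)⁻¹ • (t • K) ^ n) f)
      (NormedSpace.exp (t • K) f) :=
    (NormedSpace.exp_series_hasSum_exp' (𝕂 := ℝ) (t • K)).mapL (ContinuousLinearMap.apply ℝ _ f)
  refine hsum.nonneg fun n => ?_
  rw [_root_.smul_apply]
  exact smul_nonneg (by positivity) (hpow n)

section UniformExpectation

variable {G : Type} [Fintype G]

lemma uE_mono {f g : G → ℝ} (h : ∀ x, f x ≤ g x) : uE G f ≤ uE G g :=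
  div_le_div_of_nonneg_right (Finset.sum_le_sum fun x _ => h x) (Nat.cast_nonneg _)

lemma uE_nonneg {f : G → ℝ} (hf : ∀ x, 0 ≤ f x) : 0 ≤ uE G f :=
  div_nonneg (Finset.sum_nonneg fun x _ => hf x) (Nat.cast_nonneg _)

lemma uE_pos {f : G → ℝ} (hf : ∀ x, 0 ≤ f x) {x : G} (hx : 0 < f x) : 0 < uE G f :=
  div_pos (Finset.sum_pos' (fun y _ => hf y) ⟨x, Finset.mem_univ x, hx⟩)
    (Nat.cast_pos.2 (Fintype.card_pos_iff.2 ⟨x⟩))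

lemma uE_abs_pos {h : G → ℝ} (hh : h ≠ 0) : 0 < uE G (fun x => |h x|) :=
  let ⟨_, hx⟩ := Function.ne_iff.1 hh
  uE_pos (fun _ => abs_nonneg _) (abs_pos.2 hx)

lemma uE_sq_pos {h : G → ℝ} (hh : h ≠ 0) : 0 < uE G (fun x => h x ^ 2) :=
  let ⟨_, hx⟩ := Function.ne_iff.1 hh
  uE_pos (fun _ => sq_nonneg _) (pow_pos (abs_pos.2 hx) 2 |>.trans_eq (sq_abs _))

lemma uE_add_mul (a b : ℝ) (f g : G → ℝ) :
    uE G (fun x => a * f x + b * g x) = a * uE G f + b * uE G g := by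
  simp only [uE, Finset.sum_add_distrib, ← Finset.mul_sum]
  ring

lemma uE_sub (f g : G → ℝ) : uE G (fun x => f x - g x) = uE G f - uE G g := by
  simp only [uE, Finset.sum_sub_distrib, sub_div]

lemma uE_const_mul (a : ℝ) (f : G → ℝ) : uE G (fun x => a * f x) = a * uE G f := by
  simp only [uE, ← Finset.mul_sum, mul_div_assoc]

lemma uE_sum {ι : Type*} (s : Finset ι) (F : ι → G → ℝ) :
    uE G (fun x => ∑ i ∈ s, F i x) = ∑ i ∈ s, uE G (F i) := by
  simp only [uE, Finset.sum_div]
  exact Finset.sum_comm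

lemma HasDerivAt.uE {F : ℝ → G → ℝ} {F' : G → ℝ} {t : ℝ} (h : HasDerivAt F F' t) :
    HasDerivAt (fun u => uE G (F u)) (uE G F') t :=
  (HasDerivAt.fun_sum fun x _ => hasDerivAt_pi.1 h x).div_const _

lemma uVar_of_subsingleton [Subsingleton G] (f : G → ℝ) : uVar G f = 0 := by
  rcases isEmpty_or_nonempty G with _ | ⟨⟨x⟩⟩
  · simp [uVar, uE]
  · have : Unique G := uniqueOfSubsingleton x
    simp [uVar, uE]

lemma sq_uE_le_uE_sq (f : G → ℝ) : uE G f ^ 2 ≤ uE G (fun x => f x ^ 2) := by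
  rcases isEmpty_or_nonempty G with _ | _
  · simp [uE]
  have hc : (0 : ℝ) < Fintype.card G := Nat.cast_pos.2 Fintype.card_pos
  have h : (∑ x, f x) ^ 2 ≤ Fintype.card G * ∑ x, f x ^ 2 := by
    simpa using sq_sum_le_card_mul_sum_sq (s := Finset.univ) (f := f)
  rw [uE, uE, div_pow, div_le_div_iff₀ (by positivity) hc]
  nlinarith

lemma sq_uE_abs_le_uE_sq (f : G → ℝ) : uE G (fun x => |f x|) ^ 2 ≤ uE G (fun x => f x ^ 2) := by
  simpa using sq_uE_le_uE_sq (fun x => |f x|)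

lemma uE_sq_mul_log_sub_le_uEnt {h : G → ℝ} (hh : h ≠ 0) :
    uE G (fun x => h x ^ 2) *
        (log (uE G fun x => h x ^ 2) - log (uE G (fun x => |h x|) ^ 2)) ≤
      uEnt G (fun x => h x ^ 2) := by
  have hN := uE_sq_pos hh
  have hM := uE_abs_pos hh
  set N := uE G fun x => h x ^ 2
  set M := uE G fun x => |h x|
  have hpoint : ∀ x, (2 * (log N - log M) + 2) * h x ^ 2 + (-2 * N / M) * |h x| ≤
      h x ^ 2 * log (h x ^ 2) := fun x => by
    have := sq_mul_log_sub_log_le (abs_nonneg (h x)) (div_pos hN hM)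
    rw [log_div hN.ne' hM.ne', sq_abs] at this
    rw [← sq_abs, log_pow, sq_abs]
    push_cast
    linear_combination 2 * this
  have hmean : (2 * (log N - log M) + 2) * N + -2 * N / M * M ≤
      uE G fun x => h x ^ 2 * log (h x ^ 2) := (uE_add_mul _ _ _ _).symm.trans_le (uE_mono hpoint)
  rw [div_mul_cancel₀ _ hM.ne'] at hmean
  rw [uEnt, log_pow]
  push_cast
  linarith

end UniformExpectation

section CayleySemigroup

variable {G : Type} [Group G] [Fintype G] (S : Finset G)

lemma uE_comp_mul_right (f : G → ℝ) (s : G) : uE G (fun x => f (x * s)) = uE G f := by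
  rw [uE, uE, Fintype.sum_equiv (Equiv.mulRight s) (fun x => f (x * s)) f fun _ => rfl]

lemma uE_Kop (hS : S.Nonempty) (f : G → ℝ) : uE G (Kop G S f) = uE G f := by
  have hS' : (S.card : ℝ) ≠ 0 := Nat.cast_ne_zero.2 hS.card_ne_zero
  have htransl : ∀ s : G, ∑ x, f (s⁻¹ * x) = ∑ x, f x := fun s =>
    Fintype.sum_equiv (Equiv.mulLeft s⁻¹) _ f fun _ => rfl
  simp only [uE, Kop, ← Finset.mul_sum]
  rw [Finset.sum_comm, Finset.sum_congr rfl fun s _ => htransl s, Finset.sum_const, nsmul_eq_mul,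
    inv_mul_cancel_left₀ hS']

lemma uE_Lcay (hS : S.Nonempty) (f : G → ℝ) : uE G (Lcay G S f) = 0 := by
  change uE G (fun x => Kop G S f x - f x) = 0
  rw [uE_sub, uE_Kop S hS, sub_self]

lemma Kop_nonneg {f : G → ℝ} (hf : 0 ≤ f) : 0 ≤ Kop G S f := fun x =>
  mul_nonneg (by positivity) (Finset.sum_nonneg fun s _ => hf _)

lemma Lcay_add_one_apply (f : G → ℝ) :
    ((Lcay G S).toContinuousLinearMap + 1) f = Kop G S f := by
  ext x
  simp [Lcay]

lemma Pcay_eq_exp_smul (t : ℝ) (f : G → ℝ) :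
    Pcay G S t f =
      Real.exp (-t) • NormedSpace.exp (t • ((Lcay G S).toContinuousLinearMap + 1)) f := by
  -- `exp_add_of_commute` is stated for `ℚ`-algebras.
  let : NormedAlgebra ℚ ((G → ℝ) →L[ℝ] (G → ℝ)) := .restrictScalars ℚ ℝ _
  have hsplit : t • (Lcay G S).toContinuousLinearMap =
      algebraMap ℝ _ (-t) + t • ((Lcay G S).toContinuousLinearMap + 1) := by
    rw [Algebra.algebraMap_eq_smul_one]
    module
  rw [Pcay, hsplit, NormedSpace.exp_add_of_commute (Algebra.commutes _ _),
    ← NormedSpace.algebraMap_exp_comm, ← Real.exp_eq_exp_ℝ, Algebra.algebraMap_eq_smul_one]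
  rfl

lemma Pcay_nonneg {t : ℝ} (ht : 0 ≤ t) {f : G → ℝ} (hf : 0 ≤ f) : 0 ≤ Pcay G S t f := by
  rw [Pcay_eq_exp_smul]
  refine smul_nonneg (Real.exp_nonneg _) ?_
  exact ContinuousLinearMap.exp_smul_apply_nonneg _
    (fun g hg => (Lcay_add_one_apply S g).symm ▸ Kop_nonneg S hg) ht hf

lemma abs_Pcay_le {t : ℝ} (ht : 0 ≤ t) (f : G → ℝ) : |Pcay G S t f| ≤ Pcay G S t |f| := by
  have hsub := Pcay_nonneg S ht (sub_nonneg.2 (le_abs_self f))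
  have hadd := Pcay_nonneg S ht (neg_le_iff_add_nonneg'.1 (neg_le_abs f))
  simp only [Pcay, map_sub, map_add] at hsub hadd
  exact abs_le'.2 ⟨sub_nonneg.1 hsub, neg_le_iff_add_nonneg'.2 hadd⟩

lemma Pcay_zero (f : G → ℝ) : Pcay G S 0 f = f := by
  simp [Pcay]

lemma hasDerivAt_Pcay (f : G → ℝ) (t : ℝ) :
    HasDerivAt (fun u => Pcay G S u f) (Lcay G S (Pcay G S t f)) t :=
  ContinuousLinearMap.hasDerivAt_exp_smul_apply _ f t

lemma uE_Pcay (hS : S.Nonempty) (t : ℝ) (f : G → ℝ) : uE G (Pcay G S t f) = uE G f := by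
  have hderiv : ∀ u, HasDerivAt (fun u => uE G (Pcay G S u f)) 0 u := fun u =>
    uE_Lcay S hS (Pcay G S u f) ▸ (hasDerivAt_Pcay S f u).uE
  have := is_const_of_deriv_eq_zero (fun u => (hderiv u).differentiableAt)
    (fun u => (hderiv u).deriv) t 0
  rwa [Pcay_zero] at this

lemma uE_abs_Pcay_le (hS : S.Nonempty) {t : ℝ} (ht : 0 ≤ t) (f : G → ℝ) :
    uE G (fun x => |Pcay G S t f x|) ≤ uE G (fun x => |f x|) :=
  (uE_mono fun x => abs_Pcay_le S ht f x).trans_eq (uE_Pcay S hS t |f|)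

lemma Pcay_injective (t : ℝ) : Function.Injective (Pcay G S t) :=
  ContinuousLinearMap.injective_exp _

lemma Pcay_sub (t : ℝ) (f g : G → ℝ) : Pcay G S t (f - g) = Pcay G S t f - Pcay G S t g :=
  map_sub _ f g

lemma Pcay_comp_mul_right (t : ℝ) (f : G → ℝ) (s : G) :
    Pcay G S t (fun x => f (x * s)) = fun x => Pcay G S t f (x * s) := by
  let R : (G → ℝ) →L[ℝ] (G → ℝ) :=
    ContinuousLinearMap.pi fun x => ContinuousLinearMap.proj (x * s)
  have hcomm : Commute (Lcay G S).toContinuousLinearMap R := by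
    ext f x
    simp [R, Lcay, Kop, mul_assoc]
  exact congr($(((hcomm.smul_left t).exp_left).eq) f)

lemma Pcay_sub_comp_mul_right (t : ℝ) (f : G → ℝ) (s : G) :
    Pcay G S t (fun x => f (x * s) - f x) = fun x => Pcay G S t f (x * s) - Pcay G S t f x := by
  change Pcay G S t ((fun x => f (x * s)) - f) = _
  rw [Pcay_sub, Pcay_comp_mul_right]
  rfl

end CayleySemigroup

section Conjugation

variable {G : Type} [Group G]

lemma conj_mem_of_closure_eq_top {S : Set G} (hsym : ∀ s ∈ S, s⁻¹ ∈ S)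
    (hgen : Subgroup.closure S = ⊤) (hconj : ∀ s ∈ S, ∀ u ∈ S, s * u * s⁻¹ ∈ S) (g : G) :
    ∀ u ∈ S, g * u * g⁻¹ ∈ S := by
  have hg : g ∈ Subgroup.closure S := hgen ▸ Subgroup.mem_top g
  induction hg using Subgroup.closure_induction'' with
  | mem x hx => exact hconj x hx
  | inv_mem x hx => simpa using hconj x⁻¹ (hsym x hx)
  | one => simp
  | mul x y _ _ hx hy => exact fun u hu => by simpa [mul_assoc] using hx _ (hy u hu)

lemma sum_comp_mul_right_eq_sum_comp_inv_mul {β : Type*} [AddCommMonoid β] (S : Finset G)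
    (hcl : ∀ g : G, ∀ u ∈ S, g * u * g⁻¹ ∈ S) (hsym : ∀ s ∈ S, s⁻¹ ∈ S) (f : G → β) (x : G) :
    ∑ s ∈ S, f (x * s) = ∑ s ∈ S, f (s⁻¹ * x) :=
  Finset.sum_nbij' (fun s => x * s⁻¹ * x⁻¹) (fun s => x⁻¹ * s⁻¹ * x)
    (fun s hs => hcl x _ (hsym s hs)) (fun s hs => by simpa using hcl x⁻¹ _ (hsym s hs))
    (fun s _ => by group) (fun s _ => by group) (fun s _ => by group)

end Conjugation

section Dirichlet

variable {G : Type} [Group G] [Fintype G] (S : Finset G)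

lemma sum_uE_sq_sub_eq (hcl : ∀ g : G, ∀ u ∈ S, g * u * g⁻¹ ∈ S) (hsym : ∀ s ∈ S, s⁻¹ ∈ S)
    (f : G → ℝ) :
    ∑ s ∈ S, uE G (fun x => (f (x * s) - f x) ^ 2) = 2 * S.card * Ecay G S f := by
  rcases S.eq_empty_or_nonempty with rfl | hS
  · simp
  have hterm : ∀ s, uE G (fun x => (f (x * s) - f x) ^ 2) =
      uE G (fun x => 2 * (f x * (f x - f (x * s)))) := fun s => by
    rw [← sub_eq_zero, ← uE_sub, ← sub_self (uE G fun x => f x ^ 2)]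
    nth_rewrite 1 [← uE_comp_mul_right (fun x => f x ^ 2) s]
    rw [← uE_sub]
    congr 1
    ext x
    ring
  calc ∑ s ∈ S, uE G (fun x => (f (x * s) - f x) ^ 2)
      = uE G (fun x => 2 * (f x * (S.card * f x - ∑ s ∈ S, f (x * s)))) := by
        simp only [hterm, ← uE_sum, ← Finset.mul_sum, Finset.sum_sub_distrib, Finset.sum_const,
          nsmul_eq_mul]
    _ = 2 * S.card * Ecay G S f := by
        rw [Ecay, ← uE_const_mul]
        congr 1
        ext x
        rw [Kop, sum_comp_mul_right_eq_sum_comp_inv_mul S hcl hsym]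
        field_simp

lemma Ecay_le_sum_uE_sq (hS : S.Nonempty) (hcl : ∀ g : G, ∀ u ∈ S, g * u * g⁻¹ ∈ S)
    (hsym : ∀ s ∈ S, s⁻¹ ∈ S) (f : G → ℝ) :
    Ecay G S f ≤ ∑ s ∈ S, uE G (fun x => (f (x * s) - f x) ^ 2) := by
  have hsum := sum_uE_sq_sub_eq S hcl hsym f
  have hnonneg : 0 ≤ ∑ s ∈ S, uE G (fun x => (f (x * s) - f x) ^ 2) :=
    Finset.sum_nonneg fun s _ => uE_nonneg fun x => sq_nonneg _
  have hcard : (1 : ℝ) ≤ S.card := by exact_mod_cast hS.card_pos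
  nlinarith

end Dirichlet

section Decay

variable {G : Type} [Group G] [Fintype G] (S : Finset G)

lemma hasDerivAt_uE_sq_Pcay (g : G → ℝ) (t : ℝ) :
    HasDerivAt (fun u => uE G (fun x => Pcay G S u g x ^ 2)) (-2 * Ecay G S (Pcay G S t g)) t := by
  have h : HasDerivAt (fun u x => Pcay G S u g x ^ 2)
      (fun x => 2 * Pcay G S t g x * Lcay G S (Pcay G S t g) x) t :=
    hasDerivAt_pi.2 fun x => by simpa using (hasDerivAt_pi.1 (hasDerivAt_Pcay S g t) x).fun_pow 2
  convert h.uE using 1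
  rw [Ecay, ← uE_const_mul]
  congr 1
  ext x
  simp only [Lcay, LinearMap.coe_mk, AddHom.coe_mk]
  ring

lemma uE_sq_Pcay_le (hS : S.Nonempty) {ρ : ℝ} (hρ : 0 ≤ ρ)
    (hLS : ∀ g : G → ℝ, ρ * uEnt G (fun x => g x ^ 2) ≤ 2 * Ecay G S g) (g : G → ℝ) {t : ℝ}
    (ht : 0 ≤ t) :
    uE G (fun x => Pcay G S t g x ^ 2) ≤
      (uE G (fun x => |g x|) ^ 2) ^ (1 - exp (-ρ * t)) *
        uE G (fun x => g x ^ 2) ^ exp (-ρ * t) := by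
  rcases eq_or_ne g 0 with rfl | hg
  · simp [Pcay, uE]
  have hPg : ∀ v, Pcay G S v g ≠ 0 := fun v h =>
    hg (Pcay_injective S v (h.trans (map_zero (NormedSpace.exp _)).symm))
  refine (le_rpow_mul_rpow_of_hasDerivAt_le (pow_pos (uE_abs_pos hg) 2) (fun v => uE_sq_pos (hPg v))
    (hasDerivAt_uE_sq_Pcay S g) (fun v hv => ?_) ht).trans_eq (by rw [Pcay_zero])
  set h := Pcay G S v g
  have hlog : log (uE G (fun x => |h x|) ^ 2) ≤ log (uE G (fun x => |g x|) ^ 2) :=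
    log_le_log (pow_pos (uE_abs_pos (hPg v)) 2)
      (pow_le_pow_left₀ (uE_nonneg fun x => abs_nonneg _) (uE_abs_Pcay_le S hS hv g) 2)
  calc -2 * Ecay G S h ≤ -ρ * uEnt G (fun x => h x ^ 2) := by linarith [hLS h]
    _ ≤ -ρ * (uE G (fun x => h x ^ 2) *
          (log (uE G fun x => h x ^ 2) - log (uE G (fun x => |h x|) ^ 2))) :=
        mul_le_mul_of_nonpos_left (uE_sq_mul_log_sub_le_uEnt (hPg v)) (neg_nonpos.2 hρ)
    _ ≤ _ := by nlinarith [mul_le_mul_of_nonneg_left hlog (mul_nonneg hρ (uE_sq_pos (hPg v)).le)]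

end Decay

/-- there is a universal `C > 0` such that for every finite group `G` with a
symmetric, generating, conjugation-closed set `S`, spectral-gap constant `λ` and
log-Sobolev constant `ρ` of the associated Cayley kernel, every `f : G → ℝ` and `t ≥ 0`
satisfy
`Var_μ(P_t f) ≤ (C/λ) (∑_{s∈S} ‖D_s f‖₁²)^{(1-e^{-ρt})/2} (∑_{s∈S} ‖D_s f‖₂²)^{(1+e^{-ρt})/2}`,
with `D_s f (g) = f (gs) - f g`. -/
theorem stmt10 :
    ∃ C : ℝ, 0 < C ∧
      ∀ (G : Type) [Group G] [Fintype G] [DecidableEq G],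
        ∀ S : Finset G,
          (∀ s ∈ S, s⁻¹ ∈ S) →
          Subgroup.closure (S : Set G) = ⊤ →
          (∀ s ∈ S, ∀ u ∈ S, s * u * s⁻¹ ∈ S) →
          ∀ lam ρ : ℝ, 0 < lam → 0 < ρ →
          (∀ g : G → ℝ, lam * uVar G g ≤ Ecay G S g) →
          (∀ g : G → ℝ, ρ * uEnt G (fun x => g x ^ 2) ≤ 2 * Ecay G S g) →
          ∀ f : G → ℝ, ∀ t : ℝ, 0 ≤ t →
            uVar G (Pcay G S t f) ≤
              (C / lam) *
                (∑ s ∈ S, (uE G fun g => |f (g * s) - f g|) ^ 2) ^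
                  ((1 - Real.exp (-ρ * t)) / 2) *
                (∑ s ∈ S, uE G fun g => (f (g * s) - f g) ^ 2) ^
                  ((1 + Real.exp (-ρ * t)) / 2) := by
  refine ⟨1, one_pos, fun G _ _ _ S hsym hgen hconj lam ρ hlam hρ hgap hLS f t ht => ?_⟩
  rcases S.eq_empty_or_nonempty with rfl | hS
  · have : Subsingleton G :=
      Subgroup.subsingleton_iff.1 (subsingleton_iff_bot_eq_top.1 (by simpa using hgen))
    rw [uVar_of_subsingleton]
    positivity
  have hcl := conj_mem_of_closure_eq_top hsym hgen hconj
  set η := Real.exp (-ρ * t)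
  have hη₀ : 0 ≤ η := (Real.exp_pos _).le
  have hη₁ : η ≤ 1 := Real.exp_le_one_iff.2 (by nlinarith)
  have key : lam * uVar G (Pcay G S t f) ≤
      (∑ s ∈ S, (uE G fun g => |f (g * s) - f g|) ^ 2) ^ ((1 - η) / 2) *
        (∑ s ∈ S, uE G fun g => (f (g * s) - f g) ^ 2) ^ ((1 + η) / 2) := calc
    lam * uVar G (Pcay G S t f) ≤ Ecay G S (Pcay G S t f) := hgap _
    _ ≤ ∑ s ∈ S, uE G (fun x => (Pcay G S t f (x * s) - Pcay G S t f x) ^ 2) :=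
        Ecay_le_sum_uE_sq S hS hcl hsym _
    _ = ∑ s ∈ S, uE G (fun x => Pcay G S t (fun y => f (y * s) - f y) x ^ 2) := by
        simp only [Pcay_sub_comp_mul_right]
    _ ≤ ∑ s ∈ S, ((uE G fun g => |f (g * s) - f g|) ^ 2) ^ ((1 - η) / 2) *
          (uE G fun g => (f (g * s) - f g) ^ 2) ^ ((1 + η) / 2) :=
        Finset.sum_le_sum fun s _ => (uE_sq_Pcay_le S hS hρ.le hLS _ ht).trans
          (Real.rpow_mul_rpow_le_rpow_mul_rpow (sq_nonneg _) (sq_uE_abs_le_uE_sq _)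
            hη₀ hη₁)
    _ ≤ _ := Real.sum_rpow_mul_rpow_le S (fun s _ => sq_nonneg _)
        (fun s _ => uE_nonneg fun x => sq_nonneg _) (by linarith) (by linarith) (by ring)
  rwa [mul_assoc, one_div_mul_eq_div, le_div_iff₀' hlam]
end

section
/- There exists a universal constant C > 0 with the following property (Friedgut's Junta Theorem): for every n ≥ 1, every f : {−1,1}^n → {−1,1}, and every ε ∈ (0,1), letting 𝕀 = Σ_{i=1}^n I_i(f) be the total influence of f, there exists a function g : {−1,1}^n → {−1,1} depending on at most exp(C·𝕀/ε) coordinates such that ‖f − g‖_{L¹(ν)} ≤ ε. -/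
open Finset

noncomputable def infl (n : ℕ) (i : Fin n) (f : (Fin n → Bool) → ℝ) : ℝ :=
  cubeE n fun x => |f (cubeFlip n i x) - f x|

def DependsOnAtMost (n : ℕ) (g : (Fin n → Bool) → ℝ) (k : ℝ) : Prop :=
  ∃ J : Finset (Fin n), (J.card : ℝ) ≤ k ∧
    ∀ x y : Fin n → Bool, (∀ j ∈ J, x j = y j) → g x = g y

namespace Friedgut

variable {n : ℕ}

/-- sign of a boolean: `true ↦ 1`, `false ↦ -1`. -/
def sg (b : Bool) : ℝ := cond b 1 (-1)

lemma sg_sq (b : Bool) : sg b ^ 2 = 1 := by cases b <;> simp [sg]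

lemma sg_not (b : Bool) : sg (!b) = - sg b := by cases b <;> simp [sg]

/-- Walsh character. -/
def chi (S : Finset (Fin n)) (x : Fin n → Bool) : ℝ := ∏ i ∈ S, sg (x i)

lemma two_pow_pos : (0:ℝ) < 2 ^ n := by positivity

lemma pow4_nonneg (u : ℝ) : 0 ≤ u ^ 4 := by nlinarith [sq_nonneg (u ^ 2), sq_nonneg u]

-- basic cubeE lemmas
lemma cubeE_add (f g : (Fin n → Bool) → ℝ) :
    cubeE n (fun x => f x + g x) = cubeE n f + cubeE n g := by
  simp [cubeE, Finset.sum_add_distrib, add_div]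

lemma cubeE_sub (f g : (Fin n → Bool) → ℝ) :
    cubeE n (fun x => f x - g x) = cubeE n f - cubeE n g := by
  simp [cubeE, Finset.sum_sub_distrib, sub_div]

lemma cubeE_mul_left (c : ℝ) (f : (Fin n → Bool) → ℝ) :
    cubeE n (fun x => c * f x) = c * cubeE n f := by
  simp [cubeE, ← Finset.mul_sum, mul_div_assoc]

lemma cubeE_const (c : ℝ) : cubeE n (fun _ => c) = c := by
  simp [cubeE, Finset.card_univ]

lemma cubeE_sum {ι : Type*} (s : Finset ι) (F : ι → (Fin n → Bool) → ℝ) :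
    cubeE n (fun x => ∑ j ∈ s, F j x) = ∑ j ∈ s, cubeE n (F j) := by
  unfold cubeE
  rw [← Finset.sum_div, Finset.sum_comm]

lemma cubeE_congr {f g : (Fin n → Bool) → ℝ} (h : ∀ x, f x = g x) :
    cubeE n f = cubeE n g := by
  unfold cubeE; congr 1; exact Finset.sum_congr rfl fun x _ => h x

lemma cubeE_mono {f g : (Fin n → Bool) → ℝ} (h : ∀ x, f x ≤ g x) :
    cubeE n f ≤ cubeE n g := by
  unfold cubeE
  exact (div_le_div_iff_of_pos_right two_pow_pos).mpr (Finset.sum_le_sum fun x _ => h x)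

lemma cubeE_nonneg {f : (Fin n → Bool) → ℝ} (h : ∀ x, 0 ≤ f x) :
    0 ≤ cubeE n f := by
  have := cubeE_mono (n := n) (f := fun _ => (0:ℝ)) (g := f) h
  rwa [cubeE_const] at this

lemma abs_cubeE_le (f : (Fin n → Bool) → ℝ) :
    |cubeE n f| ≤ cubeE n (fun x => |f x|) := by
  rw [abs_le]
  constructor
  · have := cubeE_mono (n := n) (f := fun x => -|f x|) (g := f) (fun x => neg_abs_le _)
    rw [show (fun x : Fin n → Bool => -|f x|) = (fun x => (-1) * |f x|) by funext x; ring,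
      cubeE_mul_left] at this
    linarith
  · exact cubeE_mono fun x => le_abs_self _

/-- Cauchy–Schwarz for cubeE. -/
lemma cubeE_cs (f g : (Fin n → Bool) → ℝ) :
    (cubeE n (fun x => f x * g x)) ^ 2 ≤ cubeE n (fun x => f x ^ 2) * cubeE n (fun x => g x ^ 2) := by
  have h := Finset.sum_mul_sq_le_sq_mul_sq Finset.univ f g
  unfold cubeE
  rw [div_pow, div_mul_div_comm]
  have h2 : ((2:ℝ)^n)^2 = 2^n * 2^n := by ring
  rw [h2]
  exact (div_le_div_iff_of_pos_right (by positivity)).mpr h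

-- flip lemmas
lemma cubeFlip_invol (i : Fin n) (x : Fin n → Bool) : cubeFlip n i (cubeFlip n i x) = x := by
  unfold cubeFlip
  rw [Function.update_self, Function.update_idem, Bool.not_not, Function.update_eq_self]

lemma cubeFlip_apply_self (i : Fin n) (x : Fin n → Bool) : cubeFlip n i x i = !(x i) := by
  simp [cubeFlip]

lemma cubeFlip_apply_ne (i j : Fin n) (x : Fin n → Bool) (h : j ≠ i) :
    cubeFlip n i x j = x j := by
  simp [cubeFlip, Function.update_of_ne h]

lemma sum_comp_flip (i : Fin n) (F : (Fin n → Bool) → ℝ) :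
    ∑ x : Fin n → Bool, F (cubeFlip n i x) = ∑ x : Fin n → Bool, F x := by
  apply Fintype.sum_bijective (cubeFlip n i)
    (Function.Involutive.bijective (cubeFlip_invol i)) _ _ (fun x => rfl)

lemma cubeE_comp_flip (i : Fin n) (F : (Fin n → Bool) → ℝ) :
    cubeE n (fun x => F (cubeFlip n i x)) = cubeE n F := by
  unfold cubeE; rw [sum_comp_flip]

/-- Key vanishing lemma: an odd function in coordinate `i` has zero mean. -/
lemma cubeE_odd (i : Fin n) (F : (Fin n → Bool) → ℝ) (hF : ∀ x, F (cubeFlip n i x) = F x) :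
    cubeE n (fun x => sg (x i) * F x) = 0 := by
  have h := cubeE_comp_flip i (fun x => sg (x i) * F x)
  have h2 : cubeE n (fun x => sg (cubeFlip n i x i) * F (cubeFlip n i x))
      = cubeE n (fun x => (-1) * (sg (x i) * F x)) := by
    apply cubeE_congr; intro x
    rw [cubeFlip_apply_self, sg_not, hF]; ring
  rw [h2, cubeE_mul_left] at h
  linarith

-- chi lemmas
lemma chi_empty (x : Fin n → Bool) : chi (∅ : Finset (Fin n)) x = 1 := rfl

lemma chi_flip_notMem {S : Finset (Fin n)} {i : Fin n} (h : i ∉ S) (x : Fin n → Bool) :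
    chi S (cubeFlip n i x) = chi S x := by
  unfold chi
  exact Finset.prod_congr rfl fun j hj => by
    rw [cubeFlip_apply_ne i j x (fun e => h (e ▸ hj))]

lemma chi_insert {S : Finset (Fin n)} {i : Fin n} (h : i ∉ S) (x : Fin n → Bool) :
    chi (insert i S) x = sg (x i) * chi S x := Finset.prod_insert h

lemma chi_mem_eq {S : Finset (Fin n)} {i : Fin n} (h : i ∈ S) (x : Fin n → Bool) :
    chi S x = sg (x i) * chi (S.erase i) x := by
  rw [← chi_insert (Finset.notMem_erase i S), Finset.insert_erase h]

lemma chi_flip_mem {S : Finset (Fin n)} {i : Fin n} (h : i ∈ S) (x : Fin n → Bool) :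
    chi S (cubeFlip n i x) = - chi S x := by
  rw [chi_mem_eq h (cubeFlip n i x), chi_mem_eq h x, cubeFlip_apply_self, sg_not,
    chi_flip_notMem (Finset.notMem_erase i S)]
  ring

lemma cubeE_chi {S : Finset (Fin n)} (h : S ≠ ∅) : cubeE n (chi S) = 0 := by
  obtain ⟨i, hi⟩ := Finset.nonempty_iff_ne_empty.mpr h
  have : cubeE n (chi S) = cubeE n (fun x => sg (x i) * chi (S.erase i) x) :=
    cubeE_congr fun x => chi_mem_eq hi x
  rw [this]
  exact cubeE_odd i _ (fun x => chi_flip_notMem (Finset.notMem_erase i S) x)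

lemma cubeE_chi_empty : cubeE n (chi (∅ : Finset (Fin n))) = 1 := by
  rw [cubeE_congr (g := fun _ => (1:ℝ)) (fun x => chi_empty x), cubeE_const]

lemma chi_mul_chi (S T : Finset (Fin n)) (x : Fin n → Bool) :
    chi S x * chi T x = chi ((S \ T) ∪ (T \ S)) x := by
  unfold chi
  rw [← Finset.prod_inter_mul_prod_diff S T (fun i => sg (x i)),
    ← Finset.prod_inter_mul_prod_diff T S (fun i => sg (x i)),
    Finset.inter_comm T S]
  have hsq : ∏ i ∈ S ∩ T, sg (x i) * sg (x i) = 1 := by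
    apply Finset.prod_eq_one
    intro i _
    have := sg_sq (x i); nlinarith [sg_sq (x i)]
  have hdisj : Disjoint (S \ T) (T \ S) := disjoint_sdiff_sdiff
  rw [Finset.prod_union hdisj]
  calc (∏ i ∈ S ∩ T, sg (x i)) * (∏ i ∈ S \ T, sg (x i)) *
        ((∏ i ∈ S ∩ T, sg (x i)) * ∏ i ∈ T \ S, sg (x i))
      = (∏ i ∈ S ∩ T, sg (x i) * sg (x i)) * ((∏ i ∈ S \ T, sg (x i)) * ∏ i ∈ T \ S, sg (x i)) := by
        rw [Finset.prod_mul_distrib]; ring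
    _ = (∏ i ∈ S \ T, sg (x i)) * ∏ i ∈ T \ S, sg (x i) := by rw [hsq, one_mul]

lemma sdiff_union_sdiff_eq_empty_iff (S T : Finset (Fin n)) :
    (S \ T) ∪ (T \ S) = ∅ ↔ S = T := by
  rw [Finset.union_eq_empty, Finset.sdiff_eq_empty_iff_subset, Finset.sdiff_eq_empty_iff_subset]
  constructor
  · rintro ⟨h1, h2⟩; exact Finset.Subset.antisymm h1 h2
  · rintro rfl; exact ⟨Finset.Subset.refl _, Finset.Subset.refl _⟩

lemma cubeE_chi_mul_chi (S T : Finset (Fin n)) :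
    cubeE n (fun x => chi S x * chi T x) = if S = T then 1 else 0 := by
  rw [cubeE_congr (fun x => chi_mul_chi S T x)]
  by_cases h : S = T
  · subst h
    rw [if_pos rfl]
    have : (S \ S) ∪ (S \ S) = (∅ : Finset (Fin n)) := by simp
    rw [this, cubeE_chi_empty]
  · rw [if_neg h]
    exact cubeE_chi fun e => h ((sdiff_union_sdiff_eq_empty_iff S T).mp e)

/-- Fourier coefficient. -/
noncomputable def fhat (f : (Fin n → Bool) → ℝ) (S : Finset (Fin n)) : ℝ :=
  cubeE n fun x => f x * chi S x

lemma sg_mul_sg_add_one (a b : Bool) : sg a * sg b + 1 = if a = b then 2 else 0 := by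
  cases a <;> cases b <;> norm_num [sg]

lemma sum_chi_mul_chi (x y : Fin n → Bool) :
    ∑ S : Finset (Fin n), chi S x * chi S y = if x = y then (2:ℝ)^n else 0 := by
  have key : ∑ S : Finset (Fin n), chi S x * chi S y
      = ∏ i : Fin n, (sg (x i) * sg (y i) + 1) := by
    rw [Finset.prod_add]
    rw [Finset.powerset_univ]
    apply Finset.sum_congr rfl
    intro S _
    rw [Finset.prod_const_one, mul_one]
    unfold chi
    rw [← Finset.prod_mul_distrib]
  rw [key]
  by_cases h : x = y
  · subst h
    rw [if_pos rfl]
    have : ∀ i : Fin n, sg (x i) * sg (x i) + 1 = 2 := by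
      intro i; rw [sg_mul_sg_add_one]; simp
    rw [Finset.prod_congr rfl (fun i _ => this i), Finset.prod_const, Finset.card_univ,
      Fintype.card_fin]
  · rw [if_neg h]
    obtain ⟨i, hi⟩ := Function.ne_iff.mp h
    apply Finset.prod_eq_zero (Finset.mem_univ i)
    rw [sg_mul_sg_add_one, if_neg hi]

/-- Fourier inversion. -/
lemma inversion (f : (Fin n → Bool) → ℝ) (x : Fin n → Bool) :
    f x = ∑ S : Finset (Fin n), fhat f S * chi S x := by
  have step1 : ∀ S : Finset (Fin n), fhat f S * chi S x
      = (∑ y : Fin n → Bool, f y * chi S y * chi S x) / 2^n := by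
    intro S
    unfold fhat cubeE
    rw [div_mul_eq_mul_div, Finset.sum_mul]
  have : ∑ S : Finset (Fin n), fhat f S * chi S x
      = (∑ y : Fin n → Bool, f y * ∑ S : Finset (Fin n), chi S y * chi S x) / 2^n := by
    rw [Finset.sum_congr rfl (fun S _ => step1 S), ← Finset.sum_div]
    congr 1
    rw [Finset.sum_comm]
    apply Finset.sum_congr rfl
    intro y _
    rw [Finset.mul_sum]
    apply Finset.sum_congr rfl
    intro S _
    ring
  rw [this]
  have : ∀ y, f y * ∑ S : Finset (Fin n), chi S y * chi S x = if y = x then f y * 2^n else 0 := by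
    intro y
    rw [sum_chi_mul_chi]
    by_cases h : y = x <;> simp [h]
  rw [Finset.sum_congr rfl (fun y _ => this y), Finset.sum_ite_eq' Finset.univ x
    (fun y => f y * 2^n), if_pos (Finset.mem_univ x)]
  field_simp

/-- Expectation of a polynomial against g. -/
lemma polyE (a : Finset (Fin n) → ℝ) (g : (Fin n → Bool) → ℝ) :
    cubeE n (fun x => (∑ S : Finset (Fin n), a S * chi S x) * g x)
      = ∑ S : Finset (Fin n), a S * fhat g S := by
  rw [cubeE_congr (g := fun x => ∑ S : Finset (Fin n), a S * (g x * chi S x))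
    (fun x => by rw [Finset.sum_mul]; exact Finset.sum_congr rfl fun S _ => by ring)]
  rw [cubeE_sum]
  apply Finset.sum_congr rfl
  intro S _
  rw [cubeE_mul_left]
  rfl

lemma fhat_poly (a : Finset (Fin n) → ℝ) (T : Finset (Fin n)) :
    fhat (fun x => ∑ S : Finset (Fin n), a S * chi S x) T = a T := by
  unfold fhat
  rw [cubeE_congr (g := fun x => ∑ S : Finset (Fin n), a S * (chi S x * chi T x))
    (fun x => by rw [Finset.sum_mul]; exact Finset.sum_congr rfl fun S _ => by ring)]
  rw [cubeE_sum]
  have : ∀ S : Finset (Fin n), cubeE n (fun x => a S * (chi S x * chi T x))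
      = a S * if S = T then 1 else 0 := by
    intro S
    rw [cubeE_mul_left, cubeE_chi_mul_chi]
  rw [Finset.sum_congr rfl (fun S _ => this S)]
  simp

/-- norm of a polynomial. -/
lemma polyE2 (a : Finset (Fin n) → ℝ) :
    cubeE n (fun x => (∑ S : Finset (Fin n), a S * chi S x) ^ 2)
      = ∑ S : Finset (Fin n), a S ^ 2 := by
  rw [cubeE_congr (g := fun x => (∑ S : Finset (Fin n), a S * chi S x) *
    (∑ S : Finset (Fin n), a S * chi S x)) (fun x => sq _)]
  rw [polyE a _]
  apply Finset.sum_congr rfl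
  intro S _
  rw [fhat_poly, sq]

/-- Parseval. -/
lemma parseval (f : (Fin n → Bool) → ℝ) :
    cubeE n (fun x => f x ^ 2) = ∑ S : Finset (Fin n), fhat f S ^ 2 := by
  rw [cubeE_congr (g := fun x => (∑ S : Finset (Fin n), fhat f S * chi S x)^2)
    (fun x => by rw [inversion f x])]
  exact polyE2 _

-- Bonami / hypercontractivity
lemma bonami_base (k : ℕ) (a : Finset (Fin n) → ℝ) (ha : ∀ S, a S ≠ 0 → S = ∅) :
    cubeE n (fun x => (∑ S : Finset (Fin n), a S * chi S x) ^ 4)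
      ≤ 9 ^ k * (cubeE n (fun x => (∑ S : Finset (Fin n), a S * chi S x) ^ 2)) ^ 2 := by
  have hp : ∀ x, (∑ S : Finset (Fin n), a S * chi S x) = a ∅ := by
    intro x
    rw [Finset.sum_eq_single ∅ (fun S _ hS => by
      rcases eq_or_ne (a S) 0 with h | h
      · rw [h, zero_mul]
      · exact absurd (ha S h) hS)
      (fun h => absurd (Finset.mem_univ ∅) h)]
    rw [chi_empty, mul_one]
  have e1 : cubeE n (fun x => (∑ S : Finset (Fin n), a S * chi S x) ^ 4)
      = cubeE n (fun _ => (a ∅)^4) := cubeE_congr (fun x => by rw [hp x])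
  have e2 : cubeE n (fun x => (∑ S : Finset (Fin n), a S * chi S x) ^ 2)
      = cubeE n (fun _ => (a ∅)^2) := cubeE_congr (fun x => by rw [hp x])
  rw [e1, e2, cubeE_const, cubeE_const]
  have h9 : (1:ℝ) ≤ 9 ^ k := by
    have : (1:ℝ)^k ≤ 9^k := pow_le_pow_left₀ (by norm_num) (by norm_num) k
    simpa using this
  nlinarith [pow_nonneg (sq_nonneg (a ∅)) 2, sq_nonneg ((a ∅)^2)]

lemma bonami (U : Finset (Fin n)) :
    ∀ (k : ℕ) (a : Finset (Fin n) → ℝ),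
      (∀ S, a S ≠ 0 → S ⊆ U ∧ S.card ≤ k) →
      cubeE n (fun x => (∑ S : Finset (Fin n), a S * chi S x) ^ 4)
        ≤ 9 ^ k * (cubeE n (fun x => (∑ S : Finset (Fin n), a S * chi S x) ^ 2)) ^ 2 := by
  induction U using Finset.induction_on with
  | empty =>
    intro k a ha
    exact bonami_base k a fun S h => Finset.subset_empty.mp (ha S h).1
  | @insert i U' hiU ih =>
    intro k a ha
    cases k with
    | zero =>
      exact bonami_base 0 a fun S h => Finset.card_eq_zero.mp (Nat.le_zero.mp (ha S h).2)
    | succ k =>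
      set b : Finset (Fin n) → ℝ := fun S => if i ∈ S then 0 else a S with hb
      set c : Finset (Fin n) → ℝ := fun S => if i ∈ S then 0 else a (insert i S) with hc
      set Q : (Fin n → Bool) → ℝ := fun x => ∑ S : Finset (Fin n), b S * chi S x with hQ
      set R : (Fin n → Bool) → ℝ := fun x => ∑ S : Finset (Fin n), c S * chi S x with hR
      -- supports
      have hbsupp : ∀ S, b S ≠ 0 → S ⊆ U' ∧ S.card ≤ k + 1 := by
        intro S h
        simp only [hb] at h
        by_cases hiS : i ∈ S
        · simp [hiS] at h
        · rw [if_neg hiS] at h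
          obtain ⟨h1, h2⟩ := ha S h
          refine ⟨fun j hj => ?_, h2⟩
          rcases Finset.mem_insert.mp (h1 hj) with rfl | hj'
          · exact absurd hj hiS
          · exact hj'
      have hcsupp : ∀ S, c S ≠ 0 → S ⊆ U' ∧ S.card ≤ k := by
        intro S h
        simp only [hc] at h
        by_cases hiS : i ∈ S
        · simp [hiS] at h
        · rw [if_neg hiS] at h
          obtain ⟨h1, h2⟩ := ha _ h
          constructor
          · intro j hj
            have hji : j ≠ i := fun e => hiS (e ▸ hj)
            have : j ∈ insert i U' := h1 (Finset.mem_insert_of_mem hj)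
            rcases Finset.mem_insert.mp this with e | hj'
            · exact absurd e hji
            · exact hj'
          · have := Finset.card_insert_of_notMem hiS
            omega
      -- decomposition
      have hdecomp : ∀ x, (∑ S : Finset (Fin n), a S * chi S x) = Q x + sg (x i) * R x := by
        intro x
        rw [← Finset.sum_filter_add_sum_filter_not Finset.univ (fun S => i ∈ S)
          (fun S => a S * chi S x)]
        have hQx : (∑ S ∈ Finset.univ.filter (fun S => ¬ i ∈ S), a S * chi S x) = Q x := by
          rw [hQ, Finset.sum_filter]
          apply Finset.sum_congr rfl
          intro S _
          by_cases hiS : i ∈ S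
          · rw [if_neg (by exact fun h => h hiS), hb]
            simp [hiS]
          · rw [if_pos hiS, hb]
            simp [hiS]
        have hRx : (∑ S ∈ Finset.univ.filter (fun S => i ∈ S), a S * chi S x)
            = sg (x i) * R x := by
          rw [hR, Finset.mul_sum]
          have step : ∀ S : Finset (Fin n), sg (x i) * (c S * chi S x)
              = if i ∈ S then 0 else a (insert i S) * chi (insert i S) x := by
            intro S
            by_cases hiS : i ∈ S
            · simp [hc, hiS]
            · rw [if_neg hiS]
              simp only [hc, hiS, if_false]
              rw [chi_insert hiS]
              ring
          rw [Finset.sum_congr rfl (fun S _ => step S), ← Finset.sum_filter_add_sum_filter_not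
            Finset.univ (fun S => i ∈ S) _]
          have z1 : (∑ S ∈ Finset.univ.filter (fun S => i ∈ S),
              if i ∈ S then (0:ℝ) else a (insert i S) * chi (insert i S) x) = 0 := by
            apply Finset.sum_eq_zero
            intro S hS
            rw [if_pos (Finset.mem_filter.mp hS).2]
          have z2 : (∑ S ∈ Finset.univ.filter (fun S => ¬ i ∈ S),
              if i ∈ S then (0:ℝ) else a (insert i S) * chi (insert i S) x)
              = ∑ S ∈ Finset.univ.filter (fun S => ¬ i ∈ S),
                a (insert i S) * chi (insert i S) x := by
            apply Finset.sum_congr rfl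
            intro S hS
            rw [if_neg (Finset.mem_filter.mp hS).2]
          rw [z1, z2, zero_add]
          apply Finset.sum_bij' (i := fun (S : Finset (Fin n)) (_ : S ∈ Finset.univ.filter
              (fun S => i ∈ S)) => S.erase i)
            (j := fun (S : Finset (Fin n)) (_ : S ∈ Finset.univ.filter (fun S => ¬ i ∈ S)) =>
              insert i S)
          · intro S hS
            simp [Finset.mem_filter]
          · intro S hS
            simp [Finset.mem_filter]
          · intro S hS
            exact Finset.insert_erase (Finset.mem_filter.mp hS).2
          · intro S hS
            exact Finset.erase_insert (Finset.mem_filter.mp hS).2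
          · intro S hS
            rw [Finset.insert_erase (Finset.mem_filter.mp hS).2]
        rw [hQx, hRx]
        ring
      -- invariance under flip i
      have hQflip : ∀ x, Q (cubeFlip n i x) = Q x := by
        intro x
        rw [hQ]
        apply Finset.sum_congr rfl
        intro S _
        by_cases hiS : i ∈ S
        · rw [hb]; simp [hiS]
        · rw [chi_flip_notMem hiS]
      have hRflip : ∀ x, R (cubeFlip n i x) = R x := by
        intro x
        rw [hR]
        apply Finset.sum_congr rfl
        intro S _
        by_cases hiS : i ∈ S
        · rw [hc]; simp [hiS]
        · rw [chi_flip_notMem hiS]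
      -- second moment
      have hp2 : cubeE n (fun x => (∑ S : Finset (Fin n), a S * chi S x) ^ 2)
          = cubeE n (fun x => Q x ^ 2) + cubeE n (fun x => R x ^ 2) := by
        have hpt : ∀ x, (∑ S : Finset (Fin n), a S * chi S x) ^ 2
            = (Q x ^ 2 + R x ^ 2) + sg (x i) * (2 * Q x * R x) := by
          intro x
          rw [hdecomp x]
          linear_combination (R x ^ 2) * (sg_sq (x i))
        rw [cubeE_congr hpt, cubeE_add, cubeE_add,
          cubeE_odd i _ (fun x => by rw [hQflip, hRflip])]
        ring
      -- fourth moment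
      have hp4 : cubeE n (fun x => (∑ S : Finset (Fin n), a S * chi S x) ^ 4)
          = cubeE n (fun x => Q x ^ 4) + 6 * cubeE n (fun x => Q x ^ 2 * R x ^ 2)
            + cubeE n (fun x => R x ^ 4) := by
        have hpt : ∀ x, (∑ S : Finset (Fin n), a S * chi S x) ^ 4
            = ((Q x ^ 4 + 6 * (Q x ^ 2 * R x ^ 2)) + R x ^ 4)
              + sg (x i) * (4 * Q x ^ 3 * R x + 4 * Q x * R x ^ 3) := by
          intro x
          rw [hdecomp x]
          linear_combination (6 * Q x ^ 2 * R x ^ 2 + 4 * Q x * R x ^ 3 * sg (x i)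
            + R x ^ 4 * (sg (x i) ^ 2 + 1)) * (sg_sq (x i))
        rw [cubeE_congr hpt, cubeE_add, cubeE_add, cubeE_add,
          cubeE_odd i _ (fun x => by rw [hQflip, hRflip]),
          cubeE_mul_left 6 (fun x => Q x ^ 2 * R x ^ 2)]
        ring
      -- induction hypotheses
      have hQ4 : cubeE n (fun x => Q x ^ 4)
          ≤ 9 ^ (k+1) * (cubeE n (fun x => Q x ^ 2)) ^ 2 := ih (k+1) b hbsupp
      have hR4 : cubeE n (fun x => R x ^ 4)
          ≤ 9 ^ k * (cubeE n (fun x => R x ^ 2)) ^ 2 := ih k c hcsupp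
      -- nonnegativity
      have hA : (0:ℝ) ≤ cubeE n (fun x => Q x ^ 2) := cubeE_nonneg fun x => sq_nonneg _
      have hB : (0:ℝ) ≤ cubeE n (fun x => R x ^ 2) := cubeE_nonneg fun x => sq_nonneg _
      have hQ4n : (0:ℝ) ≤ cubeE n (fun x => Q x ^ 4) :=
        cubeE_nonneg fun x => by positivity
      have hR4n : (0:ℝ) ≤ cubeE n (fun x => R x ^ 4) :=
        cubeE_nonneg fun x => by positivity
      have hXn : (0:ℝ) ≤ cubeE n (fun x => Q x ^ 2 * R x ^ 2) :=
        cubeE_nonneg fun x => by positivity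
      -- Cauchy–Schwarz on the cross term
      have hcs : (cubeE n (fun x => Q x ^ 2 * R x ^ 2)) ^ 2
          ≤ cubeE n (fun x => Q x ^ 4) * cubeE n (fun x => R x ^ 4) := by
        have := cubeE_cs (n := n) (fun x => Q x ^ 2) (fun x => R x ^ 2)
        calc (cubeE n (fun x => Q x ^ 2 * R x ^ 2)) ^ 2
            ≤ cubeE n (fun x => (Q x ^ 2) ^ 2) * cubeE n (fun x => (R x ^ 2) ^ 2) := this
          _ = cubeE n (fun x => Q x ^ 4) * cubeE n (fun x => R x ^ 4) := by
              have eq1 : cubeE n (fun x => (Q x ^ 2) ^ 2) = cubeE n (fun x => Q x ^ 4) :=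
                cubeE_congr (fun x => by ring)
              have eq2 : cubeE n (fun x => (R x ^ 2) ^ 2) = cubeE n (fun x => R x ^ 4) :=
                cubeE_congr (fun x => by ring)
              rw [eq1, eq2]
      -- powers of three
      set t : ℝ := 3 ^ (2 * k) with ht
      have htpos : (0:ℝ) < t := by rw [ht]; positivity
      have h9k : (9:ℝ) ^ k = t := by rw [ht, pow_mul]; norm_num
      have h9k1 : (9:ℝ) ^ (k+1) = 9 * t := by
        rw [pow_succ, h9k]; ring
      set A := cubeE n (fun x => Q x ^ 2)
      set B := cubeE n (fun x => R x ^ 2)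
      set X := cubeE n (fun x => Q x ^ 2 * R x ^ 2)
      rw [h9k1] at hQ4 ⊢
      rw [h9k] at hR4
      -- cross-term bound : X ≤ 3 t A B
      have hXbound : X ≤ 3 * t * (A * B) := by
        have hsq : X ^ 2 ≤ (3 * t * (A * B)) ^ 2 := by
          calc X ^ 2 ≤ cubeE n (fun x => Q x ^ 4) * cubeE n (fun x => R x ^ 4) := hcs
            _ ≤ (9 * t * A ^ 2) * (t * B ^ 2) := by
                apply mul_le_mul hQ4 hR4 hR4n (by positivity)
            _ = (3 * t * (A * B)) ^ 2 := by ring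
        calc X = Real.sqrt (X ^ 2) := (Real.sqrt_sq hXn).symm
          _ ≤ Real.sqrt ((3 * t * (A * B)) ^ 2) := Real.sqrt_le_sqrt hsq
          _ = 3 * t * (A * B) := Real.sqrt_sq (by positivity)
      rw [hp4, hp2]
      nlinarith [mul_nonneg htpos.le (sq_nonneg B), mul_nonneg htpos.le (mul_nonneg hA hB)]

/-- half discrete derivative. -/
noncomputable def Dfun (n : ℕ) (i : Fin n) (f : (Fin n → Bool) → ℝ) : (Fin n → Bool) → ℝ :=
  fun x => (f (cubeFlip n i x) - f x) / 2

lemma fhat_flip (f : (Fin n → Bool) → ℝ) (i : Fin n) (S : Finset (Fin n)) :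
    fhat (fun x => f (cubeFlip n i x)) S = if i ∈ S then - fhat f S else fhat f S := by
  have key : cubeE n (fun x => f (cubeFlip n i x) * chi S x)
      = cubeE n (fun x => f x * chi S (cubeFlip n i x)) := by
    have := cubeE_comp_flip i (fun x => f x * chi S (cubeFlip n i x))
    rw [← this]
    apply cubeE_congr
    intro x
    rw [cubeFlip_invol]
  unfold fhat
  rw [key]
  by_cases hiS : i ∈ S
  · rw [if_pos hiS]
    have : cubeE n (fun x => f x * chi S (cubeFlip n i x))
        = cubeE n (fun x => (-1) * (f x * chi S x)) := by
      apply cubeE_congr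
      intro x
      rw [chi_flip_mem hiS]
      ring
    rw [this, cubeE_mul_left]
    ring
  · rw [if_neg hiS]
    apply cubeE_congr
    intro x
    rw [chi_flip_notMem hiS]

lemma fhat_Dfun (f : (Fin n → Bool) → ℝ) (i : Fin n) (S : Finset (Fin n)) :
    fhat (Dfun n i f) S = if i ∈ S then - fhat f S else 0 := by
  have step : fhat (Dfun n i f) S
      = (1/2) * (fhat (fun x => f (cubeFlip n i x)) S - fhat f S) := by
    unfold fhat
    rw [← cubeE_sub, ← cubeE_mul_left]
    apply cubeE_congr
    intro x
    unfold Dfun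
    ring
  rw [step, fhat_flip]
  by_cases hiS : i ∈ S
  · rw [if_pos hiS, if_pos hiS]; ring
  · rw [if_neg hiS, if_neg hiS]; ring

lemma Dfun_abs (f : (Fin n → Bool) → ℝ) (hf : ∀ x, f x = 1 ∨ f x = -1) (i : Fin n)
    (x : Fin n → Bool) : |Dfun n i f x| = Dfun n i f x ^ 2 := by
  unfold Dfun
  rcases hf (cubeFlip n i x) with h1 | h1 <;> rcases hf x with h2 | h2 <;>
    rw [h1, h2] <;> norm_num

lemma infl_eq_two_mul (f : (Fin n → Bool) → ℝ) (i : Fin n) :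
    infl n i f = 2 * cubeE n (fun x => |Dfun n i f x|) := by
  unfold infl
  rw [← cubeE_mul_left]
  apply cubeE_congr
  intro x
  unfold Dfun
  rw [abs_div]
  rw [abs_of_pos (by norm_num : (0:ℝ) < 2)]
  ring

set_option maxHeartbeats 1600000 in
/-- the main hypercontractive estimate for one coordinate. -/
lemma W_bound (f : (Fin n → Bool) → ℝ) (hf : ∀ x, f x = 1 ∨ f x = -1) (i : Fin n) (k : ℕ) :
    (∑ S ∈ Finset.univ.filter (fun S : Finset (Fin n) => i ∈ S ∧ S.card ≤ k), fhat f S ^ 2)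
      ≤ 3 ^ k * (cubeE n (fun x => |Dfun n i f x|) *
          Real.sqrt (cubeE n (fun x => |Dfun n i f x|))) := by
  set h : (Fin n → Bool) → ℝ := Dfun n i f with hh
  set m : ℝ := cubeE n (fun x => |h x|) with hm
  have habs : ∀ x, |h x| = h x ^ 2 := fun x => Dfun_abs f hf i x
  have hm2 : cubeE n (fun x => h x ^ 2) = m := (cubeE_congr (fun x => (habs x).symm))
  have hmnn : 0 ≤ m := by rw [hm]; exact cubeE_nonneg (fun x => abs_nonneg _)
  set a : Finset (Fin n) → ℝ := fun S => if i ∈ S ∧ S.card ≤ k then fhat h S else 0 with ha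
  set T : (Fin n → Bool) → ℝ := fun x => ∑ S : Finset (Fin n), a S * chi S x with hT
  set W : ℝ := ∑ S : Finset (Fin n), a S ^ 2 with hW
  have hWnn : 0 ≤ W := Finset.sum_nonneg (fun S _ => sq_nonneg _)
  -- goal LHS equals W
  have hWeq : (∑ S ∈ Finset.univ.filter (fun S : Finset (Fin n) => i ∈ S ∧ S.card ≤ k),
      fhat f S ^ 2) = W := by
    rw [hW, Finset.sum_filter]
    apply Finset.sum_congr rfl
    intro S _
    by_cases hS : i ∈ S ∧ S.card ≤ k
    · rw [if_pos hS, ha]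
      simp only [if_pos hS]
      rw [fhat_Dfun, if_pos hS.1]
      ring
    · rw [if_neg hS, ha]
      simp only [if_neg hS]
      norm_num
  -- E T² = W
  have hT2 : cubeE n (fun x => T x ^ 2) = W := by rw [hT, hW]; exact polyE2 a
  -- E T⁴ ≤ 9^k W²
  have hT4 : cubeE n (fun x => T x ^ 4) ≤ 9 ^ k * W ^ 2 := by
    rw [← hT2]
    apply bonami Finset.univ k a
    intro S hS
    refine ⟨Finset.subset_univ S, ?_⟩
    rw [ha] at hS
    simp only at hS
    by_cases hc : i ∈ S ∧ S.card ≤ k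
    · exact hc.2
    · rw [if_neg hc] at hS; exact absurd rfl hS
  have hT4nn : 0 ≤ cubeE n (fun x => T x ^ 4) := cubeE_nonneg (fun x => pow4_nonneg _)
  -- W = E (T h)
  have hTh : cubeE n (fun x => T x * h x) = W := by
    rw [hT, hW, polyE a h]
    apply Finset.sum_congr rfl
    intro S _
    rw [ha]
    simp only
    by_cases hS : i ∈ S ∧ S.card ≤ k
    · rw [if_pos hS]; ring
    · rw [if_neg hS]; ring
  -- W ≤ E (h² |T|)
  set X : ℝ := cubeE n (fun x => h x ^ 2 * |T x|) with hX
  have hXnn : 0 ≤ X := cubeE_nonneg (fun x => mul_nonneg (sq_nonneg _) (abs_nonneg _))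
  have hWX : W ≤ X := by
    rw [← hTh, hX]
    apply cubeE_mono
    intro x
    calc T x * h x ≤ |T x * h x| := le_abs_self _
      _ = |h x| * |T x| := by rw [abs_mul]; ring
      _ = h x ^ 2 * |T x| := by rw [habs x]
  -- X² ≤ m * Y
  set Y : ℝ := cubeE n (fun x => h x ^ 2 * T x ^ 2) with hY
  have hYnn : 0 ≤ Y := cubeE_nonneg (fun x => mul_nonneg (sq_nonneg _) (sq_nonneg _))
  have hXY : X ^ 2 ≤ m * Y := by
    have hcs := cubeE_cs (n := n) (fun x => |h x|) (fun x => |h x| * |T x|)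
    have e1 : cubeE n (fun x => |h x| * (|h x| * |T x|)) = X := by
      rw [hX]
      apply cubeE_congr
      intro x
      rw [← sq_abs (h x)]
      ring
    have e2 : cubeE n (fun x => |h x| ^ 2) = m := by
      rw [← hm2]
      exact cubeE_congr (fun x => sq_abs (h x))
    have e3 : cubeE n (fun x => (|h x| * |T x|) ^ 2) = Y := by
      rw [hY]
      apply cubeE_congr
      intro x
      rw [mul_pow, sq_abs, sq_abs]
    rw [e1, e2, e3] at hcs
    exact hcs
  -- Y² ≤ m * E T⁴
  have hY2 : Y ^ 2 ≤ m * cubeE n (fun x => T x ^ 4) := by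
    have hcs := cubeE_cs (n := n) (fun x => |h x|) (fun x => T x ^ 2)
    have e1 : cubeE n (fun x => |h x| * T x ^ 2) = Y := by
      rw [hY]
      apply cubeE_congr
      intro x
      rw [habs x]
    have e2 : cubeE n (fun x => |h x| ^ 2) = m := by
      rw [← hm2]
      exact cubeE_congr (fun x => sq_abs (h x))
    have e3 : cubeE n (fun x => (T x ^ 2) ^ 2) = cubeE n (fun x => T x ^ 4) :=
      cubeE_congr (fun x => by ring)
    rw [e1, e2, e3] at hcs
    exact hcs
  -- combine
  rw [hWeq]
  have hsm : Real.sqrt m ^ 2 = m := Real.sq_sqrt hmnn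
  have hsmnn : 0 ≤ Real.sqrt m := Real.sqrt_nonneg m
  have hYb : Y ≤ 3 ^ k * Real.sqrt m * W := by
    have h1 : Y ^ 2 ≤ (3 ^ k * Real.sqrt m * W) ^ 2 := by
      calc Y ^ 2 ≤ m * cubeE n (fun x => T x ^ 4) := hY2
        _ ≤ m * (9 ^ k * W ^ 2) := by
            apply mul_le_mul_of_nonneg_left hT4 hmnn
        _ = (3 ^ k * Real.sqrt m * W) ^ 2 := by
            rw [mul_pow, mul_pow, hsm]
            rw [show ((3:ℝ)^k)^2 = 9^k by rw [← pow_mul, pow_mul']; norm_num]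
            ring
    calc Y = Real.sqrt (Y ^ 2) := (Real.sqrt_sq hYnn).symm
      _ ≤ Real.sqrt ((3 ^ k * Real.sqrt m * W) ^ 2) := Real.sqrt_le_sqrt h1
      _ = 3 ^ k * Real.sqrt m * W := Real.sqrt_sq
          (mul_nonneg (mul_nonneg (pow_nonneg (by norm_num) k) hsmnn) hWnn)
  have hW2 : W ^ 2 ≤ 3 ^ k * (m * Real.sqrt m) * W := by
    calc W ^ 2 ≤ X ^ 2 := by
          apply pow_le_pow_left₀ hWnn hWX
      _ ≤ m * Y := hXY
      _ ≤ m * (3 ^ k * Real.sqrt m * W) := mul_le_mul_of_nonneg_left hYb hmnn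
      _ = 3 ^ k * (m * Real.sqrt m) * W := by ring
  rcases eq_or_lt_of_le hWnn with hW0 | hWpos
  · rw [← hW0]
    exact mul_nonneg (pow_nonneg (by norm_num) k) (mul_nonneg hmnn hsmnn)
  · have : W * W ≤ (3 ^ k * (m * Real.sqrt m)) * W := by
      calc W * W = W ^ 2 := (sq W).symm
        _ ≤ 3 ^ k * (m * Real.sqrt m) * W := hW2
    exact le_of_mul_le_mul_right this hWpos

lemma m_eq (f : (Fin n → Bool) → ℝ) (hf : ∀ x, f x = 1 ∨ f x = -1) (i : Fin n) :
    cubeE n (fun x => |Dfun n i f x|)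
      = ∑ S : Finset (Fin n), (if i ∈ S then fhat f S ^ 2 else 0) := by
  have e1 : cubeE n (fun x => |Dfun n i f x|) = cubeE n (fun x => Dfun n i f x ^ 2) :=
    cubeE_congr (fun x => Dfun_abs f hf i x)
  rw [e1, parseval]
  apply Finset.sum_congr rfl
  intro S _
  rw [fhat_Dfun]
  by_cases hiS : i ∈ S
  · rw [if_pos hiS, if_pos hiS]; ring
  · rw [if_neg hiS, if_neg hiS]; ring

lemma total_influence (f : (Fin n → Bool) → ℝ) (hf : ∀ x, f x = 1 ∨ f x = -1) :
    (∑ i : Fin n, cubeE n (fun x => |Dfun n i f x|))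
      = ∑ S : Finset (Fin n), (S.card : ℝ) * fhat f S ^ 2 := by
  rw [Finset.sum_congr rfl (fun i _ => m_eq f hf i), Finset.sum_comm]
  apply Finset.sum_congr rfl
  intro S _
  rw [Finset.sum_ite_mem, Finset.univ_inter, Finset.sum_const, nsmul_eq_mul]

lemma sum_fhat_sq (f : (Fin n → Bool) → ℝ) (hf : ∀ x, f x = 1 ∨ f x = -1) :
    ∑ S : Finset (Fin n), fhat f S ^ 2 = 1 := by
  rw [← parseval]
  have : cubeE n (fun x => f x ^ 2) = cubeE n (fun _ => (1:ℝ)) := by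
    apply cubeE_congr
    intro x
    rcases hf x with h | h <;> rw [h] <;> norm_num
  rw [this, cubeE_const]

lemma fhat_empty (f : (Fin n → Bool) → ℝ) : fhat f ∅ = cubeE n f := by
  unfold fhat
  apply cubeE_congr
  intro x
  rw [chi_empty, mul_one]

set_option maxHeartbeats 1000000 in
theorem stmt19' :
    ∃ C : ℝ, 0 < C ∧
      ∀ (n : ℕ), 1 ≤ n → ∀ f : (Fin n → Bool) → ℝ, (∀ x, f x = 1 ∨ f x = -1) →
        ∀ ε ∈ Set.Ioo (0 : ℝ) 1,
          ∃ g : (Fin n → Bool) → ℝ, (∀ x, g x = 1 ∨ g x = -1) ∧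
            DependsOnAtMost n g (Real.exp (C * (∑ i : Fin n, infl n i f) / ε)) ∧
            cubeE n (fun x => |f x - g x|) ≤ ε := by
  refine ⟨100, by norm_num, ?_⟩
  intro n _ f hf ε hε
  obtain ⟨hε0, hε1⟩ := hε
  set m : Fin n → ℝ := fun i => cubeE n (fun x => |Dfun n i f x|) with hmdef
  have hmnn : ∀ i, 0 ≤ m i := fun i => cubeE_nonneg (fun x => abs_nonneg _)
  set I' : ℝ := ∑ i : Fin n, m i with hI'
  have hI'nn : 0 ≤ I' := Finset.sum_nonneg (fun i _ => hmnn i)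
  have hIinfl : (∑ i : Fin n, infl n i f) = 2 * I' := by
    rw [hI', Finset.mul_sum]
    exact Finset.sum_congr rfl (fun i _ => infl_eq_two_mul f i)
  have hItot : I' = ∑ S : Finset (Fin n), (S.card : ℝ) * fhat f S ^ 2 :=
    total_influence f hf
  have hexp_nonneg : (0:ℝ) ≤ Real.exp (100 * (∑ i : Fin n, infl n i f) / ε) :=
    (Real.exp_pos _).le
  by_cases hsmall : I' ≤ ε
  -- Branch 1 : f is close to a constant
  · set s : ℝ := if 0 ≤ cubeE n f then 1 else -1 with hs
    refine ⟨fun _ => s, ?_, ⟨∅, by simpa using hexp_nonneg, fun x y _ => rfl⟩, ?_⟩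
    · intro x
      rw [hs]
      by_cases h : 0 ≤ cubeE n f
      · left; rw [if_pos h]
      · right; rw [if_neg h]
    · have hpt : ∀ x, |f x - s| = 1 - s * f x := by
        intro x
        rcases hf x with h | h <;> rw [h, hs] <;> by_cases hc : 0 ≤ cubeE n f <;>
          simp [hc] <;> norm_num
      have he : cubeE n (fun x => |f x - s|) = 1 - s * cubeE n f := by
        rw [cubeE_congr hpt, cubeE_sub, cubeE_const, cubeE_mul_left]
      have habs : s * cubeE n f = |cubeE n f| := by
        rw [hs]
        by_cases h : 0 ≤ cubeE n f
        · rw [if_pos h, abs_of_nonneg h, one_mul]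
        · rw [if_neg h, abs_of_neg (lt_of_not_ge h)]; ring
      have hEf1 : |cubeE n f| ≤ 1 := by
        calc |cubeE n f| ≤ cubeE n (fun x => |f x|) := abs_cubeE_le f
          _ = 1 := by
            rw [cubeE_congr (g := fun _ => (1:ℝ)) (fun x => by rcases hf x with h | h <;>
              rw [h] <;> norm_num), cubeE_const]
      have step1 : 1 - |cubeE n f| ≤ 1 - (cubeE n f) ^ 2 := by
        have : (cubeE n f) ^ 2 ≤ |cubeE n f| := by
          calc (cubeE n f) ^ 2 = |cubeE n f| * |cubeE n f| := by rw [← abs_mul, ← sq, abs_sq]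
            _ ≤ |cubeE n f| * 1 := mul_le_mul_of_nonneg_left hEf1 (abs_nonneg _)
            _ = |cubeE n f| := mul_one _
        linarith
      have step2 : 1 - (cubeE n f) ^ 2 ≤ I' := by
        have h1 : (1:ℝ) = ∑ S : Finset (Fin n), fhat f S ^ 2 := (sum_fhat_sq f hf).symm
        have h2 : (cubeE n f) ^ 2 = fhat f ∅ ^ 2 := by rw [fhat_empty]
        rw [h1, h2, hItot]
        have h3 : ∑ S : Finset (Fin n), fhat f S ^ 2
            = fhat f ∅ ^ 2 + ∑ S ∈ Finset.univ.erase ∅, fhat f S ^ 2 := by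
          rw [add_comm, Finset.sum_erase_add Finset.univ _ (Finset.mem_univ ∅)]
        rw [h3]
        have h4 : ∑ S ∈ Finset.univ.erase ∅, fhat f S ^ 2
            ≤ ∑ S : Finset (Fin n), (S.card : ℝ) * fhat f S ^ 2 := by
          calc ∑ S ∈ Finset.univ.erase ∅, fhat f S ^ 2
              ≤ ∑ S ∈ Finset.univ.erase ∅, (S.card : ℝ) * fhat f S ^ 2 := by
                apply Finset.sum_le_sum
                intro S hS
                have hSne : S ≠ ∅ := Finset.ne_of_mem_erase hS
                have hc1 : 1 ≤ S.card := Finset.card_pos.mpr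
                  (Finset.nonempty_iff_ne_empty.mpr hSne)
                have hcast : (1:ℝ) ≤ (S.card : ℝ) := by exact_mod_cast hc1
                have := mul_le_mul_of_nonneg_right hcast (sq_nonneg (fhat f S))
                linarith
            _ ≤ ∑ S : Finset (Fin n), (S.card : ℝ) * fhat f S ^ 2 := by
                apply Finset.sum_le_sum_of_subset_of_nonneg (Finset.erase_subset _ _)
                intro S _ _
                positivity
        linarith
      rw [he, habs]
      linarith
  -- Branch 2 : the junta argument
  · push_neg at hsmall
    have hI'pos : 0 < I' := lt_trans hε0 hsmall
    set t : ℝ := I' / ε with htdef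
    have ht1 : 1 < t := (one_lt_div hε0).mpr hsmall
    have htpos : 0 < t := lt_trans one_pos ht1
    set k : ℕ := ⌈4 * I' / ε⌉₊ with hkdef
    have hkge : 4 * I' / ε ≤ (k : ℝ) := Nat.le_ceil _
    have hkle : (k : ℝ) ≤ 4 * t + 1 := by
      rw [hkdef]
      have h0 : (0:ℝ) ≤ 4 * I' / ε := by positivity
      have := (Nat.ceil_lt_add_one h0).le
      calc ((⌈4 * I' / ε⌉₊ : ℕ) : ℝ) ≤ 4 * I' / ε + 1 := this
        _ = 4 * t + 1 := by rw [htdef]; ring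
    set δ : ℝ := ε / (4 * 3 ^ k * I') with hδdef
    have h3kpos : (0:ℝ) < 3 ^ k := by positivity
    have hδpos : 0 < δ := by rw [hδdef]; positivity
    set J : Finset (Fin n) := Finset.univ.filter (fun i => δ ^ 2 < m i) with hJdef
    -- the junta size bound
    have hcard : (J.card : ℝ) ≤ 16 * 9 ^ k * I' ^ 3 / ε ^ 2 := by
      have h1 : (J.card : ℝ) * δ ^ 2 ≤ I' := by
        calc (J.card : ℝ) * δ ^ 2 = ∑ _i ∈ J, δ ^ 2 := by
              rw [Finset.sum_const, nsmul_eq_mul]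
          _ ≤ ∑ i ∈ J, m i := Finset.sum_le_sum (fun i hi =>
              (le_of_lt (Finset.mem_filter.mp hi).2))
          _ ≤ ∑ i : Fin n, m i := Finset.sum_le_sum_of_subset_of_nonneg
              (Finset.subset_univ J) (fun i _ _ => hmnn i)
          _ = I' := rfl
      have hδsq : δ ^ 2 = ε ^ 2 / (16 * 9 ^ k * I' ^ 2) := by
        rw [hδdef, div_pow]
        congr 1
        rw [mul_pow, mul_pow, ← pow_mul, pow_mul']
        norm_num
      rw [hδsq] at h1
      have hD : (0:ℝ) < 16 * 9 ^ k * I' ^ 2 := by positivity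
      rw [le_div_iff₀ (by positivity : (0:ℝ) < ε ^ 2)]
      have h2 := mul_le_mul_of_nonneg_right h1 hD.le
      calc (J.card : ℝ) * ε ^ 2
          = (J.card : ℝ) * (ε ^ 2 / (16 * 9 ^ k * I' ^ 2)) * (16 * 9 ^ k * I' ^ 2) := by
            field_simp
        _ ≤ I' * (16 * 9 ^ k * I' ^ 2) := h2
        _ = 16 * 9 ^ k * I' ^ 3 := by ring
    -- the junta size is at most the required exponential
    have hcard_exp : (J.card : ℝ) ≤ Real.exp (100 * (∑ i : Fin n, infl n i f) / ε) := by
      have hexparg : 100 * (∑ i : Fin n, infl n i f) / ε = 200 * t := by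
        rw [hIinfl, htdef]
        ring
      rw [hexparg]
      have he1 : (2.7:ℝ) ≤ Real.exp 1 := by
        have := Real.exp_one_gt_d9
        linarith
      have hexp3 : (9:ℝ) ≤ Real.exp 3 := by
        have h3 : Real.exp 3 = Real.exp 1 ^ 3 := by
          rw [← Real.exp_nat_mul]
          norm_num
        have : (2.7:ℝ) ^ 3 ≤ Real.exp 1 ^ 3 := by
          apply pow_le_pow_left₀ (by norm_num) he1
        rw [h3]
        nlinarith [this]
      have hexppos : (0:ℝ) < Real.exp 3 := Real.exp_pos 3
      have h9k : (9:ℝ) ^ k ≤ Real.exp (15 * t) := by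
        calc (9:ℝ) ^ k ≤ (Real.exp 3) ^ k := pow_le_pow_left₀ (by norm_num) hexp3 k
          _ = Real.exp (k * 3) := by rw [← Real.exp_nat_mul]
          _ ≤ Real.exp (15 * t) := by
              apply Real.exp_le_exp.mpr
              nlinarith [hkle, ht1]
      have h16 : (16:ℝ) ≤ Real.exp (6 * t) := by
        have h6 : Real.exp 6 = Real.exp 3 * Real.exp 3 := by
          rw [← Real.exp_add]; norm_num
        have h81 : (16:ℝ) ≤ Real.exp 6 := by
          rw [h6]; nlinarith [hexp3, hexppos]
        calc (16:ℝ) ≤ Real.exp 6 := h81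
          _ ≤ Real.exp (6 * t) := Real.exp_le_exp.mpr (by nlinarith [ht1])
      have ht3 : I' ^ 3 / ε ^ 2 ≤ Real.exp (3 * t) := by
        have heq : I' ^ 3 / ε ^ 2 = t ^ 3 * ε := by
          rw [htdef, div_pow, div_mul_eq_mul_div,
            div_eq_div_iff (by positivity) (by positivity)]
          ring
        
        have htexp : t ≤ Real.exp t := by
          have := Real.add_one_le_exp t
          linarith
        have h1 : t ^ 3 ≤ Real.exp t ^ 3 := pow_le_pow_left₀ htpos.le htexp 3
        have h2 : Real.exp t ^ 3 = Real.exp (3 * t) := by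
          rw [← Real.exp_nat_mul]
          norm_num [mul_comm]
        rw [heq]
        calc t ^ 3 * ε ≤ t ^ 3 * 1 := by
              apply mul_le_mul_of_nonneg_left hε1.le (by positivity)
          _ = t ^ 3 := mul_one _
          _ ≤ Real.exp (3 * t) := h2 ▸ h1
      calc (J.card : ℝ) ≤ 16 * 9 ^ k * I' ^ 3 / ε ^ 2 := hcard
        _ = 16 * 9 ^ k * (I' ^ 3 / ε ^ 2) := by ring
        _ ≤ Real.exp (6 * t) * Real.exp (15 * t) * Real.exp (3 * t) := by
            apply mul_le_mul
            · apply mul_le_mul h16 h9k (by positivity) (Real.exp_pos _).le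
            · exact ht3
            · positivity
            · positivity
        _ = Real.exp (6 * t + 15 * t + 3 * t) := by rw [← Real.exp_add, ← Real.exp_add]
        _ ≤ Real.exp (200 * t) := Real.exp_le_exp.mpr (by nlinarith [ht1])
    -- the approximating junta
    set a : Finset (Fin n) → ℝ :=
      fun S => if S ⊆ J ∧ S.card ≤ k then fhat f S else 0 with hadef
    set g' : (Fin n → Bool) → ℝ := fun x => ∑ S : Finset (Fin n), a S * chi S x with hg'def
    set g : (Fin n → Bool) → ℝ := fun x => if 0 ≤ g' x then 1 else -1 with hgdef
    have hgpm : ∀ x, g x = 1 ∨ g x = -1 := by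
      intro x
      rw [hgdef]
      by_cases h : 0 ≤ g' x
      · left; simp [h]
      · right; simp [h]
    refine ⟨g, hgpm, ⟨J, hcard_exp, ?_⟩, ?_⟩
    -- dependence on J only
    · intro x y hxy
      have hg'eq : g' x = g' y := by
        rw [hg'def]
        apply Finset.sum_congr rfl
        intro S _
        rw [hadef]
        simp only
        by_cases hS : S ⊆ J ∧ S.card ≤ k
        · have : chi S x = chi S y := by
            unfold chi
            exact Finset.prod_congr rfl (fun j hj => by rw [hxy j (hS.1 hj)])
          rw [this]
        · rw [if_neg hS]
          ring
      rw [hgdef]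
      simp only
      rw [hg'eq]
    -- the L¹ bound
    · have hpt : ∀ x, |f x - g x| ≤ 2 * (f x - g' x) ^ 2 := by
        intro x
        rw [hgdef]
        simp only
        rcases hf x with h | h <;> rw [h] <;> by_cases hc : 0 ≤ g' x
        · rw [if_pos hc, sub_self, abs_zero]
          positivity
        · rw [if_neg hc]
          have hgx : g' x < 0 := lt_of_not_ge hc
          rw [show (1:ℝ) - -1 = 2 by norm_num, abs_of_pos (by norm_num : (0:ℝ) < 2)]
          nlinarith [hgx]
        · rw [if_pos hc]
          rw [show (-1:ℝ) - 1 = -2 by norm_num, abs_of_neg (by norm_num : (-2:ℝ) < 0)]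
          nlinarith [hc]
        · rw [if_neg hc, sub_self, abs_zero]
          positivity
      have hL1 : cubeE n (fun x => |f x - g x|) ≤ 2 * cubeE n (fun x => (f x - g' x) ^ 2) := by
        calc cubeE n (fun x => |f x - g x|) ≤ cubeE n (fun x => 2 * (f x - g' x) ^ 2) :=
              cubeE_mono hpt
          _ = 2 * cubeE n (fun x => (f x - g' x) ^ 2) := cubeE_mul_left 2 _
      -- Fourier expansion of the error
      have hdiff : ∀ x, f x - g' x
          = ∑ S : Finset (Fin n), (if S ⊆ J ∧ S.card ≤ k then 0 else fhat f S) * chi S x := by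
        intro x
        rw [hg'def]
        simp only
        rw [inversion f x, ← Finset.sum_sub_distrib]
        apply Finset.sum_congr rfl
        intro S _
        rw [hadef]
        simp only
        by_cases hS : S ⊆ J ∧ S.card ≤ k
        · rw [if_pos hS, if_pos hS]; ring
        · rw [if_neg hS, if_neg hS]; ring
      have hE2 : cubeE n (fun x => (f x - g' x) ^ 2)
          = ∑ S : Finset (Fin n), (if S ⊆ J ∧ S.card ≤ k then 0 else fhat f S) ^ 2 := by
        rw [cubeE_congr (g := fun x => (∑ S : Finset (Fin n),
          (if S ⊆ J ∧ S.card ≤ k then 0 else fhat f S) * chi S x) ^ 2)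
          (fun x => by rw [hdiff x])]
        exact polyE2 _
      -- split the tail
      have hsplit : ∑ S : Finset (Fin n), (if S ⊆ J ∧ S.card ≤ k then 0 else fhat f S) ^ 2
          ≤ (∑ S : Finset (Fin n), (if k < S.card then fhat f S ^ 2 else 0))
            + ∑ S : Finset (Fin n), (if ¬ S ⊆ J ∧ S.card ≤ k then fhat f S ^ 2 else 0) := by
        rw [← Finset.sum_add_distrib]
        apply Finset.sum_le_sum
        intro S _
        by_cases h1 : S ⊆ J ∧ S.card ≤ k
        · rw [if_pos h1]
          have h2 : ¬ k < S.card := not_lt.mpr h1.2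
          rw [if_neg h2, if_neg (by push_neg; intro h; exact absurd h1.1 h)]
          norm_num
        · rw [if_neg h1]
          by_cases h2 : k < S.card
          · rw [if_pos h2]
            have h3 : ¬ (¬ S ⊆ J ∧ S.card ≤ k) := by
              push_neg
              intro _
              omega
            rw [if_neg h3]
            norm_num
          · have h4 : S.card ≤ k := not_lt.mp h2
            have h5 : ¬ S ⊆ J := fun hsub => h1 ⟨hsub, h4⟩
            rw [if_neg h2, if_pos ⟨h5, h4⟩]
            norm_num
      -- high-degree part
      have hhigh : (∑ S : Finset (Fin n), (if k < S.card then fhat f S ^ 2 else 0)) ≤ ε / 4 := by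
        have hk1pos : (0:ℝ) < (k:ℝ) + 1 := by positivity
        have hmul : ((k:ℝ) + 1) * (∑ S : Finset (Fin n), (if k < S.card then fhat f S ^ 2 else 0))
            ≤ I' := by
          rw [hItot, Finset.mul_sum]
          apply Finset.sum_le_sum
          intro S _
          by_cases h : k < S.card
          · rw [if_pos h]
            have : (k:ℝ) + 1 ≤ (S.card : ℝ) := by exact_mod_cast h
            nlinarith [sq_nonneg (fhat f S)]
          · rw [if_neg h, mul_zero]
            positivity
        have hsum_nonneg : (0:ℝ) ≤ ∑ S : Finset (Fin n), (if k < S.card then fhat f S ^ 2 else 0) :=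
          Finset.sum_nonneg (fun S _ => by by_cases h : k < S.card
                                           · rw [if_pos h]; exact sq_nonneg _
                                           · rw [if_neg h])
        -- (k+1) ≥ 4 I'/ε so sum ≤ I'/(k+1) ≤ ε/4
        have h41 : 4 * I' / ε ≤ (k:ℝ) + 1 := by linarith [hkge]
        rw [div_le_iff₀ hε0] at h41
        nlinarith [hmul, hsum_nonneg, hε0, hk1pos]
      -- low-degree part outside J
      have hlow : (∑ S : Finset (Fin n), (if ¬ S ⊆ J ∧ S.card ≤ k then fhat f S ^ 2 else 0))
          ≤ ε / 4 := by
        have hstep : (∑ S : Finset (Fin n), (if ¬ S ⊆ J ∧ S.card ≤ k then fhat f S ^ 2 else 0))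
            ≤ ∑ i ∈ Finset.univ \ J, ∑ S : Finset (Fin n),
                (if i ∈ S ∧ S.card ≤ k then fhat f S ^ 2 else 0) := by
          rw [Finset.sum_comm]
          apply Finset.sum_le_sum
          intro S _
          by_cases h1 : ¬ S ⊆ J ∧ S.card ≤ k
          · rw [if_pos h1]
            obtain ⟨i0, hi0S, hi0J⟩ := Finset.not_subset.mp h1.1
            have hi0 : i0 ∈ Finset.univ \ J := Finset.mem_sdiff.mpr ⟨Finset.mem_univ _, hi0J⟩
            calc fhat f S ^ 2
                = (if i0 ∈ S ∧ S.card ≤ k then fhat f S ^ 2 else 0) := by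
                  rw [if_pos ⟨hi0S, h1.2⟩]
              _ ≤ ∑ i ∈ Finset.univ \ J,
                  (if i ∈ S ∧ S.card ≤ k then fhat f S ^ 2 else 0) := by
                  apply Finset.single_le_sum (f := fun i =>
                    (if i ∈ S ∧ S.card ≤ k then fhat f S ^ 2 else 0)) ?_ hi0
                  intro i _
                  by_cases h : i ∈ S ∧ S.card ≤ k
                  · rw [if_pos h]; exact sq_nonneg _
                  · rw [if_neg h]
          · rw [if_neg h1]
            apply Finset.sum_nonneg
            intro i _
            by_cases h : i ∈ S ∧ S.card ≤ k
            · rw [if_pos h]; exact sq_nonneg _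
            · rw [if_neg h]
        have hWi : ∀ i, i ∈ Finset.univ \ J →
            (∑ S : Finset (Fin n), (if i ∈ S ∧ S.card ≤ k then fhat f S ^ 2 else 0))
              ≤ 3 ^ k * δ * m i := by
          intro i hi
          have hmi : m i ≤ δ ^ 2 := by
            have := (Finset.mem_sdiff.mp hi).2
            rw [hJdef] at this
            simp only [Finset.mem_filter, Finset.mem_univ, true_and] at this
            linarith [not_lt.mp this]
          have hsqrt : Real.sqrt (m i) ≤ δ := by
            calc Real.sqrt (m i) ≤ Real.sqrt (δ ^ 2) := Real.sqrt_le_sqrt hmi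
              _ = δ := Real.sqrt_sq hδpos.le
          have hW := W_bound f hf i k
          have hfil : (∑ S : Finset (Fin n), (if i ∈ S ∧ S.card ≤ k then fhat f S ^ 2 else 0))
              = ∑ S ∈ Finset.univ.filter (fun S : Finset (Fin n) => i ∈ S ∧ S.card ≤ k),
                  fhat f S ^ 2 := by
            rw [Finset.sum_filter]
          rw [hfil]
          calc (∑ S ∈ Finset.univ.filter (fun S : Finset (Fin n) => i ∈ S ∧ S.card ≤ k),
              fhat f S ^ 2)
              ≤ 3 ^ k * (m i * Real.sqrt (m i)) := hW
            _ ≤ 3 ^ k * (m i * δ) := by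
                apply mul_le_mul_of_nonneg_left ?_ h3kpos.le
                exact mul_le_mul_of_nonneg_left hsqrt (hmnn i)
            _ = 3 ^ k * δ * m i := by ring
        calc (∑ S : Finset (Fin n), (if ¬ S ⊆ J ∧ S.card ≤ k then fhat f S ^ 2 else 0))
            ≤ ∑ i ∈ Finset.univ \ J, ∑ S : Finset (Fin n),
                (if i ∈ S ∧ S.card ≤ k then fhat f S ^ 2 else 0) := hstep
          _ ≤ ∑ i ∈ Finset.univ \ J, 3 ^ k * δ * m i := Finset.sum_le_sum hWi
          _ ≤ ∑ i : Fin n, 3 ^ k * δ * m i := by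
              apply Finset.sum_le_sum_of_subset_of_nonneg (Finset.sdiff_subset)
              intro i _ _
              exact mul_nonneg (mul_nonneg h3kpos.le hδpos.le) (hmnn i)
          _ = 3 ^ k * δ * I' := by rw [hI', ← Finset.mul_sum]
          _ = ε / 4 := by
              rw [hδdef]
              field_simp
      calc cubeE n (fun x => |f x - g x|) ≤ 2 * cubeE n (fun x => (f x - g' x) ^ 2) := hL1
        _ ≤ 2 * (ε / 4 + ε / 4) := by
            apply mul_le_mul_of_nonneg_left ?_ (by norm_num)
            rw [hE2]
            calc (∑ S : Finset (Fin n), (if S ⊆ J ∧ S.card ≤ k then 0 else fhat f S) ^ 2)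
                = ∑ S : Finset (Fin n), (if S ⊆ J ∧ S.card ≤ k then 0 else fhat f S ^ 2) := by
                  apply Finset.sum_congr rfl
                  intro S _
                  by_cases h : S ⊆ J ∧ S.card ≤ k
                  · rw [if_pos h, if_pos h]; norm_num
                  · rw [if_neg h, if_neg h]
              _ ≤ (∑ S : Finset (Fin n), (if k < S.card then fhat f S ^ 2 else 0))
                  + ∑ S : Finset (Fin n), (if ¬ S ⊆ J ∧ S.card ≤ k then fhat f S ^ 2 else 0) := by
                  have := hsplit
                  calc (∑ S : Finset (Fin n), (if S ⊆ J ∧ S.card ≤ k then 0 else fhat f S ^ 2))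
                      = ∑ S : Finset (Fin n), (if S ⊆ J ∧ S.card ≤ k then 0 else fhat f S) ^ 2 := by
                        apply Finset.sum_congr rfl
                        intro S _
                        by_cases h : S ⊆ J ∧ S.card ≤ k
                        · rw [if_pos h, if_pos h]; norm_num
                        · rw [if_neg h, if_neg h]
                    _ ≤ _ := hsplit
              _ ≤ ε / 4 + ε / 4 := add_le_add hhigh hlow
        _ = ε := by ring

end Friedgut

/-- Friedgut's Junta Theorem: there is a universal `C > 0` such that for
every `n ≥ 1`, every `f : {-1,1}ⁿ → {-1,1}` and every `ε ∈ (0,1)`, with total influence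
`𝕀 = ∑ᵢ Iᵢ(f)`, there exists `g : {-1,1}ⁿ → {-1,1}` depending on at most `exp(C·𝕀/ε)`
coordinates with `‖f - g‖_{L¹(ν)} ≤ ε`. -/
theorem stmt19 :
    ∃ C : ℝ, 0 < C ∧
      ∀ (n : ℕ), 1 ≤ n → ∀ f : (Fin n → Bool) → ℝ, (∀ x, f x = 1 ∨ f x = -1) →
        ∀ ε ∈ Set.Ioo (0 : ℝ) 1,
          ∃ g : (Fin n → Bool) → ℝ, (∀ x, g x = 1 ∨ g x = -1) ∧
            DependsOnAtMost n g (Real.exp (C * (∑ i : Fin n, infl n i f) / ε)) ∧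
            cubeE n (fun x => |f x - g x|) ≤ ε := by
  exact Friedgut.stmt19'
end
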